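/- arXiv:2302.13182 — 8 statements merged into one kernel-verified Lean document; each statement's English description precedes it below -/
import Mathlib

section
/- Let K be a commutative ring and let ℓ ≥ 1. Let f and g be formal power series in K[[X]] that are ℓ-tangent to the identity, i.e., with constant coefficient 0, linear coefficient 1, and coefficient of X^n equal to 0 for all 2 ≤ n ≤ ℓ. Then the formal composition f∘g (obtained by substituting g into f) is again ℓ-tangent to the identity and its coefficients satisfy: (i) for every n with ℓ+1 ≤ n ≤ 2ℓ, the coefficient of X^n in f∘g equals (coefficient of X^n in f) + (coefficient of X^n in g); and (ii) the coefficient of X^{2ℓ+1} in f∘g equals (coefficient of X^{2ℓ+1} in f) + (coefficient of X^{2ℓ+1} in g) + (ℓ+1)·(coefficient of X^{ℓ+1} in f)·(coefficient of X^{ℓ+1} in g). -/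
/-- Formal composition (substitution) `f ∘ g` of power series, meaningful when `g`
has zero constant coefficient: the coefficient of `X^n` in `f ∘ g` is
`∑_{k ≤ n} a_k · (coefficient of X^n in g^k)`. -/
noncomputable def psComp {K : Type*} [CommRing K] (f g : PowerSeries K) : PowerSeries K :=
  PowerSeries.mk fun n => ∑ k ∈ Finset.range (n + 1),
    PowerSeries.coeff (R := K) k f * PowerSeries.coeff (R := K) n (g ^ k)

/-- A formal power series is `ℓ`-tangent to the identity if its constant coefficient is `0`,
its linear coefficient is `1`, and its coefficient of `X^n` vanishes for `2 ≤ n ≤ ℓ`. -/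
def IsTangentToId {K : Type*} [CommRing K] (ℓ : ℕ) (f : PowerSeries K) : Prop :=
  PowerSeries.coeff (R := K) 0 f = 0 ∧ PowerSeries.coeff (R := K) 1 f = 1 ∧
    ∀ n, 2 ≤ n → n ≤ ℓ → PowerSeries.coeff (R := K) n f = 0

/-!
Write `g = X + h` with `X ^ (ℓ + 1) ∣ h`. Since `h ^ 2 ∣ (X + h) ^ k - X ^ k - k X ^ (k - 1) h`,
modulo `X ^ (2ℓ + 2)` we have `g ^ k ≡ X ^ k + k X ^ (k - 1) h`, hence `f ∘ g ≡ f + f' h`.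
As `f' ≡ 1 + (ℓ + 1) f_{ℓ+1} X ^ ℓ` modulo `X ^ (ℓ + 1)`, this gives
`f ∘ g ≡ f + h + (ℓ + 1) f_{ℓ+1} X ^ ℓ h` modulo `X ^ (2ℓ + 2)`, from which every claimed
coefficient can be read off.
-/

open PowerSeries Finset

section
variable {K : Type*} [CommRing K]

theorem coeff_X_pow_mul_eq_zero_of_X_pow_dvd {h : K⟦X⟧} {a b n : ℕ} (hh : X ^ b ∣ h)
    (hn : n < a + b) : coeff n (X ^ a * h) = 0 :=
  X_pow_dvd_iff.mp (pow_add (X : K⟦X⟧) a b ▸ mul_dvd_mul_left _ hh) n hn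

theorem coeff_X_add_pow_of_X_pow_dvd {h : K⟦X⟧} {r n : ℕ} (hh : X ^ r ∣ h) (hn : n < 2 * r)
    (k : ℕ) : coeff n ((X + h) ^ k) = coeff n (X ^ k) + (k : K) * coeff n (X ^ (k - 1) * h) := by
  have hsq : X ^ (2 * r) ∣ (X + h) ^ k - X ^ (k - 1) * h * (k : K⟦X⟧) - X ^ k := by
    rw [mul_comm 2, pow_mul]
    exact (pow_dvd_pow_of_dvd hh 2).trans (sq_dvd_add_pow_sub_sub h X k)
  have hcoeff := X_pow_dvd_iff.mp hsq n hn
  rw [← map_natCast (C (R := K)), map_sub, map_sub, coeff_mul_C] at hcoeff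
  linear_combination hcoeff

theorem coeff_psComp_eq_sum_range {f g : K⟦X⟧} (hg : constantCoeff g = 0) {n N : ℕ}
    (hN : n < N) : coeff n (psComp f g) = ∑ k ∈ range N, coeff k f * coeff n (g ^ k) := by
  rw [psComp, coeff_mk]
  refine sum_subset (range_subset_range.mpr hN) fun k _ hk => ?_
  have hXk : X ^ k ∣ g ^ k := pow_dvd_pow_of_dvd (X_dvd_iff.mpr hg) k
  rw [X_pow_dvd_iff.mp hXk n (by simpa using hk), mul_zero]

theorem IsTangentToId.X_pow_dvd_sub_X {ℓ : ℕ} {g : K⟦X⟧} (hg : IsTangentToId ℓ g) :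
    X ^ (ℓ + 1) ∣ g - X := by
  obtain ⟨hg0, hg1, hgn⟩ := hg
  refine X_pow_dvd_iff.mpr fun m hm => ?_
  rcases lt_trichotomy m 1 with hm0 | rfl | hm1
  · obtain rfl : m = 0 := by omega
    simpa using hg0
  · simp [hg1]
  · simp [coeff_X, hgn m hm1 (by omega), hm1.ne']

theorem coeff_psComp_of_isTangentToId {ℓ n : ℕ} (hℓ : 1 ≤ ℓ) {f g : K⟦X⟧}
    (hf : IsTangentToId ℓ f) (hg : IsTangentToId ℓ g) (hn : n ≤ 2 * ℓ + 1) :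
    coeff n (psComp f g) = coeff n f + coeff n (g - X)
      + (ℓ + 1) * coeff (ℓ + 1) f * coeff n (X ^ ℓ * (g - X)) := by
  set h := g - X
  have hh : X ^ (ℓ + 1) ∣ h := hg.X_pow_dvd_sub_X
  have hg0 : constantCoeff g = 0 := by simpa using hg.1
  rw [coeff_psComp_eq_sum_range hg0 (N := 2 * ℓ + 2) (by omega), show g = X + h by ring]
  simp_rw [coeff_X_add_pow_of_X_pow_dvd hh (show n < 2 * (ℓ + 1) by omega), mul_add, sum_add_distrib]
  have hlin : ∑ k ∈ range (2 * ℓ + 2), coeff k f * coeff n (X ^ k) = coeff n f := by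
    simp [coeff_X_pow, show n < 2 * ℓ + 2 by omega]
  have hvanish : ∀ k ∈ range (2 * ℓ + 2), k ≠ 1 ∧ k ≠ ℓ + 1 →
      coeff k f * ((k : K) * coeff n (X ^ (k - 1) * h)) = 0 := by
    rintro k - ⟨hk1, hkℓ⟩
    rcases Nat.lt_or_ge ℓ k with hℓk | hkℓ'
    · rw [coeff_X_pow_mul_eq_zero_of_X_pow_dvd hh (by omega), mul_zero, mul_zero]
    · rcases Nat.eq_zero_or_pos k with rfl | hk0
      · simp
      · rw [hf.2.2 k (by omega) hkℓ', zero_mul]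
  rw [hlin, sum_eq_add_of_mem 1 (ℓ + 1) (by simp) (by simp; omega) (by omega) hvanish]
  simp only [Nat.cast_one, tsub_self, pow_zero, one_mul, Nat.cast_add, add_tsub_cancel_right,
    hf.2.1]
  ring

end

theorem stmt_0 {K : Type*} [CommRing K] (ℓ : ℕ) (hℓ : 1 ≤ ℓ)
    (f g : PowerSeries K) (hf : IsTangentToId ℓ f) (hg : IsTangentToId ℓ g) :
    IsTangentToId ℓ (psComp f g) ∧
    (∀ n, ℓ + 1 ≤ n → n ≤ 2 * ℓ →
      PowerSeries.coeff (R := K) n (psComp f g)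
        = PowerSeries.coeff (R := K) n f + PowerSeries.coeff (R := K) n g) ∧
    PowerSeries.coeff (R := K) (2 * ℓ + 1) (psComp f g)
      = PowerSeries.coeff (R := K) (2 * ℓ + 1) f + PowerSeries.coeff (R := K) (2 * ℓ + 1) g
        + (ℓ + 1 : K) * PowerSeries.coeff (R := K) (ℓ + 1) f * PowerSeries.coeff (R := K) (ℓ + 1) g := by
  have hcomp n (hn : n ≤ 2 * ℓ + 1) := coeff_psComp_of_isTangentToId hℓ hf hg hn
  have hlow n (hn : n ≤ 2 * ℓ) :
      coeff n (psComp f g) = coeff n f + coeff n g - coeff n (X : K⟦X⟧) := by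
    rw [hcomp n (by omega), coeff_X_pow_mul_eq_zero_of_X_pow_dvd hg.X_pow_dvd_sub_X (by omega),
      map_sub]
    ring
  obtain ⟨hf0, hf1, hfn⟩ := hf
  obtain ⟨hg0, hg1, hgn⟩ := hg
  refine ⟨⟨?_, ?_, fun n hn2 hnℓ => ?_⟩, fun n hn hn' => ?_, ?_⟩
  · simp [hlow 0 (by omega), hf0, hg0]
  · simp [hlow 1 (by omega), hf1, hg1]
  · simp [hlow n (by omega), hfn n hn2 hnℓ, hgn n hn2 hnℓ, coeff_X, show n ≠ 1 by omega]
  · simp [hlow n hn', coeff_X, show n ≠ 1 by omega]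
  · simp [hcomp (2 * ℓ + 1) le_rfl, coeff_X_pow_mul', coeff_X, show ℓ ≤ 2 * ℓ + 1 by omega,
      show 2 * ℓ + 1 - ℓ = ℓ + 1 by omega, show ℓ ≠ 0 by omega]
end

section
/- Let K be an algebraically closed field of characteristic zero and let ℓ ≥ 1. Let f ∈ K[[X]] be a formal power series that is ℓ-tangent to the identity and exactly ℓ-tangent, i.e., its coefficient a_{ℓ+1} of X^{ℓ+1} is nonzero. Then there exist μ ∈ K and a formal power series h ∈ K[[X]] with constant coefficient 0 and nonzero linear coefficient such that h∘f = N∘h, where N := X + X^{ℓ+1} + μ·X^{2ℓ+1}. (In other words, f is formally conjugate to the normal form X + X^{ℓ+1} + μX^{2ℓ+1}.) -/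
open PowerSeries Finset

namespace PowerSeries

variable {R : Type*} [CommRing R]

theorem exists_eq_X_mul_of_constantCoeff_eq_zero {h : R⟦X⟧} (hh : constantCoeff h = 0) :
    ∃ u, h = X * u ∧ constantCoeff u = coeff 1 h := by
  obtain ⟨u, rfl⟩ := X_dvd_iff.mpr hh
  exact ⟨u, rfl, by simp⟩

theorem coeff_pow_of_lt {h : R⟦X⟧} (hh : constantCoeff h = 0) {n k : ℕ} (hn : n < k) :
    coeff n (h ^ k) = 0 :=
  coeff_of_lt_order _ ((Nat.cast_lt.mpr hn).trans_le (le_order_pow_of_constantCoeff_eq_zero k hh))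

theorem coeff_pow_self {h : R⟦X⟧} (hh : constantCoeff h = 0) (k : ℕ) :
    coeff k (h ^ k) = coeff 1 h ^ k := by
  obtain ⟨u, rfl, hu⟩ := exists_eq_X_mul_of_constantCoeff_eq_zero hh
  simpa [mul_pow, ← hu] using coeff_X_pow_mul (u ^ k) k 0

theorem exists_pow_succ_sub_pow_succ {h h' : R⟦X⟧} (hh : constantCoeff h = 0) {m : ℕ}
    (hm : 2 ≤ m) (hagree : ∀ i < m, coeff i h' = coeff i h) (k : ℕ) :
    ∃ e, h' ^ (k + 1) - h ^ (k + 1) = X ^ (m + k) * e ∧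
      constantCoeff e = (k + 1) * coeff 1 h ^ k * (coeff m h' - coeff m h) := by
  obtain ⟨d, hd⟩ : X ^ m ∣ h' - h := X_pow_dvd_iff.mpr fun i hi => by simp [hagree i hi]
  have hd0 : constantCoeff d = coeff m h' - coeff m h := by
    simpa [← map_sub, hd] using (coeff_X_pow_mul d m 0).symm
  obtain ⟨u, rfl, hu⟩ := exists_eq_X_mul_of_constantCoeff_eq_zero hh
  set u' := u + X ^ (m - 1) * d
  have hh' : h' = X * u' := by
    rw [mul_add, ← mul_assoc, ← pow_succ', Nat.sub_add_cancel (by omega), ← hd]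
    ring
  have hu' : constantCoeff u' = constantCoeff u := by
    obtain ⟨j, hj⟩ : ∃ j, m - 1 = j + 1 := ⟨m - 2, by omega⟩
    simp [u', hj]
  refine ⟨d * ∑ i ∈ range (k + 1), u' ^ i * u ^ (k - i), ?_, ?_⟩
  · have hsub : u' - u = X ^ (m - 1) * d := by ring
    rw [hh', mul_pow, mul_pow, ← mul_sub, ← geom_sum₂_mul, hsub, Nat.add_sub_cancel,
      show m + k = (k + 1) + (m - 1) by omega, pow_add]
    ring
  · simp only [map_mul, map_sum, map_pow, hu', hu, hd0]
    rw [sum_congr rfl fun i hi => by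
      rw [← pow_add, Nat.add_sub_cancel' (Nat.lt_succ_iff.mp (mem_range.mp hi))],
      sum_const, card_range, nsmul_eq_mul]
    push_cast
    ring

theorem coeff_pow_succ_of_lt {h h' : R⟦X⟧} (hh : constantCoeff h = 0) {m : ℕ} (hm : 2 ≤ m)
    (hagree : ∀ i < m, coeff i h' = coeff i h) {k n : ℕ} (hn : n < m + k) :
    coeff n (h' ^ (k + 1)) = coeff n (h ^ (k + 1)) := by
  obtain ⟨e, he, -⟩ := exists_pow_succ_sub_pow_succ hh hm hagree k
  have := congrArg (coeff n) he
  rw [map_sub, coeff_X_pow_mul', if_neg (by omega)] at this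
  exact sub_eq_zero.mp this

theorem coeff_pow_succ_add {h h' : R⟦X⟧} (hh : constantCoeff h = 0) {m : ℕ} (hm : 2 ≤ m)
    (hagree : ∀ i < m, coeff i h' = coeff i h) (k : ℕ) :
    coeff (m + k) (h' ^ (k + 1)) =
      coeff (m + k) (h ^ (k + 1)) + (k + 1) * coeff 1 h ^ k * (coeff m h' - coeff m h) := by
  obtain ⟨e, he, he0⟩ := exists_pow_succ_sub_pow_succ hh hm hagree k
  have := congrArg (coeff (m + k)) he
  rw [map_sub, coeff_X_pow_mul', if_pos le_rfl, Nat.sub_self, coeff_zero_eq_constantCoeff_apply,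
    he0] at this
  linear_combination this

end PowerSeries

section Composition

variable {R : Type*} [CommRing R]

theorem coeff_psComp (n : ℕ) (g f : R⟦X⟧) :
    coeff n (psComp g f) = ∑ k ∈ range (n + 1), coeff k g * coeff n (f ^ k) :=
  coeff_mk _ _

theorem psComp_add (g g' f : R⟦X⟧) : psComp (g + g') f = psComp g f + psComp g' f := by
  ext n
  simp [coeff_psComp, add_mul, sum_add_distrib]

theorem psComp_sub (g g' f : R⟦X⟧) : psComp (g - g') f = psComp g f - psComp g' f := by
  ext n
  simp [coeff_psComp, sub_mul, sum_sub_distrib]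

theorem psComp_C_mul (a : R) (g f : R⟦X⟧) : psComp (C a * g) f = C a * psComp g f := by
  ext n
  simp [coeff_psComp, coeff_C_mul, mul_sum, mul_assoc]

theorem psComp_X_pow {h : R⟦X⟧} (hh : constantCoeff h = 0) (j : ℕ) : psComp (X ^ j) h = h ^ j := by
  ext n
  simp only [coeff_psComp, coeff_X_pow, ite_mul, one_mul, zero_mul, sum_ite_eq', mem_range]
  split_ifs with hj
  · rfl
  · exact (coeff_pow_of_lt hh (by omega)).symm

theorem psComp_X {h : R⟦X⟧} (hh : constantCoeff h = 0) : psComp X h = h := by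
  simpa using psComp_X_pow hh 1

end Composition

section TangentToIdentity

variable {R : Type*} [CommRing R] {ℓ : ℕ} {f : R⟦X⟧}

theorem IsTangentToId.coeff_eq_coeff_X (hf : IsTangentToId ℓ f) :
    ∀ i < ℓ + 1, coeff i f = coeff i X := by
  obtain ⟨h0, h1, hmid⟩ := hf
  intro i hi
  match i with
  | 0 => simpa using h0
  | 1 => simpa using h1
  | i + 2 => simpa [coeff_X] using hmid (i + 2) (by omega) (by omega)

theorem IsTangentToId.coeff_pow_of_lt (hf : IsTangentToId ℓ f) (hℓ : 1 ≤ ℓ) {n k : ℕ}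
    (hn : n < k + ℓ) : coeff n (f ^ k) = if n = k then 1 else 0 := by
  cases k with
  | zero => simp [coeff_one]
  | succ k =>
    rw [coeff_pow_succ_of_lt constantCoeff_X (m := ℓ + 1) (by omega) hf.coeff_eq_coeff_X
      (by omega), coeff_X_pow]

theorem IsTangentToId.coeff_pow_add (hf : IsTangentToId ℓ f) (hℓ : 1 ≤ ℓ) (k : ℕ) :
    coeff (k + ℓ) (f ^ k) = k * coeff (ℓ + 1) f := by
  cases k with
  | zero => simp [coeff_one, show ℓ ≠ 0 by omega]
  | succ k =>
    rw [show k + 1 + ℓ = ℓ + 1 + k by omega,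
      coeff_pow_succ_add constantCoeff_X (by omega) hf.coeff_eq_coeff_X k]
    simp [coeff_X_pow, coeff_X, show ℓ ≠ 0 by omega, show ℓ + 1 + k ≠ k + 1 by omega]

theorem IsTangentToId.coeff_psComp_of_lt (hf : IsTangentToId ℓ f) (hℓ : 1 ≤ ℓ) {g : R⟦X⟧}
    {m n : ℕ} (hg : X ^ m ∣ g) (hn : n < m + ℓ) : coeff n (psComp g f) = coeff n g := by
  rw [X_pow_dvd_iff] at hg
  rw [coeff_psComp, sum_eq_single n]
  · rw [hf.coeff_pow_of_lt hℓ (by omega), if_pos rfl, mul_one]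
  · intro k _ hkn
    by_cases hkm : k < m
    · rw [hg k hkm, zero_mul]
    · rw [hf.coeff_pow_of_lt hℓ (by omega), if_neg (Ne.symm hkn), mul_zero]
  · simp

theorem IsTangentToId.coeff_psComp_add (hf : IsTangentToId ℓ f) (hℓ : 1 ≤ ℓ) {g : R⟦X⟧} {m : ℕ}
    (hg : X ^ m ∣ g) :
    coeff (m + ℓ) (psComp g f) = m * coeff (ℓ + 1) f * coeff m g + coeff (m + ℓ) g := by
  rw [X_pow_dvd_iff] at hg
  rw [coeff_psComp, sum_eq_add_of_mem m (m + ℓ) (by simp) (by simp) (by omega)]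
  · rw [hf.coeff_pow_add hℓ, hf.coeff_pow_of_lt hℓ (by omega), if_pos rfl]
    ring
  · rintro k - ⟨hkm, hkmℓ⟩
    by_cases hlt : k < m
    · rw [hg k hlt, zero_mul]
    · rw [hf.coeff_pow_of_lt hℓ (by omega), if_neg (by omega), mul_zero]

end TangentToIdentity

section NormalForm

variable {K : Type*} [CommRing K] {ℓ : ℕ} {f : K⟦X⟧}

noncomputable def normalForm (ℓ : ℕ) (μ : K) : K⟦X⟧ :=
  X + X ^ (ℓ + 1) + C μ * X ^ (2 * ℓ + 1)

theorem psComp_normalForm {h : K⟦X⟧} (hh : constantCoeff h = 0) (ℓ : ℕ) (μ : K) :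
    psComp (normalForm ℓ μ) h = h + h ^ (ℓ + 1) + C μ * h ^ (2 * ℓ + 1) := by
  rw [normalForm, psComp_add, psComp_add, psComp_C_mul, psComp_X hh, psComp_X_pow hh,
    psComp_X_pow hh]

noncomputable def conjugacyDefect (ℓ : ℕ) (f : K⟦X⟧) (μ : K) (h : K⟦X⟧) : K⟦X⟧ :=
  psComp h f - psComp (normalForm ℓ μ) h

theorem coeff_conjugacyDefect_of_le (hf : IsTangentToId ℓ f) (hℓ : 1 ≤ ℓ) {h : K⟦X⟧}
    (hh : constantCoeff h = 0) (μ : K) {n : ℕ} (hn : n ≤ ℓ) :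
    coeff n (conjugacyDefect ℓ f μ h) = 0 := by
  have hg : X ^ 1 ∣ h := by rwa [pow_one, X_dvd_iff]
  rw [conjugacyDefect, map_sub, psComp_normalForm hh, hf.coeff_psComp_of_lt hℓ hg (by omega)]
  simp [coeff_C_mul, coeff_pow_of_lt hh (show n < ℓ + 1 by omega),
    coeff_pow_of_lt hh (show n < 2 * ℓ + 1 by omega)]

theorem coeff_conjugacyDefect_succ (hf : IsTangentToId ℓ f) (hℓ : 1 ≤ ℓ) {h : K⟦X⟧}
    (hh : constantCoeff h = 0) (μ : K) :
    coeff (ℓ + 1) (conjugacyDefect ℓ f μ h) = coeff 1 h * (coeff (ℓ + 1) f - coeff 1 h ^ ℓ) := by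
  have hg : X ^ 1 ∣ h := by rwa [pow_one, X_dvd_iff]
  have hcomp := hf.coeff_psComp_add hℓ hg
  rw [add_comm 1 ℓ] at hcomp
  rw [conjugacyDefect, map_sub, psComp_normalForm hh, hcomp]
  simp only [Nat.cast_one, one_mul, map_add, coeff_pow_self hh, coeff_C_mul,
    coeff_pow_of_lt hh (show ℓ + 1 < 2 * ℓ + 1 by omega), mul_zero, add_zero]
  ring

theorem coeff_conjugacyDefect_add (hf : IsTangentToId ℓ f) (hℓ : 1 ≤ ℓ) {h h' : K⟦X⟧}
    (hh : constantCoeff h = 0) {m : ℕ} (hm : 2 ≤ m) (hagree : ∀ i < m, coeff i h' = coeff i h)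
    (μ μ' : K) :
    coeff (m + ℓ) (conjugacyDefect ℓ f μ' h') =
      coeff (m + ℓ) (conjugacyDefect ℓ f μ h)
        + (m * coeff (ℓ + 1) f - (ℓ + 1) * coeff 1 h ^ ℓ) * (coeff m h' - coeff m h)
        - (μ' - μ) * coeff (m + ℓ) (h ^ (2 * ℓ + 1)) := by
  have hh' : constantCoeff h' = 0 := by
    rw [← coeff_zero_eq_constantCoeff_apply, hagree 0 (by omega),
      coeff_zero_eq_constantCoeff_apply, hh]
  have hcomp := hf.coeff_psComp_add hℓ (g := h' - h) (m := m) <| X_pow_dvd_iff.mpr fun k hk => by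
    rw [map_sub, hagree k hk, sub_self]
  rw [psComp_sub, map_sub, map_sub, map_sub] at hcomp
  simp only [conjugacyDefect, map_sub, map_add, psComp_normalForm hh, psComp_normalForm hh',
    coeff_C_mul, coeff_pow_succ_add hh hm hagree ℓ,
    coeff_pow_succ_of_lt hh hm hagree (k := 2 * ℓ) (n := m + ℓ) (by omega)]
  linear_combination hcomp

end NormalForm

section Triangular

variable {α : Type*} [Nonempty α]

noncomputable def triangularSolution (P : ℕ → (ℕ → α) → Prop) (m : ℕ) : α :=
  Classical.epsilon fun x =>
    ∀ s : ℕ → α, (∀ i < m, s i = triangularSolution P i) → s m = x → P m s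
termination_by m

theorem exists_seq_forall_of_triangular {P : ℕ → (ℕ → α) → Prop}
    (hstep : ∀ m t, (∀ i < m, P i t) → ∃ x, ∀ s, (∀ i < m, s i = t i) → s m = x → P m s) :
    ∃ s, ∀ m, P m s := by
  refine ⟨triangularSolution P, fun m => ?_⟩
  induction m using Nat.strong_induction_on with
  | _ m ih =>
    have hm : triangularSolution P m = Classical.epsilon fun x =>
        ∀ s : ℕ → α, (∀ i < m, s i = triangularSolution P i) → s m = x → P m s := by
      rw [triangularSolution]
    exact Classical.epsilon_spec (hstep m _ ih) _ (fun _ _ => rfl) hm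

end Triangular

section Conjugacy

variable {K : Type*} [Field K] {ℓ : ℕ} {f : K⟦X⟧}

/-- The unknowns `s` are the coefficients of `h`; since `h_{ℓ+1}` may be chosen freely,
`s (ℓ + 1)` also serves as `μ`. -/
def conjugacyEquations (ℓ : ℕ) (f : K⟦X⟧) : ℕ → (ℕ → K) → Prop
  | 0, s => s 0 = 0
  | 1, s => s 1 ^ ℓ = coeff (ℓ + 1) f
  | m + 2, s => coeff (m + 2 + ℓ) (conjugacyDefect ℓ f (s (ℓ + 1)) (mk s)) = 0

theorem exists_coeff_conjugacyDefect_eq_add_mul [CharZero K] (hf : IsTangentToId ℓ f)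
    (hℓ : 1 ≤ ℓ) (ha : coeff (ℓ + 1) f ≠ 0) {t : ℕ → K} (ht0 : t 0 = 0)
    (ht1 : t 1 ^ ℓ = coeff (ℓ + 1) f) {m : ℕ} (hm : 2 ≤ m) :
    ∃ σ ≠ 0, ∀ s : ℕ → K, (∀ i < m, s i = t i) →
      coeff (m + ℓ) (conjugacyDefect ℓ f (s (ℓ + 1)) (mk s)) =
        coeff (m + ℓ) (conjugacyDefect ℓ f (t (ℓ + 1)) (mk t)) + σ * (s m - t m) := by
  have hh : constantCoeff (mk t) = 0 := by rw [← coeff_zero_eq_constantCoeff_apply, coeff_mk, ht0]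
  have key : ∀ s : ℕ → K, (∀ i < m, s i = t i) →
      coeff (m + ℓ) (conjugacyDefect ℓ f (s (ℓ + 1)) (mk s)) =
        coeff (m + ℓ) (conjugacyDefect ℓ f (t (ℓ + 1)) (mk t))
          + ((m - (ℓ + 1)) * coeff (ℓ + 1) f) * (s m - t m)
          - (s (ℓ + 1) - t (ℓ + 1)) * coeff (m + ℓ) (mk t ^ (2 * ℓ + 1)) := fun s hs => by
    rw [coeff_conjugacyDefect_add hf hℓ hh hm (by simpa using hs) (t (ℓ + 1)) (s (ℓ + 1)),
      coeff_mk, coeff_mk, coeff_mk, ht1]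
    ring
  have hslope : m ≠ ℓ + 1 → ((m : K) - (ℓ + 1)) * coeff (ℓ + 1) f ≠ 0 := fun hne =>
    mul_ne_zero (sub_ne_zero.mpr (by exact_mod_cast hne)) ha
  rcases lt_trichotomy m (ℓ + 1) with hlt | rfl | hgt
  · refine ⟨_, hslope hlt.ne, fun s hs => ?_⟩
    rw [key s hs, coeff_pow_of_lt hh (by omega)]
    ring
  · refine ⟨-t 1 ^ (2 * ℓ + 1), neg_ne_zero.mpr (pow_ne_zero _ ?_), fun s hs => ?_⟩
    · rintro h1
      exact ha (by rw [← ht1, h1, zero_pow (by omega)])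
    rw [key s hs, show ℓ + 1 + ℓ = 2 * ℓ + 1 by omega, coeff_pow_self hh, coeff_mk]
    push_cast
    ring
  · refine ⟨_, hslope hgt.ne', fun s hs => ?_⟩
    rw [key s hs, hs (ℓ + 1) hgt]
    ring

theorem conjugacyEquations_step [IsAlgClosed K] [CharZero K] (hf : IsTangentToId ℓ f)
    (hℓ : 1 ≤ ℓ) (ha : coeff (ℓ + 1) f ≠ 0) (m : ℕ) (t : ℕ → K)
    (ht : ∀ i < m, conjugacyEquations ℓ f i t) :
    ∃ x, ∀ s, (∀ i < m, s i = t i) → s m = x → conjugacyEquations ℓ f m s := by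
  match m with
  | 0 => exact ⟨0, fun s _ hs => hs⟩
  | 1 =>
    obtain ⟨c, hc⟩ := IsAlgClosed.exists_pow_nat_eq (coeff (ℓ + 1) f) hℓ
    exact ⟨c, fun s _ hs => by rw [conjugacyEquations, hs, hc]⟩
  | m + 2 =>
    obtain ⟨σ, hσ, hlin⟩ := exists_coeff_conjugacyDefect_eq_add_mul hf hℓ ha (ht 0 (by omega))
      (ht 1 (by omega)) (m := m + 2) (by omega)
    refine ⟨t (m + 2) - coeff (m + 2 + ℓ) (conjugacyDefect ℓ f (t (ℓ + 1)) (mk t)) / σ,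
      fun s hs hsm => ?_⟩
    rw [conjugacyEquations, hlin s hs, hsm]
    field_simp
    ring

theorem conjugacyDefect_eq_zero (hf : IsTangentToId ℓ f) (hℓ : 1 ≤ ℓ) {s : ℕ → K}
    (hs : ∀ m, conjugacyEquations ℓ f m s) : conjugacyDefect ℓ f (s (ℓ + 1)) (mk s) = 0 := by
  have hh : constantCoeff (mk s) = 0 := by
    rw [← coeff_zero_eq_constantCoeff_apply, coeff_mk]
    exact hs 0
  ext n
  rw [map_zero]
  rcases le_or_gt n ℓ with hn | hn
  · exact coeff_conjugacyDefect_of_le hf hℓ hh _ hn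
  obtain ⟨m, rfl⟩ : ∃ m, n = m + 1 + ℓ := ⟨n - ℓ - 1, by omega⟩
  cases m with
  | zero =>
    have h1 : s 1 ^ ℓ = coeff (ℓ + 1) f := hs 1
    rw [zero_add, add_comm, coeff_conjugacyDefect_succ hf hℓ hh, coeff_mk, h1, sub_self, mul_zero]
  | succ m => exact hs (m + 2)

end Conjugacy

theorem stmt_2 {K : Type*} [Field K] [IsAlgClosed K] [CharZero K] (ℓ : ℕ) (hℓ : 1 ≤ ℓ)
    (f : PowerSeries K) (hf : IsTangentToId ℓ f)
    (hexact : PowerSeries.coeff (R := K) (ℓ + 1) f ≠ 0) :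
    ∃ (μ : K) (h : PowerSeries K),
      PowerSeries.coeff (R := K) 0 h = 0 ∧ PowerSeries.coeff (R := K) 1 h ≠ 0 ∧
      psComp h f = psComp
        (PowerSeries.X + PowerSeries.X ^ (ℓ + 1)
          + PowerSeries.C (R := K) μ * PowerSeries.X ^ (2 * ℓ + 1)) h := by
  obtain ⟨s, hs⟩ := exists_seq_forall_of_triangular (conjugacyEquations_step hf hℓ hexact)
  have h1 : s 1 ^ ℓ = coeff (ℓ + 1) f := hs 1
  refine ⟨s (ℓ + 1), mk s, (coeff_mk 0 s).trans (hs 0), fun h0 => hexact ?_,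
    sub_eq_zero.mp (conjugacyDefect_eq_zero hf hℓ hs)⟩
  rw [← h1, ← coeff_mk 1 s, h0, zero_pow (by omega)]
end

section
/- Let ε > 0 and let f, g : [0,ε) → ℝ be of class C³ with f(0) = g(0) = 0, f'(0) = g'(0) = 1, and f''(0) ≠ 0, g''(0) ≠ 0 (i.e., f and g are parabolic germs exactly 1-tangent to the identity). Suppose there exist δ > 0 and a map h : [0,ε) → ℝ of class C² with h(0) = 0 and h'(0) = 1 (a parabolic conjugacy) such that h(f(x)) = g(h(x)) for all x ∈ [0,δ). Then the Schwarzian derivatives of f and g at the origin coincide: f'''(0) − (3/2)·f''(0)² = g'''(0) − (3/2)·g''(0)². (The value of the Schwarzian derivative at the origin of a germ of C³ parabolic diffeomorphism is invariant under parabolic C² conjugacy.) -/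
/-!
Write `f x = x + a x² + b x³ + o(x³)`, `g y = y + a' y² + b' y³ + o(y³)` and
`h x = x + c x² + o(x²)`. Both sides of `h ∘ f = g ∘ h` then expand as
`h x + A x² + (B + 2 A c) x³ + o(x³)`, with `(A, B) = (a, b)` on the left and `(a', b')` on the
right. For `g ∘ h` this is substitution; for `h ∘ f` it is the mean value theorem for
`v = h - id - c id²`, whose derivative is `o(x)`, on the interval between `x` and `f x`, of length
`O(x²)`. Comparing coefficients gives `a = a'` and `b = b'`: `f` and `g` even have the same
`3`-jet at `0`.
-/

open Set Filter Asymptotics Topology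

section Expansions

variable {l : Filter ℝ} {p : ℝ → ℝ} {α β γ : ℝ}

theorem isLittleO_sq_of_isLittleO_cube (hl : l ≤ 𝓝 0)
    (hp : (fun x => p x - (x + α * x ^ 2 + β * x ^ 3)) =o[l] (· ^ 3)) :
    (fun x => p x - (x + α * x ^ 2)) =o[l] (· ^ 2) := by
  have hcube : (fun x : ℝ => β * x ^ 3) =o[l] (· ^ 2) :=
    ((isLittleO_pow_pow (by norm_num)).mono hl).const_mul_left β
  refine ((hp.trans ((isLittleO_pow_pow (by norm_num)).mono hl)).add hcube).congr_left ?_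
  intro x
  ring

theorem isBigO_sub_self_of_isLittleO_sq
    (hp : (fun x => p x - (x + γ * x ^ 2)) =o[l] (· ^ 2)) :
    (fun x => p x - x) =O[l] (· ^ 2) :=
  (hp.isBigO.add ((isBigO_refl _ _).const_mul_left γ)).congr_left fun x => by ring

theorem isEquivalent_id_of_isLittleO_sq (hl : l ≤ 𝓝 0)
    (hp : (fun x => p x - (x + γ * x ^ 2)) =o[l] (· ^ 2)) : p ~[l] id := by
  refine ((isBigO_sub_self_of_isLittleO_sq hp).trans_isLittleO
    ((isLittleO_pow_pow (by norm_num : 1 < 2)).mono hl)).congr (fun x => rfl) fun x => ?_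
  simp

theorem sq_sub_isLittleO_cube (hl : l ≤ 𝓝 0)
    (hp : (fun x => p x - (x + γ * x ^ 2)) =o[l] (· ^ 2)) :
    (fun x => p x ^ 2 - (x ^ 2 + 2 * γ * x ^ 3)) =o[l] (· ^ 3) := by
  have hsq : (fun x => (p x - x) ^ 2) =o[l] (· ^ 3) := by
    have h4 : (fun x => (p x - x) ^ 2) =O[l] (· ^ 4) :=
      ((isBigO_sub_self_of_isLittleO_sq hp).pow 2).congr_right fun x => by ring
    exact h4.trans_isLittleO ((isLittleO_pow_pow (by norm_num)).mono hl)
  have hlin : (fun x => x * (p x - (x + γ * x ^ 2))) =o[l] (· ^ 3) :=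
    ((isBigO_refl (fun x : ℝ => x) l).mul_isLittleO hp).congr_right fun x => by ring
  refine (hsq.add (hlin.const_mul_left 2)).congr_left fun x => ?_
  ring

theorem cube_sub_isLittleO_cube (hl : l ≤ 𝓝 0)
    (hp : (fun x => p x - (x + γ * x ^ 2)) =o[l] (· ^ 2)) :
    (fun x => p x ^ 3 - x ^ 3) =o[l] (· ^ 3) :=
  ((isEquivalent_id_of_isLittleO_sq hl hp).pow 3).isLittleO

theorem isLittleO_cubic_comp_quadratic {G : ℝ → ℝ} (hl : l ≤ 𝓝 0)
    (hG : (fun y => G y - (y + α * y ^ 2 + β * y ^ 3)) =o[l] (· ^ 3))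
    (hp : (fun x => p x - (x + γ * x ^ 2)) =o[l] (· ^ 2)) (hpl : Tendsto p l l) :
    (fun x => G (p x) - (p x + α * x ^ 2 + (β + 2 * α * γ) * x ^ 3)) =o[l] (· ^ 3) := by
  have hGp : (fun x => G (p x) - (p x + α * p x ^ 2 + β * p x ^ 3)) =o[l] (· ^ 3) :=
    (hG.comp_tendsto hpl).trans_isBigO ((isEquivalent_id_of_isLittleO_sq hl hp).pow 3).isBigO
  refine (hGp.add (((sq_sub_isLittleO_cube hl hp).const_mul_left α).add
    ((cube_sub_isLittleO_cube hl hp).const_mul_left β))).congr_left fun x => ?_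
  ring

theorem eq_zero_of_isLittleO_pow {n : ℕ} {c : ℝ} (hl : ∃ᶠ x in l, x ≠ 0)
    (h : (fun x => c * x ^ n) =o[l] (· ^ n)) : c = 0 := by
  by_contra hc
  exact isLittleO_irrefl (hl.mono fun x hx => pow_ne_zero n hx)
    ((isLittleO_const_mul_left_iff hc).1 h)

theorem eq_zero_of_isLittleO_cube {a b : ℝ} (hl : l ≤ 𝓝 0) (hl' : ∃ᶠ x in l, x ≠ 0)
    (h : (fun x => a * x ^ 2 + b * x ^ 3) =o[l] (· ^ 3)) : a = 0 ∧ b = 0 := by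
  have ha : a = 0 := by
    refine eq_zero_of_isLittleO_pow (n := 2) hl' ?_
    have hb : (fun x : ℝ => b * x ^ 3) =o[l] (· ^ 2) :=
      ((isLittleO_pow_pow (by norm_num)).mono hl).const_mul_left b
    exact ((h.trans ((isLittleO_pow_pow (by norm_num)).mono hl)).sub hb).congr_left fun x => by ring
  subst ha
  exact ⟨rfl, eq_zero_of_isLittleO_pow hl' (h.congr_left fun x => by ring)⟩

end Expansions

theorem Convex.isLittleO_comp_sub_of_hasDerivWithinAt {E : Type*} [NormedAddCommGroup E]
    [NormedSpace ℝ E] {s : Set ℝ} (hs : Convex ℝ s) {v v' : ℝ → E} {p : ℝ → ℝ} {n : ℕ}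
    (hv : ∀ y ∈ s, HasDerivWithinAt v (v' y) s y) (hv' : v' =o[𝓝[s] 0] (· ^ n))
    (hps : Tendsto p (𝓝[s] 0) (𝓝[s] 0)) (hpO : p =O[𝓝[s] 0] id) :
    (fun x => v (p x) - v x) =o[𝓝[s] 0] fun x => x ^ n * (p x - x) := by
  rw [isLittleO_iff]
  intro c hc
  obtain ⟨K, -, hK⟩ := hpO.exists_pos
  set M := max K 1
  have hM : 0 < M := lt_of_lt_of_le one_pos (le_max_right K 1)
  obtain ⟨r, hr, hr'⟩ := Metric.mem_nhdsWithin_iff.1 (hv'.def (by positivity : 0 < c / M ^ n))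
  filter_upwards [self_mem_nhdsWithin, hps self_mem_nhdsWithin, hK.bound,
    nhdsWithin_le_nhds (Metric.ball_mem_nhds 0 (div_pos hr hM))] with x hxs hpxs hpx hxr
  have hseg : segment ℝ x (p x) ⊆ s ∩ Metric.closedBall 0 (M * ‖x‖) := by
    refine (hs.inter (convex_closedBall 0 _)).segment_subset ⟨hxs, ?_⟩ ⟨hpxs, ?_⟩
    · simpa using le_mul_of_one_le_left (norm_nonneg x) (le_max_right K 1)
    · simpa using hpx.trans (mul_le_mul_of_nonneg_right (le_max_left K 1) (norm_nonneg x))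
  have hbound : ∀ y ∈ segment ℝ x (p x), ‖v' y‖ ≤ c * ‖x‖ ^ n := by
    intro y hy
    obtain ⟨hys, hyx⟩ := hseg hy
    rw [Metric.mem_closedBall, dist_zero_right] at hyx
    have hyr : y ∈ Metric.ball 0 r := by
      rw [Metric.mem_ball, dist_zero_right]
      rw [Metric.mem_ball, dist_zero_right, lt_div_iff₀ hM] at hxr
      linarith
    calc ‖v' y‖ ≤ c / M ^ n * ‖y ^ n‖ := hr' ⟨hyr, hys⟩
      _ ≤ c / M ^ n * (M * ‖x‖) ^ n := by rw [norm_pow]; gcongr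
      _ = c * ‖x‖ ^ n := by field_simp; ring
  calc ‖v (p x) - v x‖ ≤ c * ‖x‖ ^ n * ‖p x - x‖ :=
        (convex_segment x (p x)).norm_image_sub_le_of_norm_hasDerivWithin_le
          (fun y hy => (hv y (hseg hy).1).mono fun z hz => (hseg hz).1) hbound
          (left_mem_segment ℝ x (p x)) (right_mem_segment ℝ x (p x))
    _ = c * ‖x ^ n * (p x - x)‖ := by rw [norm_mul, norm_pow, mul_assoc]

theorem Convex.isLittleO_quadratic_comp_cubic {s : Set ℝ} (hs : Convex ℝ s)
    {p p' F : ℝ → ℝ} {α β γ : ℝ} (hp : ∀ y ∈ s, HasDerivWithinAt p (p' y) s y)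
    (hp' : (fun y => p' y - (1 + 2 * γ * y)) =o[𝓝[s] 0] (· ^ 1))
    (hF : (fun x => F x - (x + α * x ^ 2 + β * x ^ 3)) =o[𝓝[s] 0] (· ^ 3))
    (hFs : Tendsto F (𝓝[s] 0) (𝓝[s] 0)) :
    (fun x => p (F x) - (p x + α * x ^ 2 + (β + 2 * α * γ) * x ^ 3)) =o[𝓝[s] 0] (· ^ 3) := by
  set v : ℝ → ℝ := fun y => p y - (y + γ * y ^ 2)
  have hv : ∀ y ∈ s, HasDerivWithinAt v (p' y - (1 + 2 * γ * y)) s y := fun y hy =>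
    ((hp y hy).sub ((hasDerivAt_id y).add ((hasDerivAt_pow 2 y).const_mul γ)).hasDerivWithinAt
      ).congr_deriv (by simp only [Nat.cast_ofNat, Nat.add_one_sub_one, pow_one]; ring)
  have hF2 := isLittleO_sq_of_isLittleO_cube nhdsWithin_le_nhds hF
  have hvF : (fun x => v (F x) - v x) =o[𝓝[s] 0] (· ^ 3) :=
    ((hs.isLittleO_comp_sub_of_hasDerivWithinAt hv hp' hFs
      (isEquivalent_id_of_isLittleO_sq nhdsWithin_le_nhds hF2).isBigO).trans_isBigO
      ((isBigO_refl _ _).mul (isBigO_sub_self_of_isLittleO_sq hF2))).congr_right fun x => by ring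
  have hF2sq := (sq_sub_isLittleO_cube nhdsWithin_le_nhds hF2).const_mul_left γ
  refine (hvF.add (hF.add hF2sq)).congr_left fun x => ?_
  simp only [v]
  ring

theorem Convex.expansion_coeffs_eq_of_comp_eq {s : Set ℝ} (hs : Convex ℝ s)
    (hs0 : ∃ᶠ x in 𝓝[s] (0 : ℝ), x ≠ 0) {F G p p' : ℝ → ℝ} {α β α' β' γ : ℝ}
    (hF : (fun x => F x - (x + α * x ^ 2 + β * x ^ 3)) =o[𝓝[s] 0] (· ^ 3))
    (hG : (fun y => G y - (y + α' * y ^ 2 + β' * y ^ 3)) =o[𝓝[s] 0] (· ^ 3))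
    (hp : (fun x => p x - (x + γ * x ^ 2)) =o[𝓝[s] 0] (· ^ 2))
    (hpd : ∀ y ∈ s, HasDerivWithinAt p (p' y) s y)
    (hp' : (fun y => p' y - (1 + 2 * γ * y)) =o[𝓝[s] 0] (· ^ 1))
    (hFs : Tendsto F (𝓝[s] 0) (𝓝[s] 0)) (hps : Tendsto p (𝓝[s] 0) (𝓝[s] 0))
    (hconj : ∀ᶠ x in 𝓝[s] 0, p (F x) = G (p x)) : α = α' ∧ β = β' := by
  have hpF := hs.isLittleO_quadratic_comp_cubic hpd hp' hF hFs
  have hGp := isLittleO_cubic_comp_quadratic nhdsWithin_le_nhds hG hp hps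
  obtain ⟨h₂, h₃⟩ := eq_zero_of_isLittleO_cube (a := α - α')
    (b := β + 2 * α * γ - (β' + 2 * α' * γ)) nhdsWithin_le_nhds hs0
    ((hGp.sub hpF).congr' (hconj.mono fun x hx => by simp only [hx]; ring) EventuallyEq.rfl)
  have hα : α = α' := sub_eq_zero.1 h₂
  subst hα
  exact ⟨rfl, by linarith⟩

theorem tendsto_nhdsWithin_Ico_of_isEquivalent_id {ε : ℝ} (hε : 0 < ε) {p : ℝ → ℝ}
    (hp : p ~[𝓝[Ico 0 ε] 0] id) : Tendsto p (𝓝[Ico 0 ε] 0) (𝓝[Ico 0 ε] 0) := by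
  rw [nhdsWithin_Ico_eq_nhdsGE hε] at hp ⊢
  refine tendsto_nhdsWithin_iff.2 ⟨hp.symm.tendsto_nhds ?_, ?_⟩
  · exact tendsto_id.mono_left nhdsWithin_le_nhds
  · filter_upwards [hp.isLittleO.def one_half_pos, self_mem_nhdsWithin] with x hx (hx0 : 0 ≤ x)
    simp only [Pi.sub_apply, id, Real.norm_eq_abs, abs_of_nonneg hx0] at hx
    show 0 ≤ p x
    linarith [(abs_le.1 hx).1]

theorem frequently_ne_zero_nhdsWithin_Ico {ε : ℝ} (hε : 0 < ε) :
    ∃ᶠ x in 𝓝[Ico 0 ε] (0 : ℝ), x ≠ 0 := by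
  rw [nhdsWithin_Ico_eq_nhdsGE hε]
  have hpos : ∀ᶠ x in 𝓝[>] (0 : ℝ), x ≠ 0 := eventually_nhdsWithin_of_forall fun x hx => ne_of_gt hx
  exact hpos.frequently.filter_mono (nhdsWithin_mono _ Ioi_subset_Ici_self)

theorem isLittleO_sub_cubic_taylor {F : ℝ → ℝ} {s : Set ℝ} (hs : Convex ℝ s) (h0 : (0 : ℝ) ∈ s)
    (hF : ContDiffOn ℝ 3 F s) (hF0 : F 0 = 0) (hF1 : iteratedDerivWithin 1 F s 0 = 1) :
    (fun x => F x - (x + iteratedDerivWithin 2 F s 0 / 2 * x ^ 2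
      + iteratedDerivWithin 3 F s 0 / 6 * x ^ 3)) =o[𝓝[s] 0] (· ^ 3) := by
  refine (taylor_isLittleO (n := 3) hs h0 hF).congr (fun x => ?_) fun x => by rw [sub_zero]
  simp only [taylorWithinEval_succ, taylor_within_zero_eval, hF0, hF1, smul_eq_mul]
  norm_num
  ring

theorem isLittleO_sub_quadratic_taylor {F : ℝ → ℝ} {s : Set ℝ} (hs : Convex ℝ s) (h0 : (0 : ℝ) ∈ s)
    (hF : ContDiffOn ℝ 2 F s) (hF0 : F 0 = 0) (hF1 : iteratedDerivWithin 1 F s 0 = 1) :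
    (fun x => F x - (x + iteratedDerivWithin 2 F s 0 / 2 * x ^ 2)) =o[𝓝[s] 0] (· ^ 2) := by
  refine (taylor_isLittleO (n := 2) hs h0 hF).congr (fun x => ?_) fun x => by rw [sub_zero]
  simp only [taylorWithinEval_succ, taylor_within_zero_eval, hF0, hF1, smul_eq_mul]
  norm_num
  ring

theorem isLittleO_derivWithin_sub_linear_taylor {F : ℝ → ℝ} {s : Set ℝ} (hs : Convex ℝ s)
    (h0 : (0 : ℝ) ∈ s) (hs' : UniqueDiffOn ℝ s) (hF : ContDiffOn ℝ 2 F s)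
    (hF1 : iteratedDerivWithin 1 F s 0 = 1) :
    (fun y => derivWithin F s y - (1 + 2 * (iteratedDerivWithin 2 F s 0 / 2) * y))
      =o[𝓝[s] 0] (· ^ 1) := by
  refine (taylor_isLittleO (n := 1) hs h0 (hF.derivWithin hs' (by norm_num))).congr
    (fun x => ?_) fun x => by rw [sub_zero]
  have hd1 : derivWithin F s 0 = 1 := by rwa [← iteratedDerivWithin_one]
  have hd2 : iteratedDerivWithin 1 (derivWithin F s) s 0 = iteratedDerivWithin 2 F s 0 :=
    congrFun iteratedDerivWithin_succ'.symm 0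
  simp only [taylorWithinEval_succ, taylor_within_zero_eval, zero_add, hd1, hd2, smul_eq_mul]
  ring

theorem stmt_6_general (ε : ℝ) (hε : 0 < ε) (f g h : ℝ → ℝ)
    (hf : ContDiffOn ℝ 3 f (Set.Ico 0 ε)) (hg : ContDiffOn ℝ 3 g (Set.Ico 0 ε))
    (hf0 : f 0 = 0) (hg0 : g 0 = 0)
    (hf1 : iteratedDerivWithin 1 f (Set.Ico 0 ε) 0 = 1)
    (hg1 : iteratedDerivWithin 1 g (Set.Ico 0 ε) 0 = 1)
    (δ : ℝ) (hδ : 0 < δ)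
    (hh : ContDiffOn ℝ 2 h (Set.Ico 0 ε))
    (hh0 : h 0 = 0) (hh1 : iteratedDerivWithin 1 h (Set.Ico 0 ε) 0 = 1)
    (hconj : ∀ x ∈ Set.Ico (0 : ℝ) δ, h (f x) = g (h x)) :
    iteratedDerivWithin 3 f (Set.Ico 0 ε) 0
        - (3 / 2) * (iteratedDerivWithin 2 f (Set.Ico 0 ε) 0) ^ 2
      = iteratedDerivWithin 3 g (Set.Ico 0 ε) 0
        - (3 / 2) * (iteratedDerivWithin 2 g (Set.Ico 0 ε) 0) ^ 2 := by
  set s := Ico (0 : ℝ) ε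
  have hs : Convex ℝ s := convex_Ico 0 ε
  have h0 : (0 : ℝ) ∈ s := ⟨le_rfl, hε⟩
  have hF := isLittleO_sub_cubic_taylor hs h0 hf hf0 hf1
  have hH := isLittleO_sub_quadratic_taylor hs h0 hh hh0 hh1
  have hconj' : ∀ᶠ x in 𝓝[s] 0, h (f x) = g (h x) := by
    filter_upwards [self_mem_nhdsWithin, nhdsWithin_le_nhds (Iio_mem_nhds hδ)] with x hx hxδ
    exact hconj x ⟨hx.1, hxδ⟩
  obtain ⟨h₂, h₃⟩ := hs.expansion_coeffs_eq_of_comp_eq (frequently_ne_zero_nhdsWithin_Ico hε)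
    hF (isLittleO_sub_cubic_taylor hs h0 hg hg0 hg1) hH
    (fun y hy => (hh.differentiableOn (by norm_num) y hy).hasDerivWithinAt)
    (isLittleO_derivWithin_sub_linear_taylor hs h0 (uniqueDiffOn_Ico 0 ε) hh hh1)
    (tendsto_nhdsWithin_Ico_of_isEquivalent_id hε <| isEquivalent_id_of_isLittleO_sq
      nhdsWithin_le_nhds <| isLittleO_sq_of_isLittleO_cube nhdsWithin_le_nhds hF)
    (tendsto_nhdsWithin_Ico_of_isEquivalent_id hε <| isEquivalent_id_of_isLittleO_sq
      nhdsWithin_le_nhds hH) hconj'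
  rw [div_left_inj' two_ne_zero] at h₂
  rw [div_left_inj' (by norm_num : (6 : ℝ) ≠ 0)] at h₃
  rw [h₂, h₃]

/-- The value at the origin of the Schwarzian derivative of a `C³` parabolic germ is
invariant under parabolic `C²` conjugacy. Derivatives at `0` are one-sided
(derivatives within `[0,ε)`). -/
theorem stmt_6 (ε : ℝ) (hε : 0 < ε) (f g h : ℝ → ℝ)
    (hf : ContDiffOn ℝ 3 f (Set.Ico 0 ε)) (hg : ContDiffOn ℝ 3 g (Set.Ico 0 ε))
    (hf0 : f 0 = 0) (hg0 : g 0 = 0)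
    (hf1 : iteratedDerivWithin 1 f (Set.Ico 0 ε) 0 = 1)
    (hg1 : iteratedDerivWithin 1 g (Set.Ico 0 ε) 0 = 1)
    (hf2 : iteratedDerivWithin 2 f (Set.Ico 0 ε) 0 ≠ 0)
    (hg2 : iteratedDerivWithin 2 g (Set.Ico 0 ε) 0 ≠ 0)
    (δ : ℝ) (hδ : 0 < δ)
    (hh : ContDiffOn ℝ 2 h (Set.Ico 0 ε))
    (hh0 : h 0 = 0) (hh1 : iteratedDerivWithin 1 h (Set.Ico 0 ε) 0 = 1)
    (hconj : ∀ x ∈ Set.Ico (0 : ℝ) δ, h (f x) = g (h x)) :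
    iteratedDerivWithin 3 f (Set.Ico 0 ε) 0
        - (3 / 2) * (iteratedDerivWithin 2 f (Set.Ico 0 ε) 0) ^ 2
      = iteratedDerivWithin 3 g (Set.Ico 0 ε) 0
        - (3 / 2) * (iteratedDerivWithin 2 g (Set.Ico 0 ε) 0) ^ 2 :=
  stmt_6_general ε hε f g h hf hg hf0 hg0 hf1 hg1 δ hδ hh hh0 hh1 hconj
end

section
/- (Reduction lemma.) Let ℓ ≥ 1 and ε > 0, and let f : [0,ε) → ℝ be of class C^{2ℓ+1} with f(0) = 0, exactly ℓ-tangent to the identity (f'(0) = 1, f^{(j)}(0) = 0 for 2 ≤ j ≤ ℓ, f^{(ℓ+1)}(0) ≠ 0), and suppose f^{(ℓ+1)}(0) > 0 (the expanding case). Then there exist a polynomial map h : ℝ → ℝ with h(0) = 0 and h'(0) > 0 and a real number μ such that h(f(x)) = h(x) + (h(x))^{ℓ+1} + μ·(h(x))^{2ℓ+1} + o(x^{2ℓ+1}) as x → 0⁺. (Equivalently, f is conjugate by a germ of polynomial diffeomorphism to a germ of the reduced form x ↦ x + x^{ℓ+1} + μx^{2ℓ+1} + o(x^{2ℓ+1});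 in the contracting case f^{(ℓ+1)}(0) < 0 the same holds with the sign of the term (h(x))^{ℓ+1} reversed.) -/
/-!
Replace `f` by its Taylor polynomial `T` of degree `2ℓ + 1`. Since
`T = X + a X^{ℓ+1} + O(X^{ℓ+2})` with `a > 0`, the statement becomes a congruence of polynomials
modulo `X^{2ℓ+2}`, which is solved order by order. Start from `p = b X` with `b^ℓ = a`. Adding
`c X^k` to `p` (`2 ≤ k ≤ ℓ`) changes `p ∘ T - p - p^{ℓ+1}` at order `k + ℓ` by `c a (k - ℓ - 1)`,
which is nonzero, so the coefficients of orders `ℓ + 2, …, 2ℓ` can be killed one after the other.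
At order `2ℓ + 1` (the resonant case `k = ℓ + 1`) this fails, and the remaining coefficient is
absorbed by `μ p^{2ℓ+1}`. Finally `p` is locally Lipschitz, so
`p ∘ f - p ∘ T = O(f - T) = o(x^{2ℓ+1})`.
-/

open Polynomial Filter Asymptotics Topology
open scoped Nat

section NormalForm

variable {R : Type*} [CommRing R]

lemma X_pow_succ_dvd_sub_C_coeff_mul {q : R[X]} {m : ℕ} (h : X ^ m ∣ q) :
    X ^ (m + 1) ∣ q - C (q.coeff m) * X ^ m := by
  obtain ⟨r, rfl⟩ := h
  rw [coeff_X_pow_mul', if_pos le_rfl, Nat.sub_self, pow_succ,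
    show X ^ m * r - C (r.coeff 0) * X ^ m = X ^ m * (r - C (r.coeff 0)) by ring]
  exact mul_dvd_mul_left _ X_dvd_sub_C

lemma coeff_zero_eq_zero_and_coeff_one_eq {p : R[X]} {b : R} (hp : X ^ 2 ∣ p - C b * X) :
    p.coeff 0 = 0 ∧ p.coeff 1 = b := by
  rw [X_pow_dvd_iff] at hp
  have h0 := hp 0 (by norm_num)
  have h1 := hp 1 (by norm_num)
  simp only [coeff_sub, coeff_C_mul_X] at h0 h1
  exact ⟨by simpa using h0, by simpa [sub_eq_zero] using h1⟩

lemma X_pow_succ_dvd_pow_sub {p : R[X]} {b : R} (hp : X ^ 2 ∣ p - C b * X) (n : ℕ) :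
    X ^ (n + 1) ∣ p ^ n - C (b ^ n) * X ^ n := by
  obtain ⟨w, hw⟩ := hp
  have hpv : p = X * (C b + X * w) := by rw [eq_add_of_sub_eq hw]; ring
  have hv : X ∣ (C b + X * w) - C b := ⟨w, by ring⟩
  rw [show p ^ n - C (b ^ n) * X ^ n = X ^ n * ((C b + X * w) ^ n - C b ^ n) by
    rw [hpv, mul_pow, C_pow]; ring, pow_succ]
  exact mul_dvd_mul_left _ (hv.trans (sub_dvd_pow_sub_pow _ _ n))

lemma X_pow_dvd_C_mul_X_comp_sub {ℓ : ℕ} {b : R} {T : R[X]}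
    (hT : X ^ (ℓ + 2) ∣ T - X - C (b ^ ℓ) * X ^ (ℓ + 1)) :
    X ^ (ℓ + 2) ∣ (C b * X).comp T - C b * X - (C b * X) ^ (ℓ + 1) := by
  rw [show (C b * X : R[X]).comp T - C b * X - (C b * X) ^ (ℓ + 1)
      = C b * (T - X - C (b ^ ℓ) * X ^ (ℓ + 1)) by
    rw [mul_comp, C_comp, X_comp, mul_pow, ← C_pow, pow_succ, C_mul]; ring]
  exact dvd_mul_of_dvd_right hT _

lemma X_pow_dvd_pow_sub_X_pow_sub {ℓ k : ℕ} {a : R} {T : R[X]}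
    (hT : X ^ (ℓ + 2) ∣ T - X - C a * X ^ (ℓ + 1)) (hk : 1 ≤ k) (hkℓ : k ≤ ℓ + 1) :
    X ^ (k + ℓ + 1) ∣ T ^ k - X ^ k - C (k * a) * X ^ (k + ℓ) := by
  obtain ⟨j, rfl⟩ : ∃ j, k = j + 1 := ⟨k - 1, by omega⟩
  have hE : X ^ (ℓ + 1) ∣ T - X :=
    (sub_add_cancel (T - X) (C a * X ^ (ℓ + 1))) ▸
      dvd_add ((pow_dvd_pow X (by omega)).trans hT) (dvd_mul_left _ _)
  have hE2 : X ^ (j + 1 + ℓ + 1) ∣ (T - X) ^ 2 := by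
    refine (pow_dvd_pow X (by omega : j + 1 + ℓ + 1 ≤ (ℓ + 1) * 2)).trans ?_
    rw [pow_mul]
    exact pow_dvd_pow_of_dvd hE 2
  have hbinom := sq_dvd_add_pow_sub_sub (T - X) X (j + 1)
  rw [add_sub_cancel, Nat.add_sub_cancel] at hbinom
  rw [show T ^ (j + 1) - X ^ (j + 1) - C (↑(j + 1) * a) * X ^ (j + 1 + ℓ)
      = (T ^ (j + 1) - X ^ j * (T - X) * ↑(j + 1) - X ^ (j + 1))
        + X ^ j * (T - X - C a * X ^ (ℓ + 1)) * ↑(j + 1) by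
    rw [C_mul, map_natCast]; ring]
  refine dvd_add (hE2.trans hbinom) (dvd_mul_of_dvd_left ?_ _)
  rw [show j + 1 + ℓ + 1 = j + (ℓ + 2) by ring, pow_add]
  exact mul_dvd_mul_left _ hT

lemma X_pow_dvd_add_pow_sub_pow_sub {p : R[X]} {b : R} (hp : X ^ 2 ∣ p - C b * X) (c : R)
    {k : ℕ} (hk : 2 ≤ k) (n : ℕ) :
    X ^ (k + n + 1) ∣
      (p + C c * X ^ k) ^ (n + 1) - p ^ (n + 1) - C ((n + 1) * b ^ n * c) * X ^ (k + n) := by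
  obtain ⟨j, rfl⟩ : ∃ j, k = j + 2 := ⟨k - 2, by omega⟩
  obtain ⟨v, hpv⟩ : X ∣ p := by
    simpa using dvd_add ((dvd_pow_self X two_ne_zero).trans hp) (dvd_mul_left X (C b))
  -- Factoring `X` out of `p + c X^k` puts `X^{n+1}` in front of the quadratic remainder of the
  -- binomial expansion, which is what makes it vanish to order `k + n + 1` once `k ≥ 2`.
  have hbinom := sq_dvd_add_pow_sub_sub (C c * X ^ (j + 1)) v (n + 1)
  rw [Nat.add_sub_cancel] at hbinom
  have he2 : X ^ (2 * j + 2) ∣ (C c * X ^ (j + 1)) ^ 2 := by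
    rw [mul_pow, ← pow_mul]; exact dvd_mul_of_dvd_right (pow_dvd_pow X (by omega)) _
  have hsplit : (p + C c * X ^ (j + 2)) ^ (n + 1) - p ^ (n + 1)
        - C ((n + 1) * b ^ n * c) * X ^ (j + 2 + n)
      = X ^ (n + 1) * ((v + C c * X ^ (j + 1)) ^ (n + 1)
          - v ^ n * (C c * X ^ (j + 1)) * ((n + 1 : ℕ) : R[X]) - v ^ (n + 1))
        + X ^ (j + 2) * (p ^ n - C (b ^ n) * X ^ n) * (((n + 1 : ℕ) : R[X]) * C c) := by
    rw [show p + C c * X ^ (j + 2) = X * (v + C c * X ^ (j + 1)) by rw [hpv]; ring, mul_pow,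
      hpv, mul_pow]
    simp only [map_mul, map_add, map_natCast, map_one, map_pow, Nat.cast_add, Nat.cast_one]
    ring
  rw [hsplit]
  refine dvd_add ?_ (dvd_mul_of_dvd_left ?_ _)
  · refine (pow_dvd_pow X (by omega : j + 2 + n + 1 ≤ (n + 1) + (2 * j + 2))).trans ?_
    rw [pow_add]
    exact mul_dvd_mul_left _ (he2.trans hbinom)
  · rw [show j + 2 + n + 1 = (j + 2) + (n + 1) by ring, pow_add]
    exact mul_dvd_mul_left _ (X_pow_succ_dvd_pow_sub hp n)

end NormalForm

section NormalFormField

variable {K : Type*} [Field K] [CharZero K] {ℓ : ℕ} {b : K} {T : K[X]}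

lemma exists_X_pow_succ_dvd_comp_add_sub (hb : b ≠ 0)
    (hT : X ^ (ℓ + 2) ∣ T - X - C (b ^ ℓ) * X ^ (ℓ + 1)) {k : ℕ} (hk : 2 ≤ k) (hkℓ : k ≤ ℓ)
    {p : K[X]} (hp : X ^ 2 ∣ p - C b * X) (hD : X ^ (k + ℓ) ∣ p.comp T - p - p ^ (ℓ + 1)) :
    ∃ c : K, X ^ (k + ℓ + 1) ∣
      (p + C c * X ^ k).comp T - (p + C c * X ^ k) - (p + C c * X ^ k) ^ (ℓ + 1) := by
  set d := (p.comp T - p - p ^ (ℓ + 1)).coeff (k + ℓ)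
  have hℓk : (ℓ : K) + 1 - k ≠ 0 := by
    rw [← Nat.cast_one, ← Nat.cast_add, ← Nat.cast_sub (by omega)]
    exact Nat.cast_ne_zero.2 (by omega)
  set c := d / (b ^ ℓ * ((ℓ : K) + 1 - k))
  refine ⟨c, ?_⟩
  have hcancel : d + c * (k * b ^ ℓ) - (ℓ + 1) * b ^ ℓ * c = 0 := by
    simp only [c]; field_simp; ring
  have hsplit : (p + C c * X ^ k).comp T - (p + C c * X ^ k) - (p + C c * X ^ k) ^ (ℓ + 1)
      = (p.comp T - p - p ^ (ℓ + 1) - C d * X ^ (k + ℓ))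
        + C c * (T ^ k - X ^ k - C (k * b ^ ℓ) * X ^ (k + ℓ))
        - ((p + C c * X ^ k) ^ (ℓ + 1) - p ^ (ℓ + 1) - C ((ℓ + 1) * b ^ ℓ * c) * X ^ (k + ℓ))
        + C (d + c * (k * b ^ ℓ) - (ℓ + 1) * b ^ ℓ * c) * X ^ (k + ℓ) := by
    rw [add_comp, mul_comp, C_comp, X_pow_comp]
    simp only [map_add, map_sub, map_mul]
    ring
  rw [hsplit, hcancel, C_0, zero_mul, add_zero]
  exact dvd_sub (dvd_add (X_pow_succ_dvd_sub_C_coeff_mul hD)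
    (dvd_mul_of_dvd_right (X_pow_dvd_pow_sub_X_pow_sub hT (by omega) (by omega)) _))
    (X_pow_dvd_add_pow_sub_pow_sub hp c hk ℓ)

lemma exists_X_pow_dvd_comp_sub (hb : b ≠ 0)
    (hT : X ^ (ℓ + 2) ∣ T - X - C (b ^ ℓ) * X ^ (ℓ + 1)) {k : ℕ} (hk : 1 ≤ k) :
    k ≤ ℓ → ∃ p : K[X], X ^ 2 ∣ p - C b * X ∧ X ^ (k + ℓ + 1) ∣ p.comp T - p - p ^ (ℓ + 1) := by
  induction k, hk using Nat.le_induction with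
  | base =>
    exact fun _ => ⟨C b * X, by simp, by
      rw [show 1 + ℓ + 1 = ℓ + 2 by ring]; exact X_pow_dvd_C_mul_X_comp_sub hT⟩
  | succ k hk ih =>
    intro hkℓ
    obtain ⟨p, hp, hD⟩ := ih (by omega)
    obtain ⟨c, hc⟩ := exists_X_pow_succ_dvd_comp_add_sub hb hT (by omega) hkℓ hp
      (by rwa [add_right_comm] at hD)
    refine ⟨p + C c * X ^ (k + 1), ?_, hc⟩
    rw [add_sub_right_comm]
    exact dvd_add hp (dvd_mul_of_dvd_right (pow_dvd_pow X (by omega)) _)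

theorem exists_X_pow_dvd_comp_sub_normalForm (hℓ : 1 ≤ ℓ) (hb : b ≠ 0)
    (hT : X ^ (ℓ + 2) ∣ T - X - C (b ^ ℓ) * X ^ (ℓ + 1)) :
    ∃ (p : K[X]) (μ : K), X ^ 2 ∣ p - C b * X ∧
      X ^ (2 * ℓ + 2) ∣ p.comp T - (p + p ^ (ℓ + 1) + C μ * p ^ (2 * ℓ + 1)) := by
  obtain ⟨p, hp, hD⟩ := exists_X_pow_dvd_comp_sub hb hT hℓ le_rfl
  rw [show ℓ + ℓ + 1 = 2 * ℓ + 1 by ring] at hD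
  set d := (p.comp T - p - p ^ (ℓ + 1)).coeff (2 * ℓ + 1)
  refine ⟨p, d / b ^ (2 * ℓ + 1), hp, ?_⟩
  have hsplit : p.comp T - (p + p ^ (ℓ + 1) + C (d / b ^ (2 * ℓ + 1)) * p ^ (2 * ℓ + 1))
      = (p.comp T - p - p ^ (ℓ + 1) - C d * X ^ (2 * ℓ + 1))
        - C (d / b ^ (2 * ℓ + 1)) * (p ^ (2 * ℓ + 1) - C (b ^ (2 * ℓ + 1)) * X ^ (2 * ℓ + 1)) := by
    rw [mul_sub, ← mul_assoc, ← C_mul, div_mul_cancel₀ _ (pow_ne_zero _ hb)]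
    ring
  rw [hsplit]
  exact dvd_sub (X_pow_succ_dvd_sub_C_coeff_mul hD)
    (dvd_mul_of_dvd_right (X_pow_succ_dvd_pow_sub hp _) _)

end NormalFormField

section Asymptotics

variable {𝕜 : Type*} [NontriviallyNormedField 𝕜]

lemma Polynomial.isBigO_eval_sub_eval {α : Type*} {l : Filter α} (p : 𝕜[X]) {u v : α → 𝕜}
    {x₀ : 𝕜} (hu : Tendsto u l (𝓝 x₀)) (hv : Tendsto v l (𝓝 x₀)) :
    (fun x => p.eval (u x) - p.eval (v x)) =O[l] fun x => u x - v x :=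
  (p.hasStrictDerivAt x₀).hasStrictFDerivAt.isBigO_sub.comp_tendsto (hu.prodMk_nhds hv)

lemma Polynomial.isLittleO_eval_of_X_pow_succ_dvd {P : 𝕜[X]} {m : ℕ} (h : X ^ (m + 1) ∣ P) :
    (fun x => P.eval x) =o[𝓝 0] fun x => x ^ m := by
  obtain ⟨S, rfl⟩ := h
  simpa using (isLittleO_pow_pow (Nat.lt_succ_self m)).mul_isBigO
    ((S.continuous.tendsto 0).isBigO_one 𝕜)

lemma isLittleO_eval_sub_of_X_pow_succ_dvd_comp_sub {l : Filter 𝕜} (hl : l ≤ 𝓝 0)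
    {f : 𝕜 → 𝕜} {T p P : 𝕜[X]} {n : ℕ} (hfT : (fun x => f x - T.eval x) =o[l] fun x => x ^ n)
    (hdvd : X ^ (n + 1) ∣ p.comp T - P) :
    (fun x => p.eval (f x) - P.eval x) =o[l] fun x => x ^ n := by
  have hT : Tendsto T.eval l (𝓝 (T.eval 0)) := (T.continuous.tendsto 0).mono_left hl
  have hf : Tendsto f l (𝓝 (T.eval 0)) := by
    have hpow : (fun x : 𝕜 => x ^ n) =O[l] fun _ => (1 : 𝕜) :=
      (((continuous_pow n).tendsto 0).isBigO_one 𝕜).mono hl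
    simpa using ((isLittleO_one_iff 𝕜).1 (hfT.trans_isBigO hpow)).add hT
  have hcomp := (isLittleO_eval_of_X_pow_succ_dvd hdvd).mono hl
  refine ((p.isBigO_eval_sub_eval hf hT).trans_isLittleO hfT |>.add hcomp).congr_left ?_
  intro x
  simp only [eval_sub, eval_comp]
  ring

end Asymptotics

section Taylor

variable {f : ℝ → ℝ} {s : Set ℝ}

lemma exists_polynomial_isLittleO_taylorWithin (hs : Convex ℝ s) (h0 : 0 ∈ s) {n : ℕ}
    (hf : ContDiffOn ℝ n f s) :
    ∃ T : ℝ[X], (∀ k ≤ n, T.coeff k = iteratedDerivWithin k f s 0 / k !) ∧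
      (fun x => f x - T.eval x) =o[𝓝[s] 0] fun x => x ^ n := by
  refine ⟨∑ k ∈ Finset.range (n + 1), C (iteratedDerivWithin k f s 0 / k !) * X ^ k,
    fun k hk => ?_, ?_⟩
  · simp [finsetSum_coeff, coeff_C_mul, coeff_X_pow, Nat.lt_succ_of_le hk]
  · refine (taylor_isLittleO hs h0 hf).congr (fun x => ?_) (fun x => by rw [sub_zero])
    simp only [taylor_within_apply, eval_finsetSum, eval_mul, eval_C, eval_pow, eval_X, sub_zero,
      smul_eq_mul]
    congr 1
    exact Finset.sum_congr rfl fun k _ => by ring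

lemma X_pow_dvd_sub_of_tangent {ℓ : ℕ} (hℓ : 1 ≤ ℓ) {T : ℝ[X]}
    (hT : ∀ k ≤ ℓ + 1, T.coeff k = iteratedDerivWithin k f s 0 / k !) (hf0 : f 0 = 0)
    (hf1 : iteratedDerivWithin 1 f s 0 = 1)
    (hfj : ∀ j, 2 ≤ j → j ≤ ℓ → iteratedDerivWithin j f s 0 = 0) :
    X ^ (ℓ + 2) ∣ T - X - C (iteratedDerivWithin (ℓ + 1) f s 0 / (ℓ + 1)!) * X ^ (ℓ + 1) := by
  rw [X_pow_dvd_iff]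
  intro d hd
  rw [coeff_sub, coeff_sub, coeff_X, coeff_C_mul_X_pow, hT d (by omega)]
  rcases Nat.lt_or_ge d 2 with hd2 | hd2
  · interval_cases d <;> simp [hf0, hf1]; omega
  rcases Nat.lt_or_ge d (ℓ + 1) with hdℓ | hdℓ
  · simp [hfj d hd2 (by omega), show d ≠ ℓ + 1 by omega, show 1 ≠ d by omega]
  · obtain rfl : d = ℓ + 1 := by omega
    simp; omega

end Taylor

/-- Reduction lemma: an expanding `C^{2ℓ+1}` germ exactly `ℓ`-tangent to the identity is
conjugate by a polynomial germ of diffeomorphism to a germ of the reduced form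
`x ↦ x + x^{ℓ+1} + μx^{2ℓ+1} + o(x^{2ℓ+1})`. Derivatives at `0` are one-sided. -/
theorem stmt_7 (ℓ : ℕ) (hℓ : 1 ≤ ℓ) (ε : ℝ) (hε : 0 < ε) (f : ℝ → ℝ)
    (hf : ContDiffOn ℝ (2 * ℓ + 1 : ℕ) f (Set.Ico 0 ε)) (hf0 : f 0 = 0)
    (hf1 : iteratedDerivWithin 1 f (Set.Ico 0 ε) 0 = 1)
    (hfj : ∀ j, 2 ≤ j → j ≤ ℓ → iteratedDerivWithin j f (Set.Ico 0 ε) 0 = 0)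
    (hfl : 0 < iteratedDerivWithin (ℓ + 1) f (Set.Ico 0 ε) 0) :
    ∃ (p : Polynomial ℝ) (μ : ℝ),
      p.eval 0 = 0 ∧ 0 < p.derivative.eval 0 ∧
      Asymptotics.IsLittleO (nhdsWithin 0 (Set.Ioi 0))
        (fun x : ℝ => p.eval (f x)
          - (p.eval x + (p.eval x) ^ (ℓ + 1) + μ * (p.eval x) ^ (2 * ℓ + 1)))
        (fun x : ℝ => x ^ (2 * ℓ + 1)) := by
  obtain ⟨T, hTcoeff, hfT⟩ :=
    exists_polynomial_isLittleO_taylorWithin (convex_Ico 0 ε) (Set.left_mem_Ico.2 hε) hf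
  have hT := X_pow_dvd_sub_of_tangent hℓ (fun k hk => hTcoeff k (by omega)) hf0 hf1 hfj
  set a := iteratedDerivWithin (ℓ + 1) f (Set.Ico 0 ε) 0 / (ℓ + 1)!
  have ha : 0 < a := by positivity
  rw [← Real.rpow_inv_natCast_pow ha.le (by omega : ℓ ≠ 0)] at hT
  obtain ⟨p, μ, hp, hdvd⟩ := exists_X_pow_dvd_comp_sub_normalForm hℓ (by positivity) hT
  obtain ⟨hp0, hp1⟩ := coeff_zero_eq_zero_and_coeff_one_eq hp
  refine ⟨p, μ, by rwa [← coeff_zero_eq_eval_zero], ?_, ?_⟩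
  · rw [← coeff_zero_eq_eval_zero, coeff_derivative, hp1]
    positivity
  have hIco : Set.Ico 0 ε ∈ 𝓝[>] (0 : ℝ) :=
    Filter.mem_of_superset (Ioo_mem_nhdsGT hε) Set.Ioo_subset_Ico_self
  have hpf := isLittleO_eval_sub_of_X_pow_succ_dvd_comp_sub nhdsWithin_le_nhds hfT hdvd
  exact (hpf.mono (nhdsWithin_le_of_mem hIco)).congr_left fun x => by simp
end

section
/- (Necessity in Proposition on C¹ conjugacy of flat vector fields.) Let ε > 0, let X, Y : (0,ε) → ℝ be continuous, and let r ≥ 1, s ≥ 1 be real numbers and α, β nonzero real numbers of the same sign such that X(x)/x^r → α and Y(x)/x^s → β as x → 0⁺. Suppose h : [0,ε) → ℝ is of class C¹ with h(0) = 0, h'(0) ≠ 0, h((0,ε)) ⊆ (0,ε), and X(x)·h'(x) = Y(h(x)) for all x ∈ (0,ε) (h conjugates the vector field X to the vector field Y). Then r = s. Moreover, if r = s = 1, then additionally α = β. -/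
/-!
Let `c = h'(0)`, which is positive since `h` maps `(0, ε)` into itself. Dividing the conjugacy
equation `X(x) h'(x) = Y(h(x))` by `x^r` and by `h(x)^s` gives
`x^(s-r) = (X(x)/x^r) h'(x) / ((Y(h(x))/h(x)^s) (h(x)/x)^s)`, and since `h(x)/x → c` and
`h'(x) → c` the right side tends to `αc/(βc^s) ≠ 0`. A power `x^a` has a finite nonzero limit at
`0⁺` only when `a = 0`, so `r = s`; when `r = s = 1` that limit `αc/(βc)` must be `1`.
-/

open Filter Set Topology

lemma eq_zero_of_tendsto_rpow_nhdsGT {a L : ℝ} (hL : L ≠ 0)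
    (h : Tendsto (fun x : ℝ => x ^ a) (𝓝[>] 0) (𝓝 L)) : a = 0 := by
  rcases lt_trichotomy a 0 with ha | ha | ha
  · exact absurd h (not_tendsto_nhds_of_tendsto_atTop (tendsto_rpow_neg_nhdsGT_zero ha) L)
  · exact ha
  · have h0 : Tendsto (fun x : ℝ => x ^ a) (𝓝[>] 0) (𝓝 0) := by
      simpa [Real.zero_rpow ha.ne'] using
        (Real.continuousAt_rpow_const 0 a (Or.inr ha.le)).tendsto.mono_left nhdsWithin_le_nhds
    exact absurd (tendsto_nhds_unique h h0) hL

lemma tendsto_div_nhdsGT_of_hasDerivWithinAt {f : ℝ → ℝ} {c : ℝ}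
    (hf : HasDerivWithinAt f c (Ioi 0) 0) (hf0 : f 0 = 0) :
    Tendsto (fun x => f x / x) (𝓝[>] 0) (𝓝 c) := by
  refine ((hasDerivWithinAt_iff_tendsto_slope' (lt_irrefl 0)).mp hf).congr fun x => ?_
  simp [slope, hf0, div_eq_inv_mul]

lemma tendsto_nhdsGT_of_tendsto_div {f : ℝ → ℝ} {c : ℝ}
    (hf : Tendsto (fun x => f x / x) (𝓝[>] 0) (𝓝 c)) (hpos : ∀ᶠ x in 𝓝[>] 0, 0 < f x) :
    Tendsto f (𝓝[>] 0) (𝓝[>] 0) := by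
  refine tendsto_nhdsWithin_of_tendsto_nhds_of_eventually_within _ ?_ hpos
  have hprod := hf.mul (tendsto_id.mono_left nhdsWithin_le_nhds : Tendsto id (𝓝[>] (0 : ℝ)) (𝓝 0))
  rw [mul_zero] at hprod
  refine hprod.congr' ?_
  filter_upwards [self_mem_nhdsWithin] with x hx
  exact div_mul_cancel₀ _ (ne_of_gt hx)

lemma tendsto_rpow_sub_of_conj {X Y h h' : ℝ → ℝ} {r s α β c : ℝ} (hβ : β ≠ 0) (hc : 0 < c)
    (hX : Tendsto (fun x => X x / x ^ r) (𝓝[>] 0) (𝓝 α))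
    (hY : Tendsto (fun y => Y y / y ^ s) (𝓝[>] 0) (𝓝 β))
    (hh : Tendsto h (𝓝[>] 0) (𝓝[>] 0)) (hslope : Tendsto (fun x => h x / x) (𝓝[>] 0) (𝓝 c))
    (hh' : Tendsto h' (𝓝[>] 0) (𝓝 c)) (hconj : ∀ᶠ x in 𝓝[>] 0, X x * h' x = Y (h x)) :
    Tendsto (fun x => x ^ (s - r)) (𝓝[>] 0) (𝓝 (α * c / (β * c ^ s))) := by
  have hYh : Tendsto (fun x => Y (h x) / h x ^ s) (𝓝[>] 0) (𝓝 β) := hY.comp hh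
  have hslope_s : Tendsto (fun x => (h x / x) ^ s) (𝓝[>] 0) (𝓝 (c ^ s)) :=
    (Real.continuousAt_rpow_const c s (Or.inl hc.ne')).tendsto.comp hslope
  refine ((hX.mul hh').div (hYh.mul hslope_s)
    (mul_ne_zero hβ (Real.rpow_pos_of_pos hc s).ne')).congr' ?_
  filter_upwards [self_mem_nhdsWithin, hh.eventually self_mem_nhdsWithin,
    hYh.eventually_ne hβ, hconj] with x (hx : 0 < x) (hhx : 0 < h x) hYx hconjx
  have hYhx : Y (h x) ≠ 0 := (div_ne_zero_iff.mp hYx).1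
  rw [Pi.div_apply, Real.rpow_sub hx, Real.div_rpow hhx.le hx.le]
  field_simp
  linear_combination hconjx

theorem stmt_12_general (ε : ℝ) (hε : 0 < ε) (X Y : ℝ → ℝ)
    (r s : ℝ) (α β : ℝ) (hαβ : 0 < α * β)
    (hXa : Filter.Tendsto (fun x : ℝ => X x / x ^ r) (nhdsWithin 0 (Set.Ioi 0)) (nhds α))
    (hYa : Filter.Tendsto (fun x : ℝ => Y x / x ^ s) (nhdsWithin 0 (Set.Ioi 0)) (nhds β))
    (h : ℝ → ℝ) (hh : ContDiffOn ℝ 1 h (Set.Ico 0 ε)) (hh0 : h 0 = 0)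
    (hh' : derivWithin h (Set.Ico 0 ε) 0 ≠ 0)
    (hmaps : Set.MapsTo h (Set.Ioo 0 ε) (Set.Ioo 0 ε))
    (hconj : ∀ x ∈ Set.Ioo (0 : ℝ) ε, X x * derivWithin h (Set.Ico 0 ε) x = Y (h x)) :
    r = s ∧ (r = 1 ∧ s = 1 → α = β) := by
  have hα : α ≠ 0 := left_ne_zero_of_mul hαβ.ne'
  have hβ : β ≠ 0 := right_ne_zero_of_mul hαβ.ne'
  set c := derivWithin h (Ico 0 ε) 0
  have h0 : (0 : ℝ) ∈ Ico 0 ε := ⟨le_rfl, hε⟩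
  have hIoo : Ioo (0 : ℝ) ε ∈ 𝓝[>] 0 := Ioo_mem_nhdsGT hε
  have hIco : Ico (0 : ℝ) ε ∈ 𝓝[>] 0 := mem_of_superset hIoo Ioo_subset_Ico_self
  have hderiv : HasDerivWithinAt h c (Ioi 0) 0 :=
    ((hh.differentiableOn one_ne_zero 0 h0).hasDerivWithinAt).mono_of_mem_nhdsWithin hIco
  have hslope := tendsto_div_nhdsGT_of_hasDerivWithinAt hderiv hh0
  have hc : 0 < c := by
    refine (ge_of_tendsto hslope ?_).lt_of_ne' hh'
    filter_upwards [hIoo] with x hx using (div_pos (hmaps hx).1 hx.1).le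
  have hh'c : Tendsto (derivWithin h (Ico 0 ε)) (𝓝[>] 0) (𝓝 c) :=
    ((hh.continuousOn_derivWithin (uniqueDiffOn_Ico 0 ε) le_rfl) 0 h0).tendsto.mono_left
      (nhdsWithin_le_of_mem hIco)
  have hlim := tendsto_rpow_sub_of_conj hβ hc hXa hYa
    (tendsto_nhdsGT_of_tendsto_div hslope (mem_of_superset hIoo fun x hx => (hmaps hx).1))
    hslope hh'c (mem_of_superset hIoo hconj)
  have hsr : s - r = 0 := eq_zero_of_tendsto_rpow_nhdsGT
    (div_ne_zero (mul_ne_zero hα hc.ne') (mul_ne_zero hβ (Real.rpow_pos_of_pos hc s).ne')) hlim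
  refine ⟨by linarith, fun ⟨_, hs1⟩ => ?_⟩
  have hone : α * c / (β * c ^ s) = 1 := tendsto_nhds_unique hlim (by simp [hsr])
  rw [hs1, Real.rpow_one] at hone
  rwa [mul_div_mul_right _ _ hc.ne', div_eq_one_iff_eq hβ] at hone

/-- Necessity in the proposition on `C¹` conjugacy of flat vector fields: if `X ∼ αx^r` and
`Y ∼ βx^s` at `0⁺` (with `α, β` nonzero of the same sign, `r, s ≥ 1`) are conjugated by a
germ of `C¹` diffeomorphism, then `r = s`; and if moreover `r = s = 1`, then `α = β`. -/
theorem stmt_12 (ε : ℝ) (hε : 0 < ε) (X Y : ℝ → ℝ)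
    (hX : ContinuousOn X (Set.Ioo 0 ε)) (hY : ContinuousOn Y (Set.Ioo 0 ε))
    (r s : ℝ) (hr : 1 ≤ r) (hs : 1 ≤ s) (α β : ℝ) (hαβ : 0 < α * β)
    (hXa : Filter.Tendsto (fun x : ℝ => X x / x ^ r) (nhdsWithin 0 (Set.Ioi 0)) (nhds α))
    (hYa : Filter.Tendsto (fun x : ℝ => Y x / x ^ s) (nhdsWithin 0 (Set.Ioi 0)) (nhds β))
    (h : ℝ → ℝ) (hh : ContDiffOn ℝ 1 h (Set.Ico 0 ε)) (hh0 : h 0 = 0)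
    (hh' : derivWithin h (Set.Ico 0 ε) 0 ≠ 0)
    (hmaps : Set.MapsTo h (Set.Ioo 0 ε) (Set.Ioo 0 ε))
    (hconj : ∀ x ∈ Set.Ioo (0 : ℝ) ε, X x * derivWithin h (Set.Ico 0 ε) x = Y (h x)) :
    r = s ∧ (r = 1 ∧ s = 1 → α = β) :=
  stmt_12_general ε hε X Y r s α β hαβ hXa hYa h hh hh0 hh' hmaps hconj
end

section
/- (Sufficiency in Proposition on C¹ conjugacy of flat vector fields.) Let ε > 0, let r > 1 be a real number, and let α, β be nonzero real numbers of the same sign. Let X, Y : [0,ε) → ℝ be continuous with X(x)/x^r → α and Y(x)/x^r → β as x → 0⁺. Then there exist δ > 0 and a strictly increasing map h : [0,δ) → ℝ of class C¹ (including at 0, with one-sided derivative) with h(0) = 0, h'(0) > 0, h((0,δ)) ⊆ (0,ε), and X(x)·h'(x) = Y(h(x)) for all x ∈ [0,δ). (Two continuous vector fields, both contracting or both expanding, that are equivalent to nonzero multiples of x^r at 0 with r > 1, are conjugate by a germ of C¹ diffeomorphism.) -/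
/-!
Replacing `X, Y` by `-X, -Y` when `α, β < 0` and shrinking to a small interval `(0, a]`, both
fields are positive there. The time `T_X x = ∫_x^a dt / X t` that the
flow of `X` needs to go from `x` to `a` is a strictly decreasing bijection `(0, a] → [0, ∞)`
with `T_X' = -1 / X`, and `h = T_Y⁻¹ ∘ T_X` matches orbits of `X` with orbits of `Y` at equal
times, hence `X h' = Y ∘ h` on `(0, a)`. Since `X ~ α x^r`, an integral comparison gives
`T_X x ~ x^(1-r) / (α (r - 1))`; comparing with `T_Y (h x) = T_X x` yields
`h x / x → c := (α / β)^(1/(r-1))`, and then `h' x = Y (h x) / X x ~ β (c x)^r / (α x^r) = c`.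
So `h` is `C¹` up to `0` with `h' 0 = c > 0`.
-/

open Set Filter Asymptotics MeasureTheory intervalIntegral
open scoped Topology

namespace Asymptotics

variable {f g : ℝ → ℝ} {x₀ a : ℝ}

theorem IsLittleO.intervalIntegral_nhdsGT (ha : x₀ < a)
    (hf : ∀ x ∈ Ioc x₀ a, IntervalIntegrable f volume x a)
    (hg : ∀ x ∈ Ioc x₀ a, IntervalIntegrable g volume x a)
    (hg_nonneg : ∀ x ∈ Ioc x₀ a, 0 ≤ g x)
    (hg_top : Tendsto (fun x => ∫ t in x..a, g t) (𝓝[>] x₀) atTop)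
    (hfg : f =o[𝓝[>] x₀] g) :
    (fun x => ∫ t in x..a, f t) =o[𝓝[>] x₀] fun x => ∫ t in x..a, g t := by
  -- On `[x, b]` the integrand is bounded by `c/2 • g`; the fixed remainder `∫_b^a f` is
  -- eventually below `c/2 • ∫_x^a g` because the latter tends to infinity.
  refine IsLittleO.of_bound fun c hc => ?_
  obtain ⟨u, hu, hfg_u⟩ := mem_nhdsGT_iff_exists_Ioc_subset.1 (hfg.bound (half_pos hc))
  set b := min u a
  have hb : b ∈ Ioc x₀ a := ⟨lt_min hu ha, min_le_right u a⟩
  filter_upwards [Ioo_mem_nhdsGT hb.1,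
    hg_top.eventually_ge_atTop (‖∫ t in b..a, f t‖ / (c / 2))] with x hx hx_top
  have hxa : x ∈ Ioc x₀ a := ⟨hx.1, hx.2.le.trans hb.2⟩
  have hsub : uIcc x b ⊆ uIcc x a := by
    rw [uIcc_of_le hx.2.le, uIcc_of_le hxa.2]
    exact Icc_subset_Icc_right hb.2
  have hg_xb : IntervalIntegrable g volume x b := (hg x hxa).mono_set hsub
  have hf_split := integral_add_adjacent_intervals ((hf x hxa).mono_set hsub) (hf b hb)
  have hg_split := integral_add_adjacent_intervals hg_xb (hg b hb)
  have hg_xb_nonneg : 0 ≤ ∫ t in x..b, g t :=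
    integral_nonneg hx.2.le fun t ht => hg_nonneg t ⟨hx.1.trans_le ht.1, ht.2.trans hb.2⟩
  have hg_ba_nonneg : 0 ≤ ∫ t in b..a, g t :=
    integral_nonneg hb.2 fun t ht => hg_nonneg t ⟨hb.1.trans_le ht.1, ht.2⟩
  have hnear : ‖∫ t in x..b, f t‖ ≤ c / 2 * ∫ t in x..b, g t := by
    rw [← intervalIntegral.integral_const_mul]
    refine norm_integral_le_of_norm_le hx.2.le (ae_of_all _ fun t ht => ?_) (hg_xb.const_mul _)
    have hgt := hg_nonneg t ⟨hx.1.trans ht.1, ht.2.trans hb.2⟩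
    simpa [abs_of_nonneg hgt] using hfg_u ⟨hx.1.trans ht.1, ht.2.trans (min_le_left u a)⟩
  have hfar : ‖∫ t in b..a, f t‖ ≤ c / 2 * ∫ t in x..a, g t :=
    (div_le_iff₀' (half_pos hc)).1 hx_top
  rw [← hf_split, ← hg_split, Real.norm_of_nonneg (add_nonneg hg_xb_nonneg hg_ba_nonneg)]
  rw [← hg_split] at hfar
  nlinarith [norm_add_le (∫ t in x..b, f t) (∫ t in b..a, f t)]

theorem IsEquivalent.intervalIntegral_nhdsGT (ha : x₀ < a)
    (hf : ∀ x ∈ Ioc x₀ a, IntervalIntegrable f volume x a)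
    (hg : ∀ x ∈ Ioc x₀ a, IntervalIntegrable g volume x a)
    (hg_nonneg : ∀ x ∈ Ioc x₀ a, 0 ≤ g x)
    (hg_top : Tendsto (fun x => ∫ t in x..a, g t) (𝓝[>] x₀) atTop)
    (hfg : f ~[𝓝[>] x₀] g) :
    (fun x => ∫ t in x..a, f t) ~[𝓝[>] x₀] fun x => ∫ t in x..a, g t := by
  refine (hfg.isLittleO.intervalIntegral_nhdsGT ha (fun x hx => (hf x hx).sub (hg x hx))
    hg hg_nonneg hg_top).congr' ?_ EventuallyEq.rfl
  filter_upwards [Ioo_mem_nhdsGT ha] with x hx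
  exact integral_sub (hf x ⟨hx.1, hx.2.le⟩) (hg x ⟨hx.1, hx.2.le⟩)

theorem isEquivalent_const_mul_of_tendsto_div {ι : Type*} {l : Filter ι} {u v : ι → ℝ}
    {c : ℝ} (hc : c ≠ 0) (hv : ∀ᶠ i in l, v i ≠ 0)
    (huv : Tendsto (fun i => u i / v i) l (𝓝 c)) :
    u ~[l] fun i => c * v i := by
  refine isEquivalent_of_tendsto_one ?_
  rw [← div_self hc]
  refine (huv.div_const c).congr' ?_
  filter_upwards [hv] with i hi
  simp only [Pi.div_apply]
  field_simp

end Asymptotics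

theorem tendsto_rpow_nhdsGT_zero {p : ℝ} (hp : 0 < p) :
    Tendsto (fun x : ℝ => x ^ p) (𝓝[>] 0) (𝓝 0) := by
  simpa [Real.zero_rpow hp.ne'] using
    (Real.continuousAt_rpow_const 0 p (Or.inr hp.le)).tendsto.mono_left nhdsWithin_le_nhds

section PowerIntegral

variable {a r : ℝ}

theorem integral_rpow_neg_mul_rpow (ha : 0 < a) (hr : 1 < r) {x : ℝ} (hx : 0 < x) :
    (∫ t in x..a, t ^ (-r)) * x ^ (r - 1) = (1 - a ^ (1 - r) * x ^ (r - 1)) / (r - 1) := by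
  have hx0 : (0 : ℝ) ∉ uIcc x a := fun h0 => (lt_min hx ha).not_ge h0.1
  rw [integral_rpow (Or.inr ⟨by linarith, hx0⟩), show -r + 1 = 1 - r by ring]
  have hxx : x ^ (1 - r) * x ^ (r - 1) = 1 := by
    rw [← Real.rpow_add hx]; simp
  have hr1 : 1 - r ≠ 0 := by linarith
  have hr1' : r - 1 ≠ 0 := by linarith
  rw [div_mul_eq_mul_div, sub_mul, hxx, div_eq_div_iff hr1 hr1']
  ring

theorem tendsto_integral_rpow_neg_mul_rpow (ha : 0 < a) (hr : 1 < r) :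
    Tendsto (fun x => (∫ t in x..a, t ^ (-r)) * x ^ (r - 1)) (𝓝[>] 0) (𝓝 (r - 1)⁻¹) := by
  have hlim := ((tendsto_rpow_nhdsGT_zero (sub_pos.2 hr)).const_mul (a ^ (1 - r))).const_sub 1
  rw [mul_zero, sub_zero] at hlim
  rw [inv_eq_one_div]
  refine (hlim.div_const (r - 1)).congr' ?_
  filter_upwards [self_mem_nhdsWithin] with x hx
  exact (integral_rpow_neg_mul_rpow ha hr hx).symm

theorem tendsto_integral_rpow_neg_atTop (ha : 0 < a) (hr : 1 < r) :
    Tendsto (fun x => ∫ t in x..a, t ^ (-r)) (𝓝[>] 0) atTop := by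
  refine ((tendsto_integral_rpow_neg_mul_rpow ha hr).pos_mul_atTop (inv_pos.2 (sub_pos.2 hr))
    (tendsto_rpow_neg_nhdsGT_zero (by linarith : 1 - r < 0))).congr' ?_
  filter_upwards [self_mem_nhdsWithin] with x hx
  rw [mul_assoc, ← Real.rpow_add hx]
  simp

end PowerIntegral

theorem StrictAntiOn.continuousAt_of_image_mem_nhds {α β : Type*} [LinearOrder α]
    [TopologicalSpace α] [OrderTopology α] [LinearOrder β] [TopologicalSpace β] [OrderTopology β]
    [DenselyOrdered β] {f : α → β} {s : Set α} {x : α} (hf : StrictAntiOn f s) (hs : s ∈ 𝓝 x)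
    (hfs : f '' s ∈ 𝓝 (f x)) : ContinuousAt f x :=
  StrictMonoOn.continuousAt_of_image_mem_nhds (f := fun x => OrderDual.toDual (f x))
    hf.dual_right hs hfs

section OneSidedDerivative

variable {f f' : ℝ → ℝ} {b c L : ℝ}

theorem hasDerivWithinAt_Ici_of_tendsto_div (h0 : f 0 = 0)
    (hf : Tendsto (fun x => f x / x) (𝓝[>] 0) (𝓝 L)) : HasDerivWithinAt f L (Ici 0) 0 := by
  rw [← hasDerivWithinAt_Ioi_iff_Ici, hasDerivWithinAt_iff_tendsto_slope' self_notMem_Ioi]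
  refine hf.congr fun x => ?_
  simp [slope_def_field, h0]

theorem contDiffOn_one_Ico_of_tendsto_deriv (h0 : HasDerivWithinAt f L (Ici b) b)
    (hd : ∀ x ∈ Ioo b c, HasDerivAt f (f' x) x) (hf' : ContinuousOn f' (Ioo b c))
    (hlim : Tendsto f' (𝓝[>] b) (𝓝 L)) : ContDiffOn ℝ 1 f (Ico b c) := by
  set g := Function.update f' b L
  have hg_of_ne {x : ℝ} (hx : x ≠ b) : g x = f' x := Function.update_of_ne hx _ _
  have hderiv : ∀ x ∈ Ico b c, HasDerivWithinAt f (g x) (Ico b c) x := by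
    rintro x ⟨hbx, hxc⟩
    rcases hbx.eq_or_lt with rfl | hbx
    · simpa [g] using h0.mono Ico_subset_Ici_self
    · rw [hg_of_ne hbx.ne']
      exact (hd x ⟨hbx, hxc⟩).hasDerivWithinAt
  have hg : ContinuousOn g (Ico b c) := by
    rintro x ⟨hbx, hxc⟩
    rcases hbx.eq_or_lt with rfl | hbx
    · have hb : ContinuousWithinAt g (Ioi b) b := by
        simpa [ContinuousWithinAt, g] using
          hlim.congr' (eventually_mem_nhdsWithin.mono fun y (hy : y ∈ Ioi b) =>
            (hg_of_ne (ne_of_gt hy)).symm)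
      exact (continuousWithinAt_Ioi_iff_Ici.1 hb).mono Ico_subset_Ici_self
    · refine ((hf'.continuousAt (Ioo_mem_nhds hbx hxc)).congr ?_).continuousWithinAt
      exact eventually_of_mem (Ioi_mem_nhds hbx) fun y hy => (hg_of_ne (ne_of_gt hy)).symm
  have hC1 := (contDiffOn_succ_iff_derivWithin (n := 0) (uniqueDiffOn_Ico b c)).2
    ⟨fun x hx => (hderiv x hx).differentiableWithinAt, by simp,
      contDiffOn_zero.2 (hg.congr fun x hx =>
        (hderiv x hx).derivWithin (uniqueDiffOn_Ico b c x hx))⟩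
  simpa using hC1

end OneSidedDerivative

noncomputable def flowTime (X : ℝ → ℝ) (a x : ℝ) : ℝ := ∫ t in x..a, (X t)⁻¹

structure IsFlatExpanding (X : ℝ → ℝ) (a r α : ℝ) : Prop where
  continuousOn : ContinuousOn X (Ioc 0 a)
  pos : ∀ x ∈ Ioc 0 a, 0 < X x
  one_lt : 1 < r
  coeff_pos : 0 < α
  tendsto_div_rpow : Tendsto (fun x => X x / x ^ r) (𝓝[>] 0) (𝓝 α)

@[simp]
theorem flowTime_self (X : ℝ → ℝ) (a : ℝ) : flowTime X a a = 0 := integral_same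

namespace IsFlatExpanding

variable {X : ℝ → ℝ} {a r α : ℝ}

theorem continuousOn_inv (hX : IsFlatExpanding X a r α) :
    ContinuousOn (fun t => (X t)⁻¹) (Ioc 0 a) :=
  hX.continuousOn.inv₀ fun t ht => (hX.pos t ht).ne'

theorem intervalIntegrable_inv (hX : IsFlatExpanding X a r α) {x y : ℝ} (hx : 0 < x)
    (hxy : x ≤ y) (hy : y ≤ a) : IntervalIntegrable (fun t => (X t)⁻¹) volume x y := by
  refine (hX.continuousOn_inv.mono ?_).intervalIntegrable
  rw [uIcc_of_le hxy]
  exact fun t ht => ⟨hx.trans_le ht.1, ht.2.trans hy⟩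

theorem flowTime_nonneg (hX : IsFlatExpanding X a r α) {x : ℝ} (hx : x ∈ Ioc 0 a) :
    0 ≤ flowTime X a x :=
  integral_nonneg hx.2 fun t ht => (inv_pos.2 (hX.pos t ⟨hx.1.trans_le ht.1, ht.2⟩)).le

theorem strictAntiOn_flowTime (hX : IsFlatExpanding X a r α) :
    StrictAntiOn (flowTime X a) (Ioc 0 a) := by
  intro x hx y hy hxy
  have hxy_pos : 0 < ∫ t in x..y, (X t)⁻¹ :=
    intervalIntegral_pos_of_pos_on (hX.intervalIntegrable_inv hx.1 hxy.le hy.2)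
      (fun t ht => inv_pos.2 (hX.pos t ⟨hx.1.trans ht.1, ht.2.le.trans hy.2⟩)) hxy
  have hsplit := integral_add_adjacent_intervals (hX.intervalIntegrable_inv hx.1 hxy.le hy.2)
    (hX.intervalIntegrable_inv hy.1 hy.2 le_rfl)
  simp only [flowTime]
  linarith

theorem flowTime_pos (hX : IsFlatExpanding X a r α) {x : ℝ} (hx : x ∈ Ioo 0 a) :
    0 < flowTime X a x := by
  have h := hX.strictAntiOn_flowTime ⟨hx.1, hx.2.le⟩ ⟨hx.1.trans hx.2, le_rfl⟩ hx.2
  rwa [flowTime_self] at h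

theorem hasDerivAt_flowTime (hX : IsFlatExpanding X a r α) {x : ℝ} (hx : x ∈ Ioo 0 a) :
    HasDerivAt (flowTime X a) (-(X x)⁻¹) x := by
  have hXx : ContinuousAt X x := hX.continuousOn.continuousAt (Ioc_mem_nhds hx.1 hx.2)
  exact integral_hasDerivAt_left (hX.intervalIntegrable_inv hx.1 hx.2.le le_rfl)
    ((hX.continuousOn_inv.mono Ioo_subset_Ioc_self).stronglyMeasurableAtFilter isOpen_Ioo x hx)
    (hXx.inv₀ (hX.pos x ⟨hx.1, hx.2.le⟩).ne')

theorem isEquivalent_flowTime (hX : IsFlatExpanding X a r α) (ha : 0 < a) :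
    flowTime X a ~[𝓝[>] 0] fun x => α⁻¹ * ∫ t in x..a, t ^ (-r) := by
  have hX_equiv : X ~[𝓝[>] 0] fun t => α * t ^ r :=
    isEquivalent_const_mul_of_tendsto_div hX.coeff_pos.ne'
      (eventually_mem_nhdsWithin.mono fun t ht => (Real.rpow_pos_of_pos ht r).ne')
      hX.tendsto_div_rpow
  have hinv : (fun t => (X t)⁻¹) ~[𝓝[>] 0] fun t => α⁻¹ * t ^ (-r) := by
    refine hX_equiv.inv.congr_right ?_
    filter_upwards [self_mem_nhdsWithin] with t ht
    simp [Real.rpow_neg ht.le, mul_comm]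
  have hpow_int : ∀ x ∈ Ioc 0 a, IntervalIntegrable (fun t => α⁻¹ * t ^ (-r)) volume x a :=
    fun x hx =>
      (intervalIntegrable_rpow (Or.inr fun h0 => (lt_min hx.1 ha).not_ge h0.1)).const_mul _
  refine (hinv.intervalIntegral_nhdsGT ha
    (fun x hx => hX.intervalIntegrable_inv hx.1 hx.2 le_rfl) hpow_int
    (fun x hx => mul_nonneg (inv_nonneg.2 hX.coeff_pos.le) (Real.rpow_nonneg hx.1.le _))
    ?_).congr_right (.of_forall fun x => intervalIntegral.integral_const_mul _ _)
  exact ((tendsto_integral_rpow_neg_atTop ha hX.one_lt).const_mul_atTop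
    (inv_pos.2 hX.coeff_pos)).congr fun x => (intervalIntegral.integral_const_mul _ _).symm

theorem tendsto_flowTime_atTop (hX : IsFlatExpanding X a r α) (ha : 0 < a) :
    Tendsto (flowTime X a) (𝓝[>] 0) atTop :=
  (hX.isEquivalent_flowTime ha).symm.tendsto_atTop
    ((tendsto_integral_rpow_neg_atTop ha hX.one_lt).const_mul_atTop (inv_pos.2 hX.coeff_pos))

theorem tendsto_flowTime_mul_rpow (hX : IsFlatExpanding X a r α) (ha : 0 < a) :
    Tendsto (fun x => flowTime X a x * x ^ (r - 1)) (𝓝[>] 0) (𝓝 (α⁻¹ * (r - 1)⁻¹)) := by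
  refine ((hX.isEquivalent_flowTime ha).mul IsEquivalent.refl).symm.tendsto_nhds ?_
  simpa only [Pi.mul_def, mul_assoc] using
    (tendsto_integral_rpow_neg_mul_rpow ha hX.one_lt).const_mul α⁻¹

theorem bijOn_flowTime (hX : IsFlatExpanding X a r α) (ha : 0 < a) :
    BijOn (flowTime X a) (Ioc 0 a) (Ici 0) := by
  refine ⟨fun x hx => hX.flowTime_nonneg hx, hX.strictAntiOn_flowTime.injOn, fun u hu => ?_⟩
  obtain ⟨y, hyu, hy⟩ := ((hX.tendsto_flowTime_atTop ha).eventually_ge_atTop u).and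
    (Ioo_mem_nhdsGT ha) |>.exists
  have hcont : ContinuousOn (flowTime X a) (Icc y a) := by
    have hint : IntegrableOn (fun t => (X t)⁻¹) (uIcc y a) := by
      rw [uIcc_of_le hy.2.le]
      exact (hX.continuousOn_inv.mono fun t ht => ⟨hy.1.trans_le ht.1, ht.2⟩).integrableOn_Icc
    have hprim := continuousOn_primitive_interval_left hint
    rwa [uIcc_of_le hy.2.le] at hprim
  obtain ⟨x, hx, hxu⟩ := intermediate_value_Icc' hy.2.le hcont
    ⟨(flowTime_self X a).symm ▸ hu, hyu⟩
  exact ⟨x, ⟨hy.1.trans_le hx.1, hx.2⟩, hxu⟩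

end IsFlatExpanding

noncomputable def flowTimeInv (Y : ℝ → ℝ) (a : ℝ) : ℝ → ℝ :=
  Function.invFunOn (flowTime Y a) (Ioc 0 a)

namespace IsFlatExpanding

variable {Y : ℝ → ℝ} {a r β : ℝ}

theorem invOn_flowTimeInv (hY : IsFlatExpanding Y a r β) (ha : 0 < a) :
    InvOn (flowTimeInv Y a) (flowTime Y a) (Ioc 0 a) (Ici 0) :=
  (hY.bijOn_flowTime ha).invOn_invFunOn

theorem flowTime_flowTimeInv (hY : IsFlatExpanding Y a r β) (ha : 0 < a) {u : ℝ}
    (hu : 0 ≤ u) : flowTime Y a (flowTimeInv Y a u) = u :=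
  (hY.invOn_flowTimeInv ha).2 hu

theorem flowTimeInv_mem_Ioc (hY : IsFlatExpanding Y a r β) (ha : 0 < a) {u : ℝ}
    (hu : 0 ≤ u) : flowTimeInv Y a u ∈ Ioc 0 a :=
  ((hY.bijOn_flowTime ha).symm (hY.invOn_flowTimeInv ha).symm).mapsTo hu

theorem flowTimeInv_mem_Ioo (hY : IsFlatExpanding Y a r β) (ha : 0 < a) {u : ℝ}
    (hu : 0 < u) : flowTimeInv Y a u ∈ Ioo 0 a := by
  refine ⟨(hY.flowTimeInv_mem_Ioc ha hu.le).1,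
    (hY.flowTimeInv_mem_Ioc ha hu.le).2.lt_of_ne fun h => hu.ne ?_⟩
  rw [← hY.flowTime_flowTimeInv ha hu.le, h, flowTime_self]

theorem strictAntiOn_flowTimeInv (hY : IsFlatExpanding Y a r β) (ha : 0 < a) :
    StrictAntiOn (flowTimeInv Y a) (Ici 0) := by
  intro u hu v hv huv
  rw [← hY.strictAntiOn_flowTime.lt_iff_gt (hY.flowTimeInv_mem_Ioc ha hu)
    (hY.flowTimeInv_mem_Ioc ha hv), hY.flowTime_flowTimeInv ha hu, hY.flowTime_flowTimeInv ha hv]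
  exact huv

theorem hasDerivAt_flowTimeInv (hY : IsFlatExpanding Y a r β) (ha : 0 < a) {u : ℝ}
    (hu : 0 < u) : HasDerivAt (flowTimeInv Y a) (-Y (flowTimeInv Y a u)) u := by
  have hmem := hY.flowTimeInv_mem_Ioo ha hu
  have hcont : ContinuousAt (flowTimeInv Y a) u := by
    refine (hY.strictAntiOn_flowTimeInv ha).continuousAt_of_image_mem_nhds (Ici_mem_nhds hu) ?_
    rw [((hY.bijOn_flowTime ha).symm (hY.invOn_flowTimeInv ha).symm).image_eq]
    exact Ioc_mem_nhds hmem.1 hmem.2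
  have hderiv := (hY.hasDerivAt_flowTime hmem).of_local_left_inverse hcont
    (neg_ne_zero.2 (inv_ne_zero (hY.pos _ ⟨hmem.1, hmem.2.le⟩).ne'))
    (eventually_of_mem (Ici_mem_nhds hu) fun v hv => hY.flowTime_flowTimeInv ha hv)
  rwa [inv_neg, inv_inv] at hderiv

theorem tendsto_flowTimeInv_atTop (hY : IsFlatExpanding Y a r β) (ha : 0 < a) :
    Tendsto (flowTimeInv Y a) atTop (𝓝[>] 0) := by
  refine tendsto_nhdsWithin_iff.2 ⟨tendsto_order.2 ⟨fun b hb => ?_, fun b hb => ?_⟩,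
    (eventually_ge_atTop 0).mono fun u hu => (hY.flowTimeInv_mem_Ioc ha hu).1⟩
  · exact (eventually_ge_atTop 0).mono fun u hu => hb.trans (hY.flowTimeInv_mem_Ioc ha hu).1
  · have hw : min b a ∈ Ioc 0 a := ⟨lt_min hb ha, min_le_right b a⟩
    filter_upwards [eventually_gt_atTop (flowTime Y a (min b a)), eventually_ge_atTop 0]
      with u hu hu0
    rw [← hY.flowTime_flowTimeInv ha hu0,
      hY.strictAntiOn_flowTime.lt_iff_gt hw (hY.flowTimeInv_mem_Ioc ha hu0)] at hu
    exact hu.trans_le (min_le_left b a)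

end IsFlatExpanding

noncomputable def flowConj (X Y : ℝ → ℝ) (a x : ℝ) : ℝ :=
  if 0 < x then flowTimeInv Y a (flowTime X a x) else 0

@[simp]
theorem flowConj_zero (X Y : ℝ → ℝ) (a : ℝ) : flowConj X Y a 0 = 0 := if_neg (lt_irrefl 0)

theorem flowConj_of_pos (X Y : ℝ → ℝ) (a : ℝ) {x : ℝ} (hx : 0 < x) :
    flowConj X Y a x = flowTimeInv Y a (flowTime X a x) := if_pos hx

namespace IsFlatExpanding

variable {X Y : ℝ → ℝ} {a r α β : ℝ}

theorem flowTime_flowConj (hX : IsFlatExpanding X a r α) (hY : IsFlatExpanding Y a r β)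
    (ha : 0 < a) {x : ℝ} (hx : x ∈ Ioc 0 a) :
    flowTime Y a (flowConj X Y a x) = flowTime X a x := by
  rw [flowConj_of_pos X Y a hx.1, hY.flowTime_flowTimeInv ha (hX.flowTime_nonneg hx)]

theorem flowConj_mem_Ioo (hX : IsFlatExpanding X a r α) (hY : IsFlatExpanding Y a r β)
    (ha : 0 < a) {x : ℝ} (hx : x ∈ Ioo 0 a) : flowConj X Y a x ∈ Ioo 0 a := by
  rw [flowConj_of_pos X Y a hx.1]
  exact hY.flowTimeInv_mem_Ioo ha (hX.flowTime_pos hx)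

theorem strictMonoOn_flowConj (hX : IsFlatExpanding X a r α) (hY : IsFlatExpanding Y a r β)
    (ha : 0 < a) : StrictMonoOn (flowConj X Y a) (Ico 0 a) := by
  intro x hx y hy hxy
  have hy' : y ∈ Ioo 0 a := ⟨hx.1.trans_lt hxy, hy.2⟩
  rcases hx.1.eq_or_lt with rfl | hx0
  · simpa using (hX.flowConj_mem_Ioo hY ha hy').1
  rw [flowConj_of_pos X Y a hx0, flowConj_of_pos X Y a hy'.1]
  exact hY.strictAntiOn_flowTimeInv ha (hX.flowTime_nonneg ⟨hy'.1, hy.2.le⟩)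
    (hX.flowTime_nonneg ⟨hx0, hx.2.le⟩)
    (hX.strictAntiOn_flowTime ⟨hx0, hx.2.le⟩ ⟨hy'.1, hy.2.le⟩ hxy)

theorem hasDerivAt_flowConj (hX : IsFlatExpanding X a r α) (hY : IsFlatExpanding Y a r β)
    (ha : 0 < a) {x : ℝ} (hx : x ∈ Ioo 0 a) :
    HasDerivAt (flowConj X Y a) (Y (flowConj X Y a x) / X x) x := by
  have hcomp :=
    (hY.hasDerivAt_flowTimeInv ha (hX.flowTime_pos hx)).comp x (hX.hasDerivAt_flowTime hx)
  rw [← flowConj_of_pos X Y a hx.1, neg_mul_neg, ← div_eq_mul_inv] at hcomp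
  exact hcomp.congr_of_eventuallyEq (eventually_of_mem (Ioi_mem_nhds hx.1) fun y hy =>
    flowConj_of_pos X Y a hy)

theorem tendsto_flowConj (hX : IsFlatExpanding X a r α) (hY : IsFlatExpanding Y a r β)
    (ha : 0 < a) : Tendsto (flowConj X Y a) (𝓝[>] 0) (𝓝[>] 0) :=
  ((hY.tendsto_flowTimeInv_atTop ha).comp (hX.tendsto_flowTime_atTop ha)).congr'
    (eventually_mem_nhdsWithin.mono fun _ hx => (flowConj_of_pos X Y a hx).symm)

theorem tendsto_flowConj_div_rpow (hX : IsFlatExpanding X a r α) (hY : IsFlatExpanding Y a r β)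
    (ha : 0 < a) :
    Tendsto (fun x => (flowConj X Y a x / x) ^ (r - 1)) (𝓝[>] 0) (𝓝 (α / β)) := by
  have hr : r - 1 ≠ 0 := (sub_pos.2 hX.one_lt).ne'
  have hα := hX.coeff_pos.ne'
  have hβ := hY.coeff_pos.ne'
  have hlim := ((hY.tendsto_flowTime_mul_rpow ha).comp (hX.tendsto_flowConj hY ha)).div
    (hX.tendsto_flowTime_mul_rpow ha) (by positivity)
  rw [show β⁻¹ * (r - 1)⁻¹ / (α⁻¹ * (r - 1)⁻¹) = α / β by field_simp] at hlim
  refine hlim.congr' ?_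
  filter_upwards [Ioo_mem_nhdsGT ha] with x hx
  have hhx := hX.flowConj_mem_Ioo hY ha hx
  have hFx := (hX.flowTime_pos hx).ne'
  simp only [Pi.div_apply, Function.comp_apply]
  rw [hX.flowTime_flowConj hY ha ⟨hx.1, hx.2.le⟩, Real.div_rpow hhx.1.le hx.1.le]
  have hxr := (Real.rpow_pos_of_pos hx.1 (r - 1)).ne'
  field_simp

theorem tendsto_flowConj_div (hX : IsFlatExpanding X a r α) (hY : IsFlatExpanding Y a r β)
    (ha : 0 < a) :
    Tendsto (fun x => flowConj X Y a x / x) (𝓝[>] 0) (𝓝 ((α / β) ^ (r - 1)⁻¹)) := by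
  have hr : r - 1 ≠ 0 := (sub_pos.2 hX.one_lt).ne'
  refine ((Real.continuousAt_rpow_const _ _ (Or.inl (div_pos hX.coeff_pos hY.coeff_pos).ne')
    ).tendsto.comp (hX.tendsto_flowConj_div_rpow hY ha)).congr' ?_
  filter_upwards [Ioo_mem_nhdsGT ha] with x hx
  exact Real.rpow_rpow_inv (div_pos (hX.flowConj_mem_Ioo hY ha hx).1 hx.1).le hr

theorem tendsto_deriv_flowConj (hX : IsFlatExpanding X a r α) (hY : IsFlatExpanding Y a r β)
    (ha : 0 < a) :
    Tendsto (fun x => Y (flowConj X Y a x) / X x) (𝓝[>] 0) (𝓝 ((α / β) ^ (r - 1)⁻¹)) := by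
  set c := (α / β) ^ (r - 1)⁻¹
  have hc : 0 < c := Real.rpow_pos_of_pos (div_pos hX.coeff_pos hY.coeff_pos) _
  have hα := hX.coeff_pos.ne'
  have hβ := hY.coeff_pos.ne'
  have hc_pow : c ^ r = c * (α / β) := by
    rw [← Real.rpow_inv_rpow (div_pos hX.coeff_pos hY.coeff_pos).le (sub_pos.2 hX.one_lt).ne',
      ← Real.rpow_one_add' hc.le (by linarith [hX.one_lt]), add_sub_cancel]
  have hlim := ((hY.tendsto_div_rpow.comp (hX.tendsto_flowConj hY ha)).mul
    ((Real.continuousAt_rpow_const c r (Or.inl hc.ne')).tendsto.comp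
      (hX.tendsto_flowConj_div hY ha))).div hX.tendsto_div_rpow hα
  rw [hc_pow, show β * (c * (α / β)) / α = c by field_simp] at hlim
  refine hlim.congr' ?_
  filter_upwards [Ioo_mem_nhdsGT ha] with x hx
  have hhx := hX.flowConj_mem_Ioo hY ha hx
  have hhxr := (Real.rpow_pos_of_pos hhx.1 r).ne'
  have hxr := (Real.rpow_pos_of_pos hx.1 r).ne'
  have hXx := (hX.pos x ⟨hx.1, hx.2.le⟩).ne'
  simp only [Pi.div_apply, Function.comp_apply]
  rw [Real.div_rpow hhx.1.le hx.1.le]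
  field_simp

theorem hasDerivWithinAt_flowConj_zero (hX : IsFlatExpanding X a r α)
    (hY : IsFlatExpanding Y a r β) (ha : 0 < a) :
    HasDerivWithinAt (flowConj X Y a) ((α / β) ^ (r - 1)⁻¹) (Ici 0) 0 :=
  hasDerivWithinAt_Ici_of_tendsto_div (flowConj_zero X Y a) (hX.tendsto_flowConj_div hY ha)

theorem contDiffOn_flowConj (hX : IsFlatExpanding X a r α) (hY : IsFlatExpanding Y a r β)
    (ha : 0 < a) : ContDiffOn ℝ 1 (flowConj X Y a) (Ico 0 a) := by
  refine contDiffOn_one_Ico_of_tendsto_deriv (hX.hasDerivWithinAt_flowConj_zero hY ha)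
    (fun x hx => hX.hasDerivAt_flowConj hY ha hx) (fun x hx => ?_)
    (hX.tendsto_deriv_flowConj hY ha)
  have hhx := hX.flowConj_mem_Ioo hY ha hx
  have hYc : ContinuousAt Y (flowConj X Y a x) :=
    hY.continuousOn.continuousAt (Ioc_mem_nhds hhx.1 hhx.2)
  have hXc : ContinuousAt X x := hX.continuousOn.continuousAt (Ioc_mem_nhds hx.1 hx.2)
  exact ((hYc.comp (hX.hasDerivAt_flowConj hY ha hx).continuousAt).div hXc
    (hX.pos x ⟨hx.1, hx.2.le⟩).ne').continuousWithinAt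

end IsFlatExpanding

theorem eventually_isFlatExpanding {X : ℝ → ℝ} {ε r α : ℝ} (hε : 0 < ε) (hr : 1 < r)
    (hα : 0 < α) (hX : ContinuousOn X (Ico 0 ε))
    (hXa : Tendsto (fun x => X x / x ^ r) (𝓝[>] 0) (𝓝 α)) :
    ∀ᶠ a in 𝓝[>] 0, IsFlatExpanding X a r α := by
  have hpos : ∀ᶠ x in 𝓝[>] (0 : ℝ), 0 < X x := by
    filter_upwards [hXa.eventually (eventually_gt_nhds hα), self_mem_nhdsWithin] with x hx hx0
    exact (div_pos_iff_of_pos_right (Real.rpow_pos_of_pos hx0 r)).1 hx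
  obtain ⟨u, hu, hpos_u⟩ := mem_nhdsGT_iff_exists_Ioc_subset.1 hpos
  filter_upwards [Ioo_mem_nhdsGT (lt_min hu hε)] with a ha
  exact ⟨hX.mono fun x hx => ⟨hx.1.le, hx.2.trans_lt (ha.2.trans_le (min_le_right u ε))⟩,
    fun x hx => hpos_u ⟨hx.1, hx.2.trans (ha.2.le.trans (min_le_left u ε))⟩, hr, hα, hXa⟩

theorem eq_zero_of_tendsto_div_rpow {X : ℝ → ℝ} {r α : ℝ} (hr : 0 < r)
    (hX : ContinuousWithinAt X (Ioi 0) 0)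
    (hXa : Tendsto (fun x => X x / x ^ r) (𝓝[>] 0) (𝓝 α)) : X 0 = 0 := by
  refine tendsto_nhds_unique hX ?_
  simpa using (hXa.mul (tendsto_rpow_nhdsGT_zero hr)).congr' (eventually_mem_nhdsWithin.mono
    fun x (hx : x ∈ Ioi 0) => div_mul_cancel₀ (X x) (Real.rpow_pos_of_pos hx r).ne')

theorem exists_conj_of_pos {ε r α β : ℝ} {X Y : ℝ → ℝ} (hε : 0 < ε) (hr : 1 < r) (hα : 0 < α)
    (hβ : 0 < β) (hX : ContinuousOn X (Ico 0 ε)) (hY : ContinuousOn Y (Ico 0 ε))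
    (hXa : Tendsto (fun x => X x / x ^ r) (𝓝[>] 0) (𝓝 α))
    (hYa : Tendsto (fun x => Y x / x ^ r) (𝓝[>] 0) (𝓝 β)) :
    ∃ δ, 0 < δ ∧ ∃ h : ℝ → ℝ, StrictMonoOn h (Ico 0 δ) ∧ ContDiffOn ℝ 1 h (Ico 0 δ) ∧
      h 0 = 0 ∧ 0 < derivWithin h (Ico 0 δ) 0 ∧ MapsTo h (Ioo 0 δ) (Ioo 0 ε) ∧
      ∀ x ∈ Ico 0 δ, X x * derivWithin h (Ico 0 δ) x = Y (h x) := by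
  obtain ⟨a, ⟨hXf, hYf⟩, ha, haε⟩ := ((eventually_isFlatExpanding hε hr hα hX hXa).and
    (eventually_isFlatExpanding hε hr hβ hY hYa)).and (Ioo_mem_nhdsGT hε) |>.exists
  have hcont0 {Z : ℝ → ℝ} (hZ : ContinuousOn Z (Ico 0 ε)) : ContinuousWithinAt Z (Ioi 0) 0 :=
    continuousWithinAt_Ioi_iff_Ici.2
      ((hZ 0 ⟨le_rfl, hε⟩).mono_of_mem_nhdsWithin (Ico_mem_nhdsGE hε))
  have hX0 := eq_zero_of_tendsto_div_rpow (by linarith) (hcont0 hX) hXa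
  have hY0 := eq_zero_of_tendsto_div_rpow (by linarith) (hcont0 hY) hYa
  have huniq := uniqueDiffOn_Ico (0 : ℝ) a
  refine ⟨a, ha, flowConj X Y a, hXf.strictMonoOn_flowConj hYf ha,
    hXf.contDiffOn_flowConj hYf ha, flowConj_zero X Y a, ?_, fun x hx => ?_, fun x hx => ?_⟩
  · rw [((hXf.hasDerivWithinAt_flowConj_zero hYf ha).mono Ico_subset_Ici_self).derivWithin
      (huniq 0 ⟨le_rfl, ha⟩)]
    exact Real.rpow_pos_of_pos (div_pos hα hβ) _
  · exact Ioo_subset_Ioo_right haε.le (hXf.flowConj_mem_Ioo hYf ha hx)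
  · rcases hx.1.eq_or_lt with rfl | hx0
    · simp [hX0, hY0]
    rw [(hXf.hasDerivAt_flowConj hYf ha ⟨hx0, hx.2⟩).hasDerivWithinAt.derivWithin (huniq x hx),
      mul_div_cancel₀ _ (hXf.pos x ⟨hx0, hx.2.le⟩).ne']

/-- Sufficiency in the proposition on `C¹` conjugacy of flat vector fields: two continuous
vector fields equivalent at `0⁺` to `αx^r` and `βx^r` respectively, with `r > 1` and `α, β`
nonzero of the same sign, are conjugate by a germ of `C¹` diffeomorphism. -/
theorem stmt_13 (ε : ℝ) (hε : 0 < ε) (r : ℝ) (hr : 1 < r) (α β : ℝ) (hαβ : 0 < α * β)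
    (X Y : ℝ → ℝ)
    (hX : ContinuousOn X (Set.Ico 0 ε)) (hY : ContinuousOn Y (Set.Ico 0 ε))
    (hXa : Filter.Tendsto (fun x : ℝ => X x / x ^ r) (nhdsWithin 0 (Set.Ioi 0)) (nhds α))
    (hYa : Filter.Tendsto (fun x : ℝ => Y x / x ^ r) (nhdsWithin 0 (Set.Ioi 0)) (nhds β)) :
    ∃ (δ : ℝ), 0 < δ ∧ ∃ h : ℝ → ℝ,
      StrictMonoOn h (Set.Ico 0 δ) ∧
      ContDiffOn ℝ 1 h (Set.Ico 0 δ) ∧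
      h 0 = 0 ∧ 0 < derivWithin h (Set.Ico 0 δ) 0 ∧
      Set.MapsTo h (Set.Ioo 0 δ) (Set.Ioo 0 ε) ∧
      ∀ x ∈ Set.Ico (0 : ℝ) δ, X x * derivWithin h (Set.Ico 0 δ) x = Y (h x) := by
  rcases pos_and_pos_or_neg_and_neg_of_mul_pos hαβ with ⟨hα, hβ⟩ | ⟨hα, hβ⟩
  · exact exists_conj_of_pos hε hr hα hβ hX hY hXa hYa
  obtain ⟨δ, hδ, h, hmono, hC1, h0, hderiv0, hmaps, hconj⟩ :=
    exists_conj_of_pos hε hr (neg_pos.2 hα) (neg_pos.2 hβ) hX.neg hY.neg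
      (by simpa [neg_div] using hXa.neg) (by simpa [neg_div] using hYa.neg)
  exact ⟨δ, hδ, h, hmono, hC1, h0, hderiv0, hmaps, fun x hx => by simpa using hconj x hx⟩
end

section
/- (Residues as logarithmic deviations of orbits.) Let ℓ ≥ 1, a > 0, R ∈ ℝ and ε > 0. Let X : (0,ε] → ℝ be continuous with X(y) < 0 for all y ∈ (0,ε] and X(y) = −a·y^{ℓ+1} − R·y^{2ℓ+1} + o(y^{2ℓ+1}) as y → 0⁺. Let f : (0,ε] → (0,ε] satisfy 0 < f(x) < x and ∫_{f(x)}^{x} dy/(−X(y)) = 1 for every x ∈ (0,ε] (f is the time-one map of the flow of X). Then for every x₀ ∈ (0,ε], lim_{n→∞} (a·ℓ²·n²/log n)·( 1/(a·ℓ·n) − (f^{[n]}(x₀))^ℓ ) = R/a², where f^{[n]} denotes the n-fold iterate of f. (When f(x) = x − ax^{ℓ+1} + bx^{2ℓ+1} + o(x^{2ℓ+1}) is a contracting germ of C^{2ℓ+1} diffeomorphism exactly ℓ-tangent to the identity, R/a² is its iterative residue Resit(f).) -/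
/-!
The time `T t = ∫_t^{x₀} dy / (-X y)` satisfies `T (f^[n] x₀) = n`, so the orbit tends to `0`.
Since `1 / (-X y) = 1 / (a y^(ℓ+1)) - R / (a² y) + o(1 / y)`, integration gives
`T t = 1 / (a ℓ t^ℓ) + (R / a²) log t + o(log t)` as `t → 0⁺`. For `uₙ = (f^[n] x₀)^(-ℓ)` this reads
`n = uₙ / (a ℓ) - R / (a² ℓ) · log uₙ + o(log uₙ)`, and inverting it gives
`uₙ = a ℓ n + (R / a) log n + o(log n)`, which is the claim.
-/

open Filter Real Topology Set MeasureTheory Asymptotics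

lemma ContinuousOn.intervalIntegrable_of_mem_ordConnected {E : Type*} [NormedAddCommGroup E]
    {φ : ℝ → E} {s : Set ℝ} [hs : s.OrdConnected] (hφ : ContinuousOn φ s) {p q : ℝ}
    (hp : p ∈ s) (hq : q ∈ s) : IntervalIntegrable φ volume p q :=
  (hφ.mono (hs.uIcc_subset hp hq)).intervalIntegrable

lemma iterate_mem_Ioc {f : ℝ → ℝ} {ε x₀ : ℝ} (hf : ∀ x ∈ Ioc 0 ε, 0 < f x ∧ f x < x)
    (hx₀ : x₀ ∈ Ioc 0 ε) (n : ℕ) : f^[n] x₀ ∈ Ioc 0 x₀ := by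
  have hmaps : MapsTo f (Ioc 0 x₀) (Ioc 0 x₀) := fun x hx =>
    have hfx := hf x ⟨hx.1, hx.2.trans hx₀.2⟩
    ⟨hfx.1, hfx.2.le.trans hx.2⟩
  exact hmaps.iterate n ⟨hx₀.1, le_rfl⟩

lemma intervalIntegral_iterate_eq {g f : ℝ → ℝ} {ε x₀ : ℝ} (hg : ContinuousOn g (Ioc 0 ε))
    (hf : ∀ x ∈ Ioc 0 ε, 0 < f x ∧ f x < x ∧ ∫ y in f x..x, g y = 1)
    (hx₀ : x₀ ∈ Ioc 0 ε) (n : ℕ) : ∫ y in f^[n] x₀..x₀, g y = n := by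
  have hmem : ∀ n, f^[n] x₀ ∈ Ioc 0 ε := fun n =>
    have h := iterate_mem_Ioc (fun x hx => (hf x hx).imp_right And.left) hx₀ n
    ⟨h.1, h.2.trans hx₀.2⟩
  induction n with
  | zero => simp
  | succ n ih =>
    have hfn := hf _ (hmem n)
    rw [Function.iterate_succ_apply', ← intervalIntegral.integral_add_adjacent_intervals
      (hg.intervalIntegrable_of_mem_ordConnected ⟨hfn.1, hfn.2.1.le.trans (hmem n).2⟩ (hmem n))
      (hg.intervalIntegrable_of_mem_ordConnected (hmem n) hx₀), hfn.2.2, ih]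
    push_cast
    ring

lemma tendsto_iterate_nhdsGT_zero {g f : ℝ → ℝ} {ε x₀ : ℝ} (hg : ContinuousOn g (Ioc 0 ε))
    (hg₀ : ∀ y ∈ Ioc 0 ε, 0 ≤ g y)
    (hf : ∀ x ∈ Ioc 0 ε, 0 < f x ∧ f x < x ∧ ∫ y in f x..x, g y = 1)
    (hx₀ : x₀ ∈ Ioc 0 ε) : Tendsto (fun n => f^[n] x₀) atTop (𝓝[>] 0) := by
  have hmem := iterate_mem_Ioc (fun x hx => (hf x hx).imp_right And.left) hx₀
  refine tendsto_nhdsWithin_iff.2 ⟨tendsto_order.2 ⟨fun c hc => ?_, fun c hc => ?_⟩,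
    Eventually.of_forall fun n => (hmem n).1⟩
  · exact Eventually.of_forall fun n => hc.trans (hmem n).1
  -- the orbit needs time `n` to reach `f^[n] x₀`, but only a bounded time to reach `δ`
  set δ := min c x₀
  have hδ : δ ∈ Ioc 0 ε := ⟨lt_min hc hx₀.1, (min_le_right _ _).trans hx₀.2⟩
  filter_upwards [tendsto_natCast_atTop_atTop.eventually_gt_atTop (∫ y in δ..x₀, g y)]
    with n hn
  refine lt_of_lt_of_le ?_ (min_le_left c x₀)
  by_contra! hδn
  refine hn.not_ge ?_
  rw [← intervalIntegral_iterate_eq hg hf hx₀ n]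
  exact intervalIntegral.integral_mono_interval hδn (hmem n).2 le_rfl
    (ae_restrict_of_forall_mem measurableSet_Ioc fun y hy =>
      hg₀ y ⟨hδ.1.trans hy.1, hy.2.trans hx₀.2⟩)
    (hg.intervalIntegrable_of_mem_ordConnected hδ hx₀)

lemma norm_intervalIntegral_le_mul_log {φ : ℝ → ℝ} {δ s t : ℝ} (hs : 0 < s) (hst : s ≤ t)
    (hφ : ∀ y ∈ Ioc s t, ‖φ y‖ ≤ δ * y⁻¹) :
    ‖∫ y in s..t, φ y‖ ≤ δ * (log t - log s) := by
  have hinv : IntervalIntegrable (fun y => δ * y⁻¹) volume s t :=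
    (intervalIntegral.intervalIntegrable_inv (fun y hy => ?_) continuousOn_id).const_mul δ
  · calc ‖∫ y in s..t, φ y‖ ≤ ∫ y in s..t, δ * y⁻¹ :=
          intervalIntegral.norm_integral_le_of_norm_le hst (ae_of_all _ hφ) hinv
      _ = δ * (log t - log s) := by
          rw [intervalIntegral.integral_const_mul, integral_inv_of_pos hs (hs.trans_le hst),
            log_div (hs.trans_le hst).ne' hs.ne']
  · rw [uIcc_of_le hst] at hy
    exact (hs.trans_le hy.1).ne'

lemma isLittleO_log_intervalIntegral {φ : ℝ → ℝ} {b : ℝ} (hb : 0 < b)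
    (hφc : ContinuousOn φ (Ioc 0 b)) (hφ : φ =o[𝓝[>] 0] fun y => y⁻¹) :
    (fun t => ∫ y in t..b, φ y) =o[𝓝[>] 0] log := by
  refine isLittleO_iff.2 fun c hc => ?_
  obtain ⟨d, hd, hsub⟩ := mem_nhdsGT_iff_exists_Ioc_subset.1 (isLittleO_iff.1 hφ (half_pos hc))
  set e := min d b
  have he : e ∈ Ioc 0 b := ⟨lt_min hd hb, min_le_right _ _⟩
  set M := ‖∫ y in e..b, φ y‖
  filter_upwards [Ioo_mem_nhdsGT he.1,
    tendsto_log_nhdsGT_zero.eventually_le_atBot (-(2 / c) * (M + c / 2 * log e))] with t ht hlog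
  have htb : t ∈ Ioc 0 b := ⟨ht.1, ht.2.le.trans he.2⟩
  have hnear : ‖∫ y in t..e, φ y‖ ≤ c / 2 * (log e - log t) := by
    refine norm_intervalIntegral_le_mul_log ht.1 ht.2.le fun y hy => ?_
    have := hsub ⟨ht.1.trans hy.1, hy.2.trans (min_le_left _ _)⟩
    rwa [Set.mem_ofPred_eq, norm_inv, norm_of_nonneg (ht.1.trans hy.1).le] at this
  calc ‖∫ y in t..b, φ y‖
      = ‖(∫ y in t..e, φ y) + ∫ y in e..b, φ y‖ := by
        rw [intervalIntegral.integral_add_adjacent_intervals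
          (hφc.intervalIntegrable_of_mem_ordConnected htb he)
          (hφc.intervalIntegrable_of_mem_ordConnected he ⟨hb, le_rfl⟩)]
    _ ≤ c / 2 * (log e - log t) + M := (norm_add_le _ _).trans (by gcongr)
    _ ≤ c * -log t := by
        have := mul_le_mul_of_nonneg_left hlog (half_pos hc).le
        rw [show c / 2 * (-(2 / c) * (M + c / 2 * log e)) = -(M + c / 2 * log e) by
          field_simp] at this
        linarith
    _ ≤ c * ‖log t‖ := mul_le_mul_of_nonneg_left (neg_le_abs _) hc.le

section ModelField

variable {ℓ : ℕ} {a R : ℝ}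

lemma hasDerivAt_neg_one_div_pow_sub_log (hℓ : 1 ≤ ℓ) (ha : a ≠ 0) {y : ℝ} (hy : 0 < y) :
    HasDerivAt (fun t => -(1 / (a * ℓ * t ^ ℓ)) - R / a ^ 2 * log t)
      (1 / (a * y ^ (ℓ + 1)) - R / (a ^ 2 * y)) y := by
  obtain ⟨k, rfl⟩ : ∃ k, ℓ = k + 1 := ⟨ℓ - 1, by omega⟩
  have hden : a * ((k + 1 : ℕ) : ℝ) * y ^ (k + 1) ≠ 0 := by positivity
  have h := ((((hasDerivAt_pow (k + 1) y).const_mul (a * (k + 1 : ℕ))).inv hden).neg).sub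
    ((hasDerivAt_log hy.ne').const_mul (R / a ^ 2))
  simp only [one_div]
  refine h.congr_deriv ?_
  simp only [Nat.add_sub_cancel]
  field_simp
  ring

lemma isLittleO_one_div_neg_sub_inv (hℓ : 1 ≤ ℓ) (ha : 0 < a) {X : ℝ → ℝ}
    (hX : (fun y => X y - (-a * y ^ (ℓ + 1) - R * y ^ (2 * ℓ + 1))) =o[𝓝[>] 0]
      fun y => y ^ (2 * ℓ + 1)) :
    (fun y => 1 / (-X y) - (1 / (a * y ^ (ℓ + 1)) - R / (a ^ 2 * y))) =o[𝓝[>] 0]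
      fun y => y⁻¹ := by
  set s := fun y => (X y - (-a * y ^ (ℓ + 1) - R * y ^ (2 * ℓ + 1))) / y ^ (2 * ℓ + 1)
  have hs : Tendsto s (𝓝[>] 0) (𝓝 0) := hX.tendsto_div_nhds_zero
  have hpow : Tendsto (fun y : ℝ => y ^ ℓ) (𝓝[>] 0) (𝓝 0) :=
    ((continuous_pow ℓ).tendsto' 0 0 (zero_pow (by omega))).mono_left nhdsWithin_le_nhds
  have hpos : ∀ᶠ y in 𝓝[>] (0 : ℝ), 0 < y := self_mem_nhdsWithin
  have hq : Tendsto (fun y => -X y / y ^ (ℓ + 1)) (𝓝[>] 0) (𝓝 a) := by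
    have := ((hpow.const_mul R).const_add a).sub (hs.mul hpow)
    simp only [mul_zero, add_zero, sub_zero] at this
    refine this.congr' ?_
    filter_upwards [hpos] with y hy
    simp only [s]
    field_simp
    ring
  -- `y * (1 / (-X y) - (1 / (a y^(ℓ+1)) - R / (a² y)))` equals the quotient below
  have hquot : Tendsto
      (fun y => (R ^ 2 * y ^ ℓ + (a - R * y ^ ℓ) * s y) / (a ^ 2 * (-X y / y ^ (ℓ + 1))))
      (𝓝[>] 0) (𝓝 0) := by
    have := ((hpow.const_mul (R ^ 2)).add (((hpow.const_mul R).const_sub a).mul hs)).div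
      (hq.const_mul (a ^ 2)) (by positivity)
    rwa [mul_zero, mul_zero, add_zero, zero_div] at this
  rw [isLittleO_iff_tendsto' (hpos.mono fun y hy h => absurd h (inv_ne_zero hy.ne'))]
  refine hquot.congr' ?_
  filter_upwards [hpos, hq.eventually (lt_mem_nhds (half_lt_self ha))] with y hy hqy
  have hX0 : X y ≠ 0 := by
    rintro h0; simp [h0] at hqy; linarith
  simp only [s]
  field_simp
  ring

lemma isLittleO_log_integral_one_div_neg_sub (hℓ : 1 ≤ ℓ) (ha : 0 < a) {b : ℝ} (hb : 0 < b)
    {X : ℝ → ℝ} (hXc : ContinuousOn X (Ioc 0 b)) (hXneg : ∀ y ∈ Ioc 0 b, X y < 0)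
    (hX : (fun y => X y - (-a * y ^ (ℓ + 1) - R * y ^ (2 * ℓ + 1))) =o[𝓝[>] 0]
      fun y => y ^ (2 * ℓ + 1)) :
    (fun t => (∫ y in t..b, 1 / (-X y)) - (1 / (a * ℓ * t ^ ℓ) + R / a ^ 2 * log t))
      =o[𝓝[>] 0] log := by
  set m : ℝ → ℝ := fun y => 1 / (a * y ^ (ℓ + 1)) - R / (a ^ 2 * y)
  set H : ℝ → ℝ := fun t => -(1 / (a * ℓ * t ^ ℓ)) - R / a ^ 2 * log t
  have hg : ContinuousOn (fun y => 1 / (-X y)) (Ioc 0 b) :=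
    continuousOn_const.div hXc.neg fun y hy => (neg_pos.2 (hXneg y hy)).ne'
  have hm : ContinuousOn m (Ioc 0 b) := fun y hy => by
    have := hy.1
    exact ContinuousAt.continuousWithinAt (by fun_prop (disch := positivity))
  have hbb : b ∈ Ioc 0 b := ⟨hb, le_rfl⟩
  have hsplit : ∀ t ∈ Ioc 0 b,
      (∫ y in t..b, 1 / (-X y)) - (1 / (a * ℓ * t ^ ℓ) + R / a ^ 2 * log t)
        = (∫ y in t..b, (1 / (-X y) - m y)) + H b := by
    intro t ht
    have hHm : ∫ y in t..b, m y = H b - H t :=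
      intervalIntegral.integral_eq_sub_of_hasDerivAt
        (fun y hy => hasDerivAt_neg_one_div_pow_sub_log hℓ ha.ne'
          (lt_of_lt_of_le ht.1 (by rw [uIcc_of_le ht.2] at hy; exact hy.1)))
        (hm.intervalIntegrable_of_mem_ordConnected ht hbb)
    rw [intervalIntegral.integral_sub (hg.intervalIntegrable_of_mem_ordConnected ht hbb)
      (hm.intervalIntegrable_of_mem_ordConnected ht hbb), hHm]
    simp only [H]
    ring
  have hconst : (fun _ => H b) =o[𝓝[>] 0] log :=
    isLittleO_const_left.2 <| Or.inr <| tendsto_abs_atBot_atTop.comp tendsto_log_nhdsGT_zero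
  refine ((isLittleO_log_intervalIntegral hb (hg.sub hm)
    (isLittleO_one_div_neg_sub_inv hℓ ha hX)).add hconst).congr' ?_ EventuallyEq.rfl
  filter_upwards [Ioc_mem_nhdsGT hb] with t ht
  exact (hsplit t ht).symm

end ModelField

section Inversion

variable {p q : ℝ} {u : ℕ → ℝ}

lemma tendsto_natCast_div_of_isLittleO_log (hu : Tendsto u atTop atTop)
    (h : (fun n : ℕ => (n : ℝ) - p * u n + q * log (u n)) =o[atTop] fun n => log (u n)) :
    Tendsto (fun n : ℕ => n / u n) atTop (𝓝 p) := by
  have hlog : Tendsto (fun n => log (u n) / u n) atTop (𝓝 0) :=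
    isLittleO_log_id_atTop.tendsto_div_nhds_zero.comp hu
  have hsum := ((h.tendsto_div_nhds_zero.mul hlog).sub (hlog.const_mul q)).const_add p
  simp only [mul_zero, sub_zero, add_zero] at hsum
  refine hsum.congr' ?_
  filter_upwards [hu.eventually_gt_atTop 1] with n hn
  have : log (u n) ≠ 0 := (log_pos hn).ne'
  field_simp
  ring

lemma tendsto_sq_div_log_mul_sub_inv (hp : 0 < p) (hu : Tendsto u atTop atTop)
    (h : (fun n : ℕ => (n : ℝ) - p * u n + q * log (u n)) =o[atTop] fun n => log (u n)) :
    Tendsto (fun n : ℕ => (n : ℝ) ^ 2 / log n * (p / n - 1 / u n)) atTop (𝓝 (p * q)) := by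
  have hlog_n : Tendsto (fun n : ℕ => log n) atTop atTop :=
    tendsto_log_atTop.comp tendsto_natCast_atTop_atTop
  have hratio := tendsto_natCast_div_of_isLittleO_log hu h
  have hpos : ∀ᶠ n : ℕ in atTop, 1 < u n ∧ (0 : ℝ) < n ∧ 0 < log n :=
    (hu.eventually_gt_atTop 1).and <| (tendsto_natCast_atTop_atTop.eventually_gt_atTop 0).and
      (hlog_n.eventually_gt_atTop 0)
  -- `log n - log (u n) → log p` is bounded, hence negligible against `log n`
  have hlog_diff : Tendsto (fun n : ℕ => (log n - log (u n)) / log n) atTop (𝓝 0) := by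
    refine ((continuousAt_log hp.ne').tendsto.comp hratio).div_atTop hlog_n |>.congr' ?_
    filter_upwards [hpos] with n ⟨hun, hn, _⟩
    simp [log_div hn.ne' (by linarith : u n ≠ 0)]
  have hdev : Tendsto (fun n : ℕ => (p * u n - n) / log n) atTop (𝓝 q) := by
    have := ((hlog_diff.const_mul q).add (h.tendsto_div_nhds_zero.mul
      ((hlog_diff.const_sub 1)))).const_sub q
    rw [show q - (q * 0 + 0 * (1 - 0)) = q by ring] at this
    refine this.congr' ?_
    filter_upwards [hpos] with n ⟨hun, _, hn⟩
    have : log (u n) ≠ 0 := (log_pos hun).ne'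
    field_simp
    ring
  refine (hratio.mul hdev).congr' ?_
  filter_upwards [hpos] with n ⟨hun, hn, hlog⟩
  have : u n ≠ 0 := by linarith
  field_simp

end Inversion

theorem stmt_14_general (ℓ : ℕ) (hℓ : 1 ≤ ℓ) (a R ε : ℝ) (ha : 0 < a)
    (X f : ℝ → ℝ)
    (hXc : ContinuousOn X (Set.Ioc 0 ε))
    (hXneg : ∀ y ∈ Set.Ioc (0 : ℝ) ε, X y < 0)
    (hXe : Asymptotics.IsLittleO (nhdsWithin 0 (Set.Ioi 0))
      (fun y : ℝ => X y - (-a * y ^ (ℓ + 1) - R * y ^ (2 * ℓ + 1)))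
      (fun y : ℝ => y ^ (2 * ℓ + 1)))
    (hf : ∀ x ∈ Set.Ioc (0 : ℝ) ε,
      0 < f x ∧ f x < x ∧ (∫ y in (f x)..x, 1 / (-X y)) = 1)
    (x₀ : ℝ) (hx₀ : x₀ ∈ Set.Ioc (0 : ℝ) ε) :
    Filter.Tendsto
      (fun n : ℕ => (a * (ℓ : ℝ) ^ 2 * (n : ℝ) ^ 2 / Real.log n)
        * (1 / (a * (ℓ : ℝ) * (n : ℝ)) - (f^[n] x₀) ^ ℓ))
      Filter.atTop (nhds (R / a ^ 2)) := by
  have hℓ₀ : (ℓ : ℝ) ≠ 0 := by positivity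
  have hg : ContinuousOn (fun y => 1 / (-X y)) (Ioc 0 ε) :=
    continuousOn_const.div hXc.neg fun y hy => (neg_pos.2 (hXneg y hy)).ne'
  have horbit := tendsto_iterate_nhdsGT_zero hg
    (fun y hy => (one_div_pos.2 (neg_pos.2 (hXneg y hy))).le) hf hx₀
  have hIoc : Ioc 0 x₀ ⊆ Ioc 0 ε := Ioc_subset_Ioc_right hx₀.2
  have htime := (isLittleO_log_integral_one_div_neg_sub hℓ ha hx₀.1 (hXc.mono hIoc)
    (fun y hy => hXneg y (hIoc hy)) hXe).comp_tendsto horbit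
  simp only [Function.comp_def, intervalIntegral_iterate_eq hg hf hx₀] at htime
  set u : ℕ → ℝ := fun n => (f^[n] x₀)⁻¹ ^ ℓ
  have hu : Tendsto u atTop atTop :=
    (tendsto_pow_atTop (by omega)).comp (tendsto_inv_nhdsGT_zero.comp horbit)
  have hlog_u : ∀ n, log (u n) = -ℓ * log (f^[n] x₀) := fun n => by
    simp only [u, log_pow, log_inv]; ring
  have hdev : (fun n : ℕ => (n : ℝ) - (a * ℓ)⁻¹ * u n + R / (a ^ 2 * ℓ) * log (u n))
      =o[atTop] fun n => log (u n) :=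
    (htime.const_mul_right' (isUnit_iff_ne_zero.2 (neg_ne_zero.2 hℓ₀))).congr
      (fun n => by simp only [u, hlog_u]; field_simp; ring) (fun n => (hlog_u n).symm)
  convert (tendsto_sq_div_log_mul_sub_inv (by positivity) hu hdev).const_mul (a * ℓ ^ 2)
    using 2 with n
  · simp only [u, one_div, inv_pow, inv_inv]
    field_simp
  · field_simp

/-- Residues as logarithmic deviations of orbits: if `f` is the time-one map of the flow of
a contracting continuous vector field `X(y) = −a·y^{ℓ+1} − R·y^{2ℓ+1} + o(y^{2ℓ+1})`, then
for every `x₀`, `(a·ℓ²·n²/log n)·(1/(a·ℓ·n) − (fⁿ(x₀))^ℓ) → R/a²` as `n → ∞`. -/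
theorem stmt_14 (ℓ : ℕ) (hℓ : 1 ≤ ℓ) (a R ε : ℝ) (ha : 0 < a) (hε : 0 < ε)
    (X f : ℝ → ℝ)
    (hXc : ContinuousOn X (Set.Ioc 0 ε))
    (hXneg : ∀ y ∈ Set.Ioc (0 : ℝ) ε, X y < 0)
    (hXe : Asymptotics.IsLittleO (nhdsWithin 0 (Set.Ioi 0))
      (fun y : ℝ => X y - (-a * y ^ (ℓ + 1) - R * y ^ (2 * ℓ + 1)))
      (fun y : ℝ => y ^ (2 * ℓ + 1)))
    (hf : ∀ x ∈ Set.Ioc (0 : ℝ) ε,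
      0 < f x ∧ f x < x ∧ (∫ y in (f x)..x, 1 / (-X y)) = 1)
    (x₀ : ℝ) (hx₀ : x₀ ∈ Set.Ioc (0 : ℝ) ε) :
    Filter.Tendsto
      (fun n : ℕ => (a * (ℓ : ℝ) ^ 2 * (n : ℝ) ^ 2 / Real.log n)
        * (1 / (a * (ℓ : ℝ) * (n : ℝ)) - (f^[n] x₀) ^ ℓ))
      Filter.atTop (nhds (R / a ^ 2)) :=
  stmt_14_general ℓ hℓ a R ε ha X f hXc hXneg hXe hf x₀ hx₀
end

section
/- (Existence of C^r conjugacy between exactly ℓ-flat expanding vector fields.) Let ℓ ≥ 1 and 1 ≤ r ≤ ℓ, and let X, Y be real-valued functions of class C^{ℓ+r} on intervals [0,ε_X) and [0,ε_Y) respectively, with X(x) = α·x^{ℓ+1} + o(x^{ℓ+1}) and Y(x) = β·x^{ℓ+1} + o(x^{ℓ+1}) as x → 0⁺, where α > 0 and β > 0 (both vector fields are exactly ℓ-flat and expanding). Then there exist δ > 0 and a map h : [0,δ) → ℝ of class C^r with h(0) = 0 and h'(0) > 0 such that h'(x)·X(x) = Y(h(x)) for all x ∈ [0,δ). -/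
/-!
Dividing `ℓ + 1` times by `x` (Hadamard's lemma `f x / x = x⁻¹ * ∫₀ˣ f'`, losing one derivative
each time) writes `X = x ^ (ℓ + 1) * g` with `g` of class `C^(r-1)` and `g 0 = α > 0`.
Separating variables in `u' * X = u ^ (ℓ + 1)` gives the chart `u x = x * A x ^ (-1/ℓ)`, where
`A x = ℓ * x ^ ℓ * ∫ₓᵃ ds / (s ^ (ℓ + 1) * g s)` is an average of `1 / g` over `[x, a]`.
Integrating by parts, the derivative of such an average of index `k` is expressed through the
average of index `k - 1` of the derivative, so `A` stays `C^(r-1)` up to `0` because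
`r - 1 ≤ ℓ - 1`. Hence `u` is `C^r` and conjugates `X` to the model field `x ^ (ℓ + 1)`. With the
chart `v` of `Y`, the conjugacy is `h = v⁻¹ ∘ u`, and `h' = u' / v' ∘ h` bootstraps `h` to `C^r`.
-/

open Set Filter Topology intervalIntegral MeasureTheory

namespace FlatVectorField

section Calculus

variable {a b x : ℝ} {f φ w : ℝ → ℝ} {I : Set ℝ}

lemma hasDerivWithinAt_Ico_of_hasDerivAt_Ioo (hf : ContinuousOn f (Ico a b))
    (hφ : ContinuousOn φ (Ico a b)) (hd : ∀ x ∈ Ioo a b, HasDerivAt f (φ x) x) :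
    ∀ x ∈ Ico a b, HasDerivWithinAt f (φ x) (Ico a b) x := by
  intro x hx
  rcases hx.1.eq_or_lt with rfl | hax
  · have hab : a < b := hx.2
    have hlim : Tendsto (deriv f) (𝓝[>] a) (𝓝 (φ a)) := by
      refine ((hφ a hx).mono Ioo_subset_Ico_self).tendsto.mono_left ?_ |>.congr' ?_
      · rw [nhdsWithin_Ioo_eq_nhdsGT hab]
      · filter_upwards [Ioo_mem_nhdsGT hab] with y hy
        exact ((hd y hy).deriv).symm
    refine (hasDerivWithinAt_Ici_of_tendsto_deriv (s := Ioo a b)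
      (fun y hy => (hd y hy).differentiableAt.differentiableWithinAt)
      ((hf a hx).mono Ioo_subset_Ico_self) (Ioo_mem_nhdsGT hab) hlim).mono Ico_subset_Ici_self
  · exact (hd x ⟨hax, hx.2⟩).hasDerivWithinAt

lemma contDiffOn_succ_Ico_of_hasDerivAt_Ioo {m : ℕ} (hφ : ContDiffOn ℝ m φ (Ico a b))
    (hf : ContinuousOn f (Ico a b)) (hd : ∀ x ∈ Ioo a b, HasDerivAt f (φ x) x) :
    ContDiffOn ℝ (m + 1) f (Ico a b) := by
  have hfφ := hasDerivWithinAt_Ico_of_hasDerivAt_Ioo hf hφ.continuousOn hd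
  rw [contDiffOn_succ_iff_derivWithin (uniqueDiffOn_Ico a b)]
  exact ⟨fun x hx => (hfφ x hx).differentiableWithinAt, by simp,
    hφ.congr fun x hx => (hfφ x hx).derivWithin (uniqueDiffOn_Ico a b x hx)⟩

lemma contDiffOn_succ_of_hasDerivAt_div_comp {m : ℕ} {s : Set ℝ} {du dv : ℝ → ℝ}
    (hdu : ContDiffOn ℝ m du (Ico a b)) (hdv : ContDiffOn ℝ m dv s) (hdv0 : ∀ y ∈ s, dv y ≠ 0)
    (hmaps : MapsTo f (Ico a b) s) (hf : ContinuousOn f (Ico a b))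
    (hd : ∀ x ∈ Ioo a b, HasDerivAt f (du x / dv (f x)) x) :
    ContDiffOn ℝ (m + 1 : ℕ) f (Ico a b) := by
  suffices ∀ k ≤ m + 1, ContDiffOn ℝ k f (Ico a b) from this _ le_rfl
  intro k hk
  induction k with
  | zero => simpa using hf
  | succ k ih =>
    have hkm : (k : WithTop ℕ∞) ≤ m := by exact_mod_cast Nat.le_of_succ_le_succ hk
    exact_mod_cast contDiffOn_succ_Ico_of_hasDerivAt_Ioo ((hdu.of_le hkm).div
      ((hdv.of_le hkm).comp (ih (by omega)) hmaps) fun x hx => hdv0 _ (hmaps hx)) hf hd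

lemma _root_.ContDiffOn.hasDerivAt_derivWithin_Ico {n : WithTop ℕ∞}
    (hf : ContDiffOn ℝ n f (Ico a b)) (hn : n ≠ 0) (hx : x ∈ Ioo a b) :
    HasDerivAt f (derivWithin f (Ico a b) x) x :=
  ((hf.differentiableOn hn x (Ioo_subset_Ico_self hx)).hasDerivWithinAt).hasDerivAt
    (mem_of_superset (Ioo_mem_nhds hx.1 hx.2) Ioo_subset_Ico_self)

lemma hasDerivAt_integral_of_continuousOn [I.OrdConnected] (hw : ContinuousOn w I) (ha : a ∈ I)
    (hx : I ∈ 𝓝 x) : HasDerivAt (fun t => ∫ s in a..t, w s) (w x) x :=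
  integral_hasDerivAt_right
    ((hw.mono (OrdConnected.uIcc_subset ‹_› ha (mem_of_mem_nhds hx))).intervalIntegrable)
    ((hw.mono interior_subset).stronglyMeasurableAtFilter isOpen_interior x
      (mem_interior_iff_mem_nhds.2 hx))
    (hw.continuousAt hx)

lemma hasDerivAt_integral_left_of_continuousOn [I.OrdConnected] (hw : ContinuousOn w I)
    (ha : a ∈ I) (hx : I ∈ 𝓝 x) : HasDerivAt (fun t => ∫ s in t..a, w s) (-w x) x := by
  refine (hasDerivAt_integral_of_continuousOn hw ha hx).neg.congr_of_eventuallyEq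
    (Eventually.of_forall fun t => ?_)
  exact integral_symm a t

lemma exists_forall_Ico_of_eventually {p : ℝ → Prop} {e : ℝ} (he : 0 < e)
    (h : ∀ᶠ x in 𝓝[Ico 0 e] 0, p x) : ∃ δ ∈ Ioc 0 e, ∀ x ∈ Ico 0 δ, p x := by
  rw [nhdsWithin_Ico_eq_nhdsGE he] at h
  obtain ⟨u, hu, hsub⟩ := mem_nhdsGE_iff_exists_Ico_subset.1 h
  exact ⟨min u e, ⟨lt_min hu he, min_le_right _ _⟩,
    fun x hx => hsub ⟨hx.1, hx.2.trans_le (min_le_left _ _)⟩⟩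

end Calculus

section WeightedAverage

noncomputable def weightedAverage (k : ℕ) (v : ℝ → ℝ) (x : ℝ) : ℝ :=
  if x ≤ 0 then v 0 else (k + 1) / x ^ (k + 1) * ∫ s in 0..x, s ^ k * v s

variable {k : ℕ} {v : ℝ → ℝ} {e x : ℝ}

lemma weightedAverage_of_pos (hx : 0 < x) :
    weightedAverage k v x = (k + 1) / x ^ (k + 1) * ∫ s in 0..x, s ^ k * v s := by
  simp [weightedAverage, hx.not_ge]

@[simp]
lemma weightedAverage_zero : weightedAverage k v 0 = v 0 := by simp [weightedAverage]

lemma abs_weightedAverage_sub_le {t c M : ℝ} (ht : 0 < t) (hv : ContinuousOn v (Icc 0 t))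
    (hM : ∀ s ∈ Ioc 0 t, |v s - c| ≤ M) : |weightedAverage k v t - c| ≤ M := by
  have hpow : ∫ s in (0:ℝ)..t, s ^ k = t ^ (k + 1) / (k + 1) := by simp [integral_pow]
  have hint : IntervalIntegrable (fun s => s ^ k * v s) volume 0 t :=
    ((continuous_pow k).continuousOn.mul hv).intervalIntegrable_of_Icc ht.le
  have hsub : weightedAverage k v t - c
      = (k + 1) / t ^ (k + 1) * ∫ s in (0:ℝ)..t, s ^ k * (v s - c) := by
    simp_rw [mul_sub]
    rw [weightedAverage_of_pos ht,
      integral_sub hint (Continuous.intervalIntegrable (by fun_prop) _ _),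
      intervalIntegral.integral_mul_const, hpow]
    field_simp
  have hbound : |∫ s in (0:ℝ)..t, s ^ k * (v s - c)| ≤ M * (t ^ (k + 1) / (k + 1)) := by
    rw [← hpow, ← intervalIntegral.integral_const_mul, ← Real.norm_eq_abs]
    refine norm_integral_le_of_norm_le ht.le (Eventually.of_forall fun s hs => ?_)
      (((continuous_pow k).const_mul M).intervalIntegrable _ _)
    rw [norm_mul, norm_pow, Real.norm_of_nonneg hs.1.le, Real.norm_eq_abs, mul_comm M]
    exact mul_le_mul_of_nonneg_left (hM s hs) (pow_nonneg hs.1.le k)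
  rw [hsub, abs_mul, abs_of_pos (by positivity)]
  calc (k + 1) / t ^ (k + 1) * |∫ s in (0:ℝ)..t, s ^ k * (v s - c)|
      ≤ (k + 1) / t ^ (k + 1) * (M * (t ^ (k + 1) / (k + 1))) := by gcongr
    _ = M := by field_simp

lemma hasDerivAt_weightedAverage (hv : ContinuousOn v (Ico 0 e)) (hx : x ∈ Ioo 0 e) :
    HasDerivAt (weightedAverage k v) ((k + 1) / x * (v x - weightedAverage k v x)) x := by
  have hI := hasDerivAt_integral_of_continuousOn
    (show ContinuousOn (fun s => s ^ k * v s) (Ico 0 e) from (continuousOn_pow k).mul hv)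
    (left_mem_Ico.2 (hx.1.trans hx.2)) (Ico_mem_nhds hx.1 hx.2)
  have hpow := ((hasDerivAt_pow (k + 1) x).inv (pow_ne_zero _ hx.1.ne')).const_mul ((k : ℝ) + 1)
  have heq : weightedAverage k v =ᶠ[𝓝 x]
      fun t => (k + 1) * (t ^ (k + 1))⁻¹ * ∫ s in 0..t, s ^ k * v s := by
    filter_upwards [Ioi_mem_nhds hx.1] with t ht
    rw [weightedAverage_of_pos ht, div_eq_mul_inv]
  refine ((hpow.mul hI).congr_of_eventuallyEq heq).congr_deriv ?_
  rw [weightedAverage_of_pos hx.1]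
  have := hx.1.ne'
  simp only [Pi.inv_apply]
  field_simp
  push_cast
  ring

lemma continuousOn_weightedAverage (hv : ContinuousOn v (Ico 0 e)) :
    ContinuousOn (weightedAverage k v) (Ico 0 e) := by
  intro x hx
  rcases hx.1.eq_or_lt with rfl | hx0
  · rw [Metric.continuousWithinAt_iff]
    intro ε hε
    obtain ⟨δ, hδ, hvδ⟩ := Metric.continuousWithinAt_iff.1 (hv 0 hx) (ε / 2) (half_pos hε)
    refine ⟨δ, hδ, fun {t} ht htδ => ?_⟩
    rcases ht.1.eq_or_lt with rfl | ht0
    · simpa using hε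
    rw [Real.dist_0_eq_abs, abs_of_pos ht0] at htδ
    rw [weightedAverage_zero, Real.dist_eq]
    refine (abs_weightedAverage_sub_le ht0 (hv.mono (Icc_subset_Ico_right ht.2))
      fun s hs => ?_).trans_lt (half_lt_self hε)
    rw [← Real.dist_eq]
    refine (hvδ ⟨hs.1.le, hs.2.trans_lt ht.2⟩ ?_).le
    rw [Real.dist_0_eq_abs, abs_of_pos hs.1]
    exact hs.2.trans_lt htδ
  · exact (hasDerivAt_weightedAverage hv ⟨hx0, hx.2⟩).continuousAt.continuousWithinAt

lemma integral_pow_succ_mul_deriv {v' : ℝ → ℝ} (hx : 0 < x) (hv : ContinuousOn v (Icc 0 x))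
    (hv' : ContinuousOn v' (Icc 0 x)) (hd : ∀ s ∈ Ioo 0 x, HasDerivAt v (v' s) s) :
    ∫ s in 0..x, s ^ (k + 1) * v' s = x ^ (k + 1) * v x - (k + 1) * ∫ s in 0..x, s ^ k * v s := by
  have hpow (s : ℝ) : HasDerivAt (fun s => s ^ (k + 1)) ((k + 1) * s ^ k) s := by
    simpa using hasDerivAt_pow (k + 1) s
  rw [integral_mul_deriv_eq_deriv_mul_of_hasDerivAt (u' := fun s => (k + 1) * s ^ k) (v := v)
    (v' := v') (by fun_prop) (by rwa [uIcc_of_le hx.le]) (fun s _ => hpow s)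
    (by rwa [min_eq_left hx.le, max_eq_right hx.le])
    (Continuous.intervalIntegrable (by fun_prop) _ _) (hv'.intervalIntegrable_of_Icc hx.le)]
  simp_rw [mul_assoc]
  rw [intervalIntegral.integral_const_mul]
  simp

lemma weightedAverage_eq_sub_weightedAverage_succ {v' : ℝ → ℝ} (hx : 0 ≤ x)
    (hv : ContinuousOn v (Icc 0 x)) (hv' : ContinuousOn v' (Icc 0 x))
    (hd : ∀ s ∈ Ioo 0 x, HasDerivAt v (v' s) s) :
    weightedAverage k v x = v x - x * weightedAverage (k + 1) v' x / (k + 2) := by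
  rcases hx.eq_or_lt with rfl | hx0
  · simp
  rw [weightedAverage_of_pos hx0, weightedAverage_of_pos hx0,
    integral_pow_succ_mul_deriv hx0 hv hv' hd]
  have := hx0.ne'
  field_simp
  push_cast
  ring

theorem contDiffOn_weightedAverage {m : ℕ} (hv : ContDiffOn ℝ m v (Ico 0 e)) :
    ContDiffOn ℝ m (weightedAverage k v) (Ico 0 e) := by
  induction m generalizing k v with
  | zero =>
    simpa [contDiffOn_zero] using continuousOn_weightedAverage hv.continuousOn
  | succ m ih =>
    set v' := derivWithin v (Ico 0 e)
    have hv' : ContDiffOn ℝ m v' (Ico 0 e) :=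
      hv.derivWithin (uniqueDiffOn_Ico 0 e) (by push_cast; exact le_rfl)
    have hvd (x) (hx : x ∈ Ioo 0 e) : HasDerivAt v (v' x) x :=
      hv.hasDerivAt_derivWithin_Ico (by simp) hx
    set G := weightedAverage (k + 1) v'
    have hG : ContDiffOn ℝ m G (Ico 0 e) := ih hv'
    have hW : ContDiffOn ℝ (m + 1) (fun t => t * G t) (Ico 0 e) := by
      refine contDiffOn_succ_Ico_of_hasDerivAt_Ioo (φ := fun t => (k + 2) * v' t - (k + 1) * G t)
        ((contDiffOn_const.mul hv').sub (contDiffOn_const.mul hG))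
        (continuousOn_id.mul hG.continuousOn) fun x hx => ?_
      refine ((hasDerivAt_id x).mul (hasDerivAt_weightedAverage hv'.continuousOn hx)).congr_deriv ?_
      have := hx.1.ne'
      simp only [id, G]
      field_simp
      push_cast
      ring
    push_cast
    refine (hv.sub (hW.div_const ((k : ℝ) + 2))).congr fun x hx => ?_
    exact weightedAverage_eq_sub_weightedAverage_succ hx.1
      (hv.continuousOn.mono (Icc_subset_Ico_right hx.2))
      (hv'.continuousOn.mono (Icc_subset_Ico_right hx.2))
      fun s hs => hvd s ⟨hs.1, hs.2.trans hx.2⟩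

end WeightedAverage

section TailAverage

noncomputable def tailAverage (k : ℕ) (a : ℝ) (w : ℝ → ℝ) (x : ℝ) : ℝ :=
  if x ≤ 0 then w 0 else (k + 1) * x ^ (k + 1) * ∫ s in x..a, w s / s ^ (k + 2)

variable {k : ℕ} {a e x : ℝ} {w : ℝ → ℝ}

lemma tailAverage_of_pos (hx : 0 < x) :
    tailAverage k a w x = (k + 1) * x ^ (k + 1) * ∫ s in x..a, w s / s ^ (k + 2) := by
  simp [tailAverage, hx.not_ge]

@[simp]
lemma tailAverage_zero : tailAverage k a w 0 = w 0 := by simp [tailAverage]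

lemma continuousOn_div_pow (hw : ContinuousOn w (Ico 0 e)) (n : ℕ) :
    ContinuousOn (fun s => w s / s ^ n) (Ioo 0 e) :=
  (hw.mono Ioo_subset_Ico_self).div (continuousOn_pow n) fun _ hs => pow_ne_zero _ hs.1.ne'

lemma integral_one_div_pow (hx : 0 < x) (hxa : x ≤ a) :
    ∫ s in x..a, 1 / s ^ (k + 2) = (1 / x ^ (k + 1) - 1 / a ^ (k + 1)) / (k + 1) := by
  have hpos : ∀ s ∈ uIcc x a, 0 < s := fun s hs => hx.trans_le (uIcc_of_le hxa ▸ hs).1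
  have hint : ContinuousOn (fun s : ℝ => 1 / s ^ (k + 2)) (uIcc x a) :=
    continuousOn_const.div (continuousOn_pow _) fun s hs => (pow_pos (hpos s hs) _).ne'
  rw [integral_eq_sub_of_hasDerivAt (f := fun s => -(s ^ (k + 1))⁻¹ / (k + 1)) (fun s hs => ?_)
    hint.intervalIntegrable]
  · ring
  have hs := (hpos s hs).ne'
  refine (((hasDerivAt_pow (k + 1) s).inv (pow_ne_zero _ hs)).neg.div_const
    ((k : ℝ) + 1)).congr_deriv ?_
  simp only [Nat.add_sub_cancel]
  field_simp
  push_cast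
  ring

lemma hasDerivAt_tailAverage (hw : ContinuousOn w (Ico 0 e)) (ha : a ∈ Ioo 0 e)
    (hx : x ∈ Ioo 0 e) :
    HasDerivAt (tailAverage k a w) ((k + 1) / x * (tailAverage k a w x - w x)) x := by
  have hI := hasDerivAt_integral_left_of_continuousOn (continuousOn_div_pow hw (k + 2)) ha
    (Ioo_mem_nhds hx.1 hx.2)
  have hpow := (hasDerivAt_pow (k + 1) x).const_mul ((k : ℝ) + 1)
  have heq : tailAverage k a w =ᶠ[𝓝 x]
      fun t => (k + 1) * t ^ (k + 1) * ∫ s in t..a, w s / s ^ (k + 2) := by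
    filter_upwards [Ioi_mem_nhds hx.1] with t ht
    rw [tailAverage_of_pos ht]
  refine ((hpow.mul hI).congr_of_eventuallyEq heq).congr_deriv ?_
  rw [tailAverage_of_pos hx.1]
  have := hx.1.ne'
  field_simp
  push_cast
  ring

lemma abs_tailAverage_sub_le {c M : ℝ} (hx : 0 < x) (hxa : x ≤ a) (hw : ContinuousOn w (Icc x a))
    (hM : ∀ s ∈ Icc x a, |w s - c| ≤ M) :
    |tailAverage k a w x - c| ≤ M + |c| * (x / a) ^ (k + 1) := by
  have ha : 0 < a := hx.trans_le hxa
  have hM0 : 0 ≤ M := (abs_nonneg _).trans (hM x (left_mem_Icc.2 hxa))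
  have hint {f : ℝ → ℝ} (hf : ContinuousOn f (Icc x a)) :
      IntervalIntegrable (fun s => f s * (1 / s ^ (k + 2))) volume x a :=
    (hf.mul (continuousOn_const.div (continuousOn_pow _) fun s hs =>
      (pow_pos (hx.trans_le hs.1) _).ne')).intervalIntegrable_of_Icc hxa
  have hmass : (k + 1) * x ^ (k + 1) * ∫ s in x..a, 1 / s ^ (k + 2) = 1 - (x / a) ^ (k + 1) := by
    rw [integral_one_div_pow hx hxa, div_pow]
    field_simp
  have hsplit : tailAverage k a w x - c
      = (k + 1) * x ^ (k + 1) * (∫ s in x..a, (w s - c) * (1 / s ^ (k + 2)))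
        - c * (x / a) ^ (k + 1) := by
    simp_rw [sub_mul]
    rw [integral_sub (hint hw) (hint continuousOn_const), intervalIntegral.integral_const_mul,
      tailAverage_of_pos hx]
    simp_rw [mul_one_div]
    linear_combination c * hmass
  have hbound : |∫ s in x..a, (w s - c) * (1 / s ^ (k + 2))|
      ≤ M * ∫ s in x..a, 1 / s ^ (k + 2) := by
    rw [← intervalIntegral.integral_const_mul, ← Real.norm_eq_abs]
    refine norm_integral_le_of_norm_le hxa (Eventually.of_forall fun s hs => ?_)
      (hint continuousOn_const)
    have hs0 : 0 < s := hx.trans hs.1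
    rw [norm_mul, Real.norm_eq_abs, Real.norm_of_nonneg (by positivity)]
    exact mul_le_mul_of_nonneg_right (hM s ⟨hs.1.le, hs.2⟩) (by positivity)
  have hxa1 : 0 ≤ (x / a) ^ (k + 1) := by positivity
  calc |tailAverage k a w x - c|
      ≤ (k + 1) * x ^ (k + 1) * |∫ s in x..a, (w s - c) * (1 / s ^ (k + 2))|
        + |c| * (x / a) ^ (k + 1) := by
        rw [hsplit]
        refine (abs_sub _ _).trans ?_
        rw [abs_mul, abs_mul, abs_mul, abs_of_nonneg hxa1, abs_of_pos (pow_pos hx _),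
          abs_of_pos (by positivity : (0 : ℝ) < k + 1)]
    _ ≤ (k + 1) * x ^ (k + 1) * (M * ∫ s in x..a, 1 / s ^ (k + 2)) + |c| * (x / a) ^ (k + 1) := by
        gcongr
    _ ≤ M + |c| * (x / a) ^ (k + 1) := by
        rw [mul_left_comm, hmass]
        nlinarith

lemma tailAverage_eq_add {δ : ℝ} (hw : ContinuousOn w (Ico 0 e)) (ha : a ∈ Ioo 0 e)
    (hx : x ∈ Ioo 0 e) (hδ : δ ∈ Ioo 0 e) :
    tailAverage k a w x = tailAverage k δ w x + (x / δ) ^ (k + 1) * tailAverage k a w δ := by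
  have hint {y z : ℝ} (hy : y ∈ Ioo 0 e) (hz : z ∈ Ioo 0 e) :
      IntervalIntegrable (fun s => w s / s ^ (k + 2)) volume y z :=
    ((continuousOn_div_pow hw _).mono (ordConnected_Ioo.uIcc_subset hy hz)).intervalIntegrable
  rw [tailAverage_of_pos hx.1, tailAverage_of_pos hx.1, tailAverage_of_pos hδ.1,
    ← integral_add_adjacent_intervals (hint hx hδ) (hint hδ ha)]
  have := hδ.1.ne'
  rw [div_pow]
  field_simp

lemma tendsto_tailAverage_zero (hw : ContinuousOn w (Ico 0 e)) (ha : a ∈ Ioo 0 e) :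
    Tendsto (tailAverage k a w) (𝓝[Ico 0 e] 0) (𝓝 (w 0)) := by
  rw [Metric.tendsto_nhds]
  intro ε hε
  obtain ⟨δ₀, hδ₀, hwδ⟩ := Metric.continuousWithinAt_iff.1 (hw 0 ⟨le_rfl, ha.1.trans ha.2⟩)
    (ε / 2) (half_pos hε)
  set δ := min (δ₀ / 2) a
  have hδ : δ ∈ Ioo 0 e := ⟨lt_min (half_pos hδ₀) ha.1, (min_le_right _ _).trans_lt ha.2⟩
  have hδδ₀ : δ < δ₀ := (min_le_left _ _).trans_lt (half_lt_self hδ₀)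
  -- Split `[x, a]` at `δ`: the average over `[x, δ]` is close to `w 0`, and the rest is damped
  -- by the factor `(x / δ) ^ (k + 1)`.
  set K := |w 0| + |tailAverage k a w δ|
  have hsmall : ∀ᶠ x in 𝓝 (0 : ℝ), (x / δ) ^ (k + 1) * K < ε / 2 := by
    have : Tendsto (fun x : ℝ => (x / δ) ^ (k + 1) * K) (𝓝 0) (𝓝 0) := by
      simpa using ((continuous_id.div_const δ).pow (k + 1)).mul_const K |>.tendsto 0
    exact this.eventually (gt_mem_nhds (half_pos hε))
  filter_upwards [self_mem_nhdsWithin, nhdsWithin_le_nhds hsmall,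
    nhdsWithin_le_nhds (Iio_mem_nhds hδ.1)] with x hx hxK hxδ
  rcases hx.1.eq_or_lt with rfl | hx0
  · simpa using hε
  have hxe : x ∈ Ioo 0 e := ⟨hx0, hx.2⟩
  have hnear := abs_tailAverage_sub_le (k := k) (c := w 0) (M := ε / 2) hx0 hxδ.le
    (hw.mono fun s hs => ⟨hx0.le.trans hs.1, hs.2.trans_lt hδ.2⟩) fun s hs => by
      rw [← Real.dist_eq]
      refine (hwδ ⟨hx0.le.trans hs.1, hs.2.trans_lt hδ.2⟩ ?_).le
      rw [Real.dist_0_eq_abs, abs_of_pos (hx0.trans_le hs.1)]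
      exact hs.2.trans_lt hδδ₀
  have hxδ1 : 0 ≤ (x / δ) ^ (k + 1) := pow_nonneg (div_nonneg hx0.le hδ.1.le) _
  rw [Real.dist_eq, tailAverage_eq_add hw ha hxe hδ]
  calc |tailAverage k δ w x + (x / δ) ^ (k + 1) * tailAverage k a w δ - w 0|
      ≤ |tailAverage k δ w x - w 0| + (x / δ) ^ (k + 1) * |tailAverage k a w δ| := by
        rw [add_sub_right_comm]
        refine (abs_add_le _ _).trans_eq ?_
        rw [abs_mul, abs_of_nonneg hxδ1]
    _ ≤ ε / 2 + (x / δ) ^ (k + 1) * K := by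
        rw [mul_add]
        linarith
    _ < ε := by linarith

lemma continuousOn_tailAverage (hw : ContinuousOn w (Ico 0 e)) (ha : a ∈ Ioo 0 e) :
    ContinuousOn (tailAverage k a w) (Ico 0 e) := by
  intro x hx
  rcases hx.1.eq_or_lt with rfl | hx0
  · simpa [ContinuousWithinAt] using tendsto_tailAverage_zero hw ha
  · exact (hasDerivAt_tailAverage hw ha ⟨hx0, hx.2⟩).continuousAt.continuousWithinAt

lemma tailAverage_succ_eq {w' : ℝ → ℝ} (hw : ContinuousOn w (Ico 0 e))
    (hw' : ContinuousOn w' (Ico 0 e)) (hd : ∀ s ∈ Ioo 0 e, HasDerivAt w (w' s) s)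
    (ha : a ∈ Ioo 0 e) (hx : x ∈ Ico 0 e) :
    tailAverage (k + 1) a w x
      = w x - w a * (x / a) ^ (k + 2) + x * tailAverage k a w' x / (k + 1) := by
  rcases hx.1.eq_or_lt with rfl | hx0
  · simp
  have hsub : uIcc x a ⊆ Ioo 0 e := ordConnected_Ioo.uIcc_subset ⟨hx0, hx.2⟩ ha
  have hV (s : ℝ) (hs : s ∈ Ioo 0 e) : HasDerivAt (fun s : ℝ => -(s ^ (k + 2))⁻¹ / ((k : ℝ) + 2))
      (s ^ (k + 3))⁻¹ s := by
    have := hs.1.ne'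
    refine (((hasDerivAt_pow (k + 2) s).inv (pow_ne_zero _ this)).neg.div_const
      ((k : ℝ) + 2)).congr_deriv ?_
    field_simp
    push_cast
    ring
  have hparts := integral_mul_deriv_eq_deriv_mul_of_hasDerivAt (u := w) (u' := w')
    (v := fun s : ℝ => -(s ^ (k + 2))⁻¹ / ((k : ℝ) + 2)) (v' := fun s => (s ^ (k + 3))⁻¹)
    (hw.mono (hsub.trans Ioo_subset_Ico_self))
    (fun s hs => (hV s (hsub hs)).continuousAt.continuousWithinAt)
    (fun s hs => hd s (hsub (Ioo_subset_Icc_self hs)))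
    (fun s hs => hV s (hsub (Ioo_subset_Icc_self hs)))
    ((hw'.mono (hsub.trans Ioo_subset_Ico_self)).intervalIntegrable)
    (((continuousOn_pow _).inv₀ fun s hs => pow_ne_zero _ (hsub hs).1.ne').intervalIntegrable)
  have hw'V : ∫ s in x..a, w' s * (-(s ^ (k + 2))⁻¹ / (k + 2))
      = -(∫ s in x..a, w' s / s ^ (k + 2)) / (k + 2) := by
    rw [← intervalIntegral.integral_neg, ← intervalIntegral.integral_div]
    congr 1
    ext s
    ring
  simp_rw [← div_eq_mul_inv] at hparts
  rw [tailAverage_of_pos hx0, tailAverage_of_pos hx0, hparts, hw'V]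
  have := hx0.ne'
  have := ha.1.ne'
  rw [div_pow]
  field_simp
  push_cast
  ring

theorem contDiffOn_tailAverage {m : ℕ} (hmk : m ≤ k) (ha : a ∈ Ioo 0 e)
    (hw : ContDiffOn ℝ m w (Ico 0 e)) : ContDiffOn ℝ m (tailAverage k a w) (Ico 0 e) := by
  induction m generalizing k w with
  | zero =>
    simpa [contDiffOn_zero] using continuousOn_tailAverage hw.continuousOn ha
  | succ m ih =>
    obtain ⟨j, rfl⟩ : ∃ j, k = j + 1 := ⟨k - 1, by omega⟩
    set w' := derivWithin w (Ico 0 e)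
    have hw' : ContDiffOn ℝ m w' (Ico 0 e) :=
      hw.derivWithin (uniqueDiffOn_Ico 0 e) (by push_cast; exact le_rfl)
    have hwd (x) (hx : x ∈ Ioo 0 e) : HasDerivAt w (w' x) x :=
      hw.hasDerivAt_derivWithin_Ico (by simp) hx
    set G := tailAverage j a w'
    have hG : ContDiffOn ℝ m G (Ico 0 e) := ih (by omega) hw'
    have hW : ContDiffOn ℝ (m + 1) (fun t => t * G t) (Ico 0 e) := by
      refine contDiffOn_succ_Ico_of_hasDerivAt_Ioo (φ := fun t => (j + 2) * G t - (j + 1) * w' t)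
        ((contDiffOn_const.mul hG).sub (contDiffOn_const.mul hw'))
        (continuousOn_id.mul hG.continuousOn) fun x hx => ?_
      refine ((hasDerivAt_id x).mul (hasDerivAt_tailAverage hw'.continuousOn ha hx)).congr_deriv ?_
      have := hx.1.ne'
      simp only [id, G]
      field_simp
      ring
    have hP : ContDiffOn ℝ (m + 1) (fun x => w x - w a * (x / a) ^ (j + 2)) (Ico 0 e) :=
      hw.sub (contDiffOn_const.mul ((contDiffOn_id.div_const a).pow _))
    push_cast
    refine (hP.add (hW.div_const ((j : ℝ) + 1))).congr fun x hx => ?_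
    exact tailAverage_succ_eq hw.continuousOn hw'.continuousOn hwd ha hx

lemma tailAverage_pos (hw : ContinuousOn w (Ico 0 e)) (hpos : ∀ x ∈ Ico 0 e, 0 < w x)
    (ha : a ∈ Ioo 0 e) (hx : x ∈ Ico 0 a) : 0 < tailAverage k a w x := by
  rcases hx.1.eq_or_lt with rfl | hx0
  · simpa using hpos 0 ⟨le_rfl, ha.1.trans ha.2⟩
  rw [tailAverage_of_pos hx0]
  have hI : 0 < ∫ s in x..a, w s / s ^ (k + 2) := by
    refine intervalIntegral_pos_of_pos_on ?_ (fun s hs => ?_) hx.2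
    · exact ((continuousOn_div_pow hw _).mono
        (ordConnected_Ioo.uIcc_subset ⟨hx0, hx.2.trans ha.2⟩ ha)).intervalIntegrable
    · exact div_pos (hpos s ⟨(hx0.trans hs.1).le, hs.2.trans ha.2⟩) (pow_pos (hx0.trans hs.1) _)
  positivity

end TailAverage

section Division

variable {e : ℝ} {f : ℝ → ℝ}

lemma eq_of_continuousWithinAt_of_tendsto {c : ℝ} (he : 0 < e)
    (hf : ContinuousWithinAt f (Ico 0 e) 0) (hlim : Tendsto f (𝓝[>] 0) (𝓝 c)) : f 0 = c :=
  tendsto_nhds_unique (hf.tendsto.mono_left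
    (nhdsWithin_Ioo_eq_nhdsGT he ▸ nhdsWithin_mono _ Ioo_subset_Ico_self)) hlim

lemma exists_contDiffOn_eq_div {n : ℕ} (hf : ContDiffOn ℝ (n + 1 : ℕ) f (Ico 0 e)) (hf0 : f 0 = 0) :
    ∃ g, ContDiffOn ℝ n g (Ico 0 e) ∧ ∀ x ∈ Ioo 0 e, g x = f x / x := by
  set f' := derivWithin f (Ico 0 e)
  have hf' : ContDiffOn ℝ n f' (Ico 0 e) :=
    hf.derivWithin (uniqueDiffOn_Ico 0 e) (by push_cast; exact le_rfl)
  refine ⟨weightedAverage 0 f', contDiffOn_weightedAverage hf', fun x hx => ?_⟩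
  have hFTC : ∫ s in 0..x, f' s = f x - f 0 :=
    integral_eq_sub_of_hasDerivAt_of_le hx.1.le (hf.continuousOn.mono (Icc_subset_Ico_right hx.2))
      (fun s hs => hf.hasDerivAt_derivWithin_Ico (by simp) ⟨hs.1, hs.2.trans hx.2⟩)
      ((hf'.continuousOn.mono (Icc_subset_Ico_right hx.2)).intervalIntegrable_of_Icc hx.1.le)
  rw [weightedAverage_of_pos hx.1]
  simp [hFTC, hf0, div_eq_inv_mul]

lemma exists_contDiffOn_eq_div_pow (he : 0 < e) (N : ℕ) {n : ℕ}
    (hf : ContDiffOn ℝ (n + N : ℕ) f (Ico 0 e))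
    (hlim : ∀ j < N, Tendsto (fun x => f x / x ^ j) (𝓝[>] 0) (𝓝 0)) :
    ∃ g, ContDiffOn ℝ n g (Ico 0 e) ∧ ∀ x ∈ Ioo 0 e, g x = f x / x ^ N := by
  induction N generalizing n with
  | zero => exact ⟨f, by simpa using hf, fun x _ => by simp⟩
  | succ N ih =>
    obtain ⟨g, hg, hgf⟩ := ih (n := n + 1) (by rwa [add_right_comm]) fun j hj => hlim j (by omega)
    have hg0 : g 0 = 0 := by
      refine eq_of_continuousWithinAt_of_tendsto he (hg.continuousOn 0 ⟨le_rfl, he⟩)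
        ((hlim N N.lt_succ_self).congr' ?_)
      filter_upwards [Ioo_mem_nhdsGT he] with x hx
      exact (hgf x hx).symm
    obtain ⟨g', hg', hg'g⟩ := exists_contDiffOn_eq_div hg hg0
    exact ⟨g', hg', fun x hx => by rw [hg'g x hx, hgf x hx, div_div, pow_succ]⟩

lemma exists_pos_contDiffOn_eq_pow_mul {n ℓ : ℕ} {α : ℝ} (hα : 0 < α) (he : 0 < e)
    (hf : ContDiffOn ℝ (n + (ℓ + 1) : ℕ) f (Ico 0 e))
    (hfα : (fun x => f x - α * x ^ (ℓ + 1)) =o[𝓝[>] 0] fun x => x ^ (ℓ + 1)) :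
    ∃ e' ∈ Ioc 0 e, ∃ g, ContDiffOn ℝ n g (Ico 0 e') ∧ (∀ x ∈ Ico 0 e', 0 < g x) ∧
      ∀ x ∈ Ico 0 e', f x = x ^ (ℓ + 1) * g x := by
  have hquot : Tendsto (fun x => f x / x ^ (ℓ + 1)) (𝓝[>] 0) (𝓝 α) := by
    refine (hfα.tendsto_div_nhds_zero.add_const α).congr' ?_ |>.trans (by rw [zero_add])
    filter_upwards [self_mem_nhdsWithin] with x hx
    have : x ^ (ℓ + 1) ≠ 0 := pow_ne_zero _ (ne_of_gt hx)
    field_simp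
    ring
  have hlim (j) (hj : j < ℓ + 1) : Tendsto (fun x => f x / x ^ j) (𝓝[>] 0) (𝓝 0) := by
    have hpow : Tendsto (fun x : ℝ => x ^ (ℓ + 1 - j)) (𝓝[>] 0) (𝓝 0) := by
      simpa [zero_pow (Nat.sub_ne_zero_of_lt hj)] using
        ((continuous_pow (M := ℝ) (ℓ + 1 - j)).tendsto 0).mono_left nhdsWithin_le_nhds
    have hprod : Tendsto (fun x => f x / x ^ (ℓ + 1) * x ^ (ℓ + 1 - j)) (𝓝[>] 0) (𝓝 0) := by
      simpa using hquot.mul hpow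
    refine hprod.congr' ?_
    filter_upwards [self_mem_nhdsWithin] with x hx
    have hx0 : x ≠ 0 := ne_of_gt hx
    rw [div_mul_eq_mul_div, div_eq_div_iff (by positivity) (by positivity), mul_assoc, ← pow_add,
      Nat.sub_add_cancel hj.le]
  obtain ⟨g, hg, hgf⟩ := exists_contDiffOn_eq_div_pow he (ℓ + 1) hf hlim
  have hg0 : g 0 = α := by
    refine eq_of_continuousWithinAt_of_tendsto he (hg.continuousOn 0 ⟨le_rfl, he⟩)
      (hquot.congr' ?_)
    filter_upwards [Ioo_mem_nhdsGT he] with x hx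
    exact (hgf x hx).symm
  have hf0 : f 0 = 0 :=
    eq_of_continuousWithinAt_of_tendsto he (hf.continuousOn 0 ⟨le_rfl, he⟩)
      (by simpa using hlim 0 (by omega))
  obtain ⟨e', he', hgpos⟩ := exists_forall_Ico_of_eventually he
    ((hg.continuousOn 0 ⟨le_rfl, he⟩).eventually_const_lt (hg0.symm ▸ hα))
  refine ⟨e', he', g, hg.mono (Ico_subset_Ico_right he'.2), hgpos, fun x hx => ?_⟩
  rcases hx.1.eq_or_lt with rfl | hx0
  · simp [hf0]
  rw [hgf x ⟨hx0, hx.2.trans_le he'.2⟩]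
  field_simp

end Division

section Conjugacy

-- Only the interior derivative is required; the one-sided one at `0` follows, see
-- `ConjugatesOn.hasDerivWithinAt`.
structure ConjugatesOn (m : ℕ) (a : ℝ) (X Y u du : ℝ → ℝ) : Prop where
  continuousOn : ContinuousOn u (Ico 0 a)
  map_zero : u 0 = 0
  hasDerivAt : ∀ x ∈ Ioo 0 a, HasDerivAt u (du x) x
  contDiffOn_deriv : ContDiffOn ℝ m du (Ico 0 a)
  deriv_pos : ∀ x ∈ Ico 0 a, 0 < du x
  conj : ∀ x ∈ Ico 0 a, du x * X x = Y (u x)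

namespace ConjugatesOn

variable {m : ℕ} {a : ℝ} {X Y u du : ℝ → ℝ}

lemma hasDerivWithinAt (hu : ConjugatesOn m a X Y u du) :
    ∀ x ∈ Ico 0 a, HasDerivWithinAt u (du x) (Ico 0 a) x :=
  hasDerivWithinAt_Ico_of_hasDerivAt_Ioo hu.continuousOn hu.contDiffOn_deriv.continuousOn
    hu.hasDerivAt

lemma derivWithin_eq (hu : ConjugatesOn m a X Y u du) {x : ℝ} (hx : x ∈ Ico 0 a) :
    derivWithin u (Ico 0 a) x = du x :=
  (hu.hasDerivWithinAt x hx).derivWithin (uniqueDiffOn_Ico 0 a x hx)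

lemma contDiffOn (hu : ConjugatesOn m a X Y u du) : ContDiffOn ℝ (m + 1 : ℕ) u (Ico 0 a) := by
  exact_mod_cast contDiffOn_succ_Ico_of_hasDerivAt_Ioo hu.contDiffOn_deriv hu.continuousOn
    hu.hasDerivAt

lemma strictMonoOn (hu : ConjugatesOn m a X Y u du) : StrictMonoOn u (Ico 0 a) := by
  refine strictMonoOn_of_deriv_pos (convex_Ico 0 a) hu.continuousOn fun x hx => ?_
  rw [interior_Ico] at hx
  rw [(hu.hasDerivAt x hx).deriv]
  exact hu.deriv_pos x (Ioo_subset_Ico_self hx)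

lemma pos (hu : ConjugatesOn m a X Y u du) {x : ℝ} (hx : x ∈ Ioo 0 a) : 0 < u x :=
  hu.map_zero ▸ hu.strictMonoOn ⟨le_rfl, hx.1.trans hx.2⟩ (Ioo_subset_Ico_self hx) hx.1

lemma nonneg (hu : ConjugatesOn m a X Y u du) {x : ℝ} (hx : x ∈ Ico 0 a) : 0 ≤ u x := by
  rcases hx.1.eq_or_lt with rfl | hx0
  · exact hu.map_zero.ge
  · exact (hu.pos ⟨hx0, hx.2⟩).le

end ConjugatesOn

theorem exists_conjugatesOn_pow {m ℓ : ℕ} (hmℓ : m < ℓ) {e : ℝ} (he : 0 < e) {X g : ℝ → ℝ}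
    (hg : ContDiffOn ℝ m g (Ico 0 e)) (hgpos : ∀ x ∈ Ico 0 e, 0 < g x)
    (hXg : ∀ x ∈ Ico 0 e, X x = x ^ (ℓ + 1) * g x) :
    ∃ a ∈ Ioc 0 e, ∃ u du, ConjugatesOn m a X (· ^ (ℓ + 1)) u du := by
  obtain ⟨k, rfl⟩ : ∃ k, ℓ = k + 1 := ⟨ℓ - 1, by omega⟩
  set q := fun x => (g x)⁻¹
  have hq : ContDiffOn ℝ m q (Ico 0 e) := hg.inv fun x hx => (hgpos x hx).ne'
  have hqpos (x) (hx : x ∈ Ico 0 e) : 0 < q x := inv_pos.2 (hgpos x hx)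
  set a := e / 2
  have ha : a ∈ Ioo 0 e := ⟨half_pos he, half_lt_self he⟩
  have hsub : Ico 0 a ⊆ Ico 0 e := Ico_subset_Ico_right ha.2.le
  set A := tailAverage k a q
  have hA : ContDiffOn ℝ m A (Ico 0 a) := (contDiffOn_tailAverage (by omega) ha hq).mono hsub
  have hApos (x) (hx : x ∈ Ico 0 a) : 0 < A x := tailAverage_pos hq.continuousOn hqpos ha hx
  -- `u ^ (-(k + 1)) = (k + 1) * ∫ₓᵃ 1 / X`; differentiating gives `u' * X = u ^ (k + 2)`.
  set c : ℝ := -1 / (k + 1)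
  have hc : c * (k + 2) = c - 1 := by
    simp only [c]
    field_simp
    ring
  refine ⟨a, ⟨ha.1, ha.2.le⟩, fun x => x * A x ^ c, fun x => q x * A x ^ (c - 1), ?_⟩
  refine ⟨continuousOn_id.mul (hA.continuousOn.rpow_const fun x hx => Or.inl (hApos x hx).ne'),
    by simp, fun x hx => ?_, (hq.mono hsub).mul (hA.rpow_const_of_ne fun x hx => (hApos x hx).ne'),
    fun x hx => mul_pos (hqpos x (hsub hx)) (Real.rpow_pos_of_pos (hApos x hx) _),
    fun x hx => ?_⟩
  · have hAx := hApos x (Ioo_subset_Ico_self hx)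
    refine ((hasDerivAt_id x).mul ((hasDerivAt_tailAverage hq.continuousOn ha
      ⟨hx.1, hx.2.trans ha.2⟩).rpow_const (p := c) (Or.inl hAx.ne'))).congr_deriv ?_
    have hx0 := hx.1.ne'
    rw [id, Real.rpow_sub_one hAx.ne']
    simp only [A, c] at hAx ⊢
    field_simp
    ring
  · have hAc : (A x ^ c) ^ (k + 2) = A x ^ (c - 1) := by
      rw [← Real.rpow_natCast, ← Real.rpow_mul (hApos x hx).le]
      push_cast
      rw [hc]
    rw [hXg x (hsub hx), mul_pow, hAc]
    have := (hgpos x (hsub hx)).ne'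
    simp only [q]
    field_simp

lemma _root_.StrictMonoOn.exists_inverse_Icc {v : ℝ → ℝ} {a b : ℝ} (hab : a < b)
    (hv : ContinuousOn v (Icc a b)) (hmono : StrictMonoOn v (Icc a b)) :
    ∃ ψ : ℝ → ℝ, (∀ y ∈ Icc (v a) (v b), ψ y ∈ Icc a b ∧ v (ψ y) = y) ∧ ψ (v a) = a ∧
      ContinuousWithinAt ψ (Ici (v a)) (v a) ∧ ∀ y ∈ Ioo (v a) (v b), ContinuousAt ψ y := by
  have hsurj : SurjOn v (Icc a b) (Icc (v a) (v b)) := intermediate_value_Icc hab.le hv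
  set ψ := Function.invFunOn v (Icc a b)
  have hψ (y) (hy : y ∈ Icc (v a) (v b)) : ψ y ∈ Icc a b ∧ v (ψ y) = y :=
    ⟨hsurj.mapsTo_invFunOn hy, hsurj.rightInvOn_invFunOn hy⟩
  have hψv (x) (hx : x ∈ Icc a b) : ψ (v x) = x := hmono.injOn.leftInvOn_invFunOn hx
  have hvab : v a < v b := hmono (left_mem_Icc.2 hab.le) (right_mem_Icc.2 hab.le) hab
  have hψmono : StrictMonoOn ψ (Icc (v a) (v b)) := by
    intro y₁ hy₁ y₂ hy₂ hy
    by_contra! hle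
    have := hmono.monotoneOn (hψ y₂ hy₂).1 (hψ y₁ hy₁).1 hle
    rw [(hψ y₁ hy₁).2, (hψ y₂ hy₂).2] at this
    exact hy.not_ge this
  have himage : ψ '' Icc (v a) (v b) = Icc a b := by
    refine (hsurj.mapsTo_invFunOn.image_subset).antisymm fun x hx => ⟨v x, ?_, hψv x hx⟩
    exact ⟨hmono.monotoneOn (left_mem_Icc.2 hab.le) hx hx.1,
      hmono.monotoneOn hx (right_mem_Icc.2 hab.le) hx.2⟩
  have hψa : ψ (v a) = a := hψv a (left_mem_Icc.2 hab.le)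
  refine ⟨ψ, hψ, hψa, ?_, fun y hy => ?_⟩
  · refine hψmono.continuousWithinAt_right_of_image_mem_nhdsWithin (Icc_mem_nhdsGE hvab) ?_
    rw [himage, hψa]
    exact Icc_mem_nhdsGE hab
  · refine hψmono.continuousAt_of_image_mem_nhds (Icc_mem_nhds hy.1 hy.2) ?_
    obtain ⟨hψy, hvψ⟩ := hψ y (Ioo_subset_Icc_self hy)
    rw [himage]
    refine Icc_mem_nhds (hψy.1.lt_of_ne ?_) (hψy.2.lt_of_ne ?_) <;> rintro h
    · exact hy.1.ne (by rw [h, hvψ])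
    · exact hy.2.ne (by rw [← h, hvψ])

lemma ConjugatesOn.exists_inverse {m : ℕ} {b : ℝ} {Y Z v dv : ℝ → ℝ}
    (hv : ConjugatesOn m b Y Z v dv) (hb : 0 < b) :
    ∃ c > 0, ∃ ψ : ℝ → ℝ, (∀ y ∈ Icc 0 c, ψ y ∈ Ico 0 b ∧ v (ψ y) = y) ∧ ψ 0 = 0 ∧
      ContinuousWithinAt ψ (Ici 0) 0 ∧ ∀ y ∈ Ioo 0 c, HasDerivAt ψ (dv (ψ y))⁻¹ y := by
  have hb' : b / 2 ∈ Ioo 0 b := ⟨half_pos hb, half_lt_self hb⟩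
  have hsub : Icc 0 (b / 2) ⊆ Ico 0 b := Icc_subset_Ico_right hb'.2
  obtain ⟨ψ, hψ, hψ0, hψcont0, hψcont⟩ := (hv.strictMonoOn.mono hsub).exists_inverse_Icc hb'.1
    (hv.continuousOn.mono hsub)
  rw [hv.map_zero] at hψ hψ0 hψcont0 hψcont
  refine ⟨v (b / 2), hv.pos hb', ψ, fun y hy => ⟨hsub (hψ y hy).1, (hψ y hy).2⟩, hψ0, hψcont0,
    fun y hy => ?_⟩
  obtain ⟨hψy, hvψy⟩ := hψ y (Ioo_subset_Icc_self hy)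
  have hψy' : ψ y ∈ Ioo 0 b := by
    refine ⟨hψy.1.lt_of_ne fun h0 => ?_, (hsub hψy).2⟩
    rw [← h0, hv.map_zero] at hvψy
    exact hy.1.ne hvψy
  exact (hv.hasDerivAt _ hψy').of_local_left_inverse (hψcont y hy)
    (hv.deriv_pos _ (Ioo_subset_Ico_self hψy')).ne'
    (Filter.mem_of_superset (Icc_mem_nhds hy.1 hy.2) fun z hz => (hψ z hz).2)

theorem ConjugatesOn.exists_trans_symm {m : ℕ} {a b : ℝ} {X Y Z u du v dv : ℝ → ℝ}
    (hu : ConjugatesOn m a X Z u du) (hv : ConjugatesOn m b Y Z v dv) (ha : 0 < a) (hb : 0 < b) :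
    ∃ δ > 0, ∃ h dh, ConjugatesOn m δ X Y h dh := by
  obtain ⟨c, hc, ψ, hψ, hψ0, hψcont0, hψd⟩ := hv.exists_inverse hb
  obtain ⟨δ, hδ, huc⟩ := exists_forall_Ico_of_eventually ha
    ((hu.continuousOn 0 ⟨le_rfl, ha⟩).eventually_lt_const (hu.map_zero ▸ hc))
  have hsubX : Ico 0 δ ⊆ Ico 0 a := Ico_subset_Ico_right hδ.2
  set h := fun x => ψ (u x)
  have hu_mem (x) (hx : x ∈ Ico 0 δ) : u x ∈ Icc 0 c := ⟨hu.nonneg (hsubX hx), (huc x hx).le⟩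
  have hvh (x) (hx : x ∈ Ico 0 δ) : v (h x) = u x := (hψ _ (hu_mem x hx)).2
  have hhY : MapsTo h (Ico 0 δ) (Ico 0 b) := fun x hx => (hψ _ (hu_mem x hx)).1
  have hderiv (x) (hx : x ∈ Ioo 0 δ) : HasDerivAt h (du x / dv (h x)) x := by
    have hx' : x ∈ Ioo 0 a := ⟨hx.1, (hsubX (Ioo_subset_Ico_self hx)).2⟩
    exact ((hψd _ ⟨hu.pos hx', huc x (Ioo_subset_Ico_self hx)⟩).comp x
      (hu.hasDerivAt x hx')).congr_deriv (inv_mul_eq_div _ _)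
  have hcont : ContinuousOn h (Ico 0 δ) := by
    intro x hx
    rcases hx.1.eq_or_lt with rfl | hx0
    · exact ContinuousWithinAt.comp (by rwa [hu.map_zero])
        ((hu.continuousOn 0 (hsubX hx)).mono hsubX) fun y hy => hu.nonneg (hsubX hy)
    · exact (hderiv x ⟨hx0, hx.2⟩).continuousAt.continuousWithinAt
  have hdv0 (y) (hy : y ∈ Ico 0 b) : dv y ≠ 0 := (hv.deriv_pos y hy).ne'
  have hsmooth := contDiffOn_succ_of_hasDerivAt_div_comp (hu.contDiffOn_deriv.mono hsubX)
    hv.contDiffOn_deriv hdv0 hhY hcont hderiv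
  refine ⟨δ, hδ.1, h, fun x => du x / dv (h x), hcont, by simp [h, hu.map_zero, hψ0], hderiv,
    (hu.contDiffOn_deriv.mono hsubX).div
      (hv.contDiffOn_deriv.comp (hsmooth.of_le (by simp)) hhY) fun x hx => hdv0 _ (hhY hx),
    fun x hx => div_pos (hu.deriv_pos x (hsubX hx)) (hv.deriv_pos _ (hhY hx)), fun x hx => ?_⟩
  have := hv.conj _ (hhY hx)
  rw [hvh x hx, ← hu.conj x (hsubX hx)] at this
  have := hdv0 _ (hhY hx)
  field_simp
  linarith

end Conjugacy

end FlatVectorField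

open FlatVectorField

theorem stmt_15_general (ℓ r : ℕ) (hr1 : 1 ≤ r) (hrℓ : r ≤ ℓ)
    (εX εY : ℝ) (hεX : 0 < εX) (hεY : 0 < εY) (X Y : ℝ → ℝ) (α β : ℝ)
    (hα : 0 < α) (hβ : 0 < β)
    (hX : ContDiffOn ℝ (ℓ + r : ℕ) X (Set.Ico 0 εX))
    (hY : ContDiffOn ℝ (ℓ + r : ℕ) Y (Set.Ico 0 εY))
    (hXa : Asymptotics.IsLittleO (nhdsWithin 0 (Set.Ioi 0))
      (fun x : ℝ => X x - α * x ^ (ℓ + 1)) (fun x : ℝ => x ^ (ℓ + 1)))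
    (hYa : Asymptotics.IsLittleO (nhdsWithin 0 (Set.Ioi 0))
      (fun x : ℝ => Y x - β * x ^ (ℓ + 1)) (fun x : ℝ => x ^ (ℓ + 1))) :
    ∃ (δ : ℝ), 0 < δ ∧ ∃ h : ℝ → ℝ,
      ContDiffOn ℝ (r : ℕ) h (Set.Ico 0 δ) ∧ h 0 = 0 ∧
      0 < derivWithin h (Set.Ico 0 δ) 0 ∧
      ∀ x ∈ Set.Ico (0 : ℝ) δ, derivWithin h (Set.Ico 0 δ) x * X x = Y (h x) := by
  obtain ⟨m, rfl⟩ : ∃ m, r = m + 1 := ⟨r - 1, by omega⟩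
  rw [show ℓ + (m + 1) = m + (ℓ + 1) by ring] at hX hY
  obtain ⟨eX, heX, gX, hgX, hgXpos, hXg⟩ := exists_pos_contDiffOn_eq_pow_mul hα hεX hX hXa
  obtain ⟨eY, heY, gY, hgY, hgYpos, hYg⟩ := exists_pos_contDiffOn_eq_pow_mul hβ hεY hY hYa
  obtain ⟨aX, haX, u, du, hu⟩ := exists_conjugatesOn_pow (by omega) heX.1 hgX hgXpos hXg
  obtain ⟨aY, haY, v, dv, hv⟩ := exists_conjugatesOn_pow (by omega) heY.1 hgY hgYpos hYg
  obtain ⟨δ, hδ, h, dh, hh⟩ := hu.exists_trans_symm hv haX.1 haY.1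
  have h0 : (0 : ℝ) ∈ Ico 0 δ := ⟨le_rfl, hδ⟩
  refine ⟨δ, hδ, h, hh.contDiffOn, hh.map_zero, ?_, fun x hx => ?_⟩
  · exact hh.derivWithin_eq h0 ▸ hh.deriv_pos 0 h0
  · rw [hh.derivWithin_eq hx]
    exact hh.conj x hx

/-- Existence of `C^r` conjugacy between exactly `ℓ`-flat expanding vector fields of class
`C^{ℓ+r}`, for `1 ≤ r ≤ ℓ`. -/
theorem stmt_15 (ℓ r : ℕ) (hℓ : 1 ≤ ℓ) (hr1 : 1 ≤ r) (hrℓ : r ≤ ℓ)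
    (εX εY : ℝ) (hεX : 0 < εX) (hεY : 0 < εY) (X Y : ℝ → ℝ) (α β : ℝ)
    (hα : 0 < α) (hβ : 0 < β)
    (hX : ContDiffOn ℝ (ℓ + r : ℕ) X (Set.Ico 0 εX))
    (hY : ContDiffOn ℝ (ℓ + r : ℕ) Y (Set.Ico 0 εY))
    (hXa : Asymptotics.IsLittleO (nhdsWithin 0 (Set.Ioi 0))
      (fun x : ℝ => X x - α * x ^ (ℓ + 1)) (fun x : ℝ => x ^ (ℓ + 1)))
    (hYa : Asymptotics.IsLittleO (nhdsWithin 0 (Set.Ioi 0))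
      (fun x : ℝ => Y x - β * x ^ (ℓ + 1)) (fun x : ℝ => x ^ (ℓ + 1))) :
    ∃ (δ : ℝ), 0 < δ ∧ ∃ h : ℝ → ℝ,
      ContDiffOn ℝ (r : ℕ) h (Set.Ico 0 δ) ∧ h 0 = 0 ∧
      0 < derivWithin h (Set.Ico 0 δ) 0 ∧
      ∀ x ∈ Set.Ico (0 : ℝ) δ, derivWithin h (Set.Ico 0 δ) x * X x = Y (h x) :=
  stmt_15_general ℓ r hr1 hrℓ εX εY hεX hεY X Y α β hα hβ hX hY hXa hYa
end
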